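/- arXiv:1802.05967 — 7 statements merged into one kernel-verified Lean document; each statement's English description precedes it below -/
import Mathlib

section
/- The set A = {(x,y) ∈ ℝ² : m ≤ x ≤ 1, k₂ ≤ y ≤ L} is invariant for the system (S): if a solution (x,y) of (S) on [0,∞) satisfies m ≤ x(0) ≤ 1 and k₂ ≤ y(0) ≤ L, then for every t ≥ 0 one has m ≤ x(t) ≤ 1 and k₂ ≤ y(t) ≤ L. -/
open Filter Topology Set

lemma tendsto_slope_posPart {g : ℝ → ℝ} {g' t : ℝ} (hg : HasDerivAt g g' t) :
    Tendsto (fun z => (z - t)⁻¹ * (max 0 (g z) - max 0 (g t))) (𝓝[>] t)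
      (𝓝 (if g t < 0 then 0 else if 0 < g t then g' else max 0 g')) := by
  have hslope : Tendsto (fun z => (z - t)⁻¹ * (g z - g t)) (𝓝[>] t) (𝓝 g') := by
    have h := hasDerivAt_iff_tendsto_slope.mp hg
    have h2 : Tendsto (slope g t) (𝓝[>] t) (𝓝 g') :=
      h.mono_left (nhdsWithin_mono t fun z hz => ne_of_gt hz)
    refine h2.congr fun z => ?_
    rw [slope_def_field]
    ring
  have hcont : Tendsto g (𝓝[>] t) (𝓝 (g t)) :=
    hg.continuousAt.continuousWithinAt.tendsto
  rcases lt_trichotomy (g t) 0 with h | h | h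
  · rw [if_pos h]
    have hev : ∀ᶠ z in 𝓝[>] t, g z < 0 := hcont.eventually_lt_const h
    refine tendsto_const_nhds.congr' ?_
    filter_upwards [hev] with z hz
    rw [max_eq_left hz.le, max_eq_left h.le]
    ring
  · rw [if_neg (by rw [h]; exact lt_irrefl 0), if_neg (by rw [h]; exact lt_irrefl 0)]
    have hT := Tendsto.max (tendsto_const_nhds : Tendsto (fun _ : ℝ => (0:ℝ)) (𝓝[>] t) (𝓝 0)) hslope
    refine hT.congr' ?_
    filter_upwards [self_mem_nhdsWithin] with z (hz : t < z)
    have hzt : (0:ℝ) ≤ (z - t)⁻¹ := inv_nonneg.mpr (by linarith)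
    simp only [h, max_self, sub_zero]
    rw [mul_max_of_nonneg _ _ hzt, mul_zero]
  · rw [if_neg (not_lt.mpr h.le), if_pos h]
    have hev : ∀ᶠ z in 𝓝[>] t, 0 < g z := hcont.eventually_const_lt h
    refine hslope.congr' ?_
    filter_upwards [hev] with z hz
    rw [max_eq_right hz.le, max_eq_right h.le]

lemma dini_le {gv g' C : ℝ} (hC : 0 ≤ C) (h : 0 ≤ gv → g' ≤ C) :
    (if gv < 0 then 0 else if 0 < gv then g' else max 0 g') ≤ C := by
  split_ifs with h1 h2
  · exact hC
  · exact h h2.le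
  · exact max_le hC (h (not_lt.mp h1))

/-- First right-hand side of the prey–predator system (S):
`x' = x(1−x) − a·y·(x−m)₊/(k₁+(x−m)₊)`. -/
noncomputable def preyRHS (a k1 m x y : ℝ) : ℝ :=
  x * (1 - x) - a * y * max 0 (x - m) / (k1 + max 0 (x - m))

/-- Second right-hand side of the prey–predator system (S):
`y' = b·y·(1 − y/(k₂+(x−m)₊))`. -/
noncomputable def predRHS (b k2 m x y : ℝ) : ℝ :=
  b * y * (1 - y / (k2 + max 0 (x - m)))

set_option maxHeartbeats 1000000 in
/-- The set `A = {(x,y) : m ≤ x ≤ 1, k₂ ≤ y ≤ L}` with `L = 1 + k₂ − m` is invariant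
for the system (S). -/
theorem invariance_of_A (a b k1 k2 m L : ℝ)
    (ha : 0 < a) (hb : 0 < b) (hk1 : 0 < k1) (hk2 : 0 < k2)
    (hm0 : 0 ≤ m) (hm1 : m < 1) (hL : L = 1 + k2 - m)
    (x y : ℝ → ℝ)
    (hx : ∀ t : ℝ, 0 ≤ t → HasDerivAt x (preyRHS a k1 m (x t) (y t)) t)
    (hy : ∀ t : ℝ, 0 ≤ t → HasDerivAt y (predRHS b k2 m (x t) (y t)) t)
    (h1 : m ≤ x 0) (h2 : x 0 ≤ 1) (h3 : k2 ≤ y 0) (h4 : y 0 ≤ L) :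
    ∀ t : ℝ, 0 ≤ t → m ≤ x t ∧ x t ≤ 1 ∧ k2 ≤ y t ∧ y t ≤ L := by
  have hxc : ∀ t : ℝ, 0 ≤ t → ContinuousAt x t := fun t ht => (hx t ht).continuousAt
  have hyc : ∀ t : ℝ, 0 ≤ t → ContinuousAt y t := fun t ht => (hy t ht).continuousAt
  set K : ℝ := 2 + b * (L + k2) / k2 with hKdef
  clear_value K
  have hLpos : 0 < L := by rw [hL]; linarith
  have hK2 : 2 ≤ K := by
    have : 0 ≤ b * (L + k2) / k2 := by positivity
    rw [hKdef]
    linarith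
  have hK0 : (0:ℝ) ≤ K := by linarith
  set v : ℝ → ℝ :=
    fun s => max 0 (m - x s) + max 0 (x s - 1) + max 0 (k2 - y s) + max 0 (y s - L) with hvdef
  have hv_eval : ∀ s, v s =
      max 0 (m - x s) + max 0 (x s - 1) + max 0 (k2 - y s) + max 0 (y s - L) :=
    fun s => by rw [hvdef]
  clear_value v
  have hv_nonneg : ∀ s, 0 ≤ v s := by
    intro s
    rw [hv_eval]
    have := le_max_left (0:ℝ) (m - x s)
    have := le_max_left (0:ℝ) (x s - 1)
    have := le_max_left (0:ℝ) (k2 - y s)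
    have := le_max_left (0:ℝ) (y s - L)
    linarith
  have hvP : ∀ s, v s ≤ 0 → m ≤ x s ∧ x s ≤ 1 ∧ k2 ≤ y s ∧ y s ≤ L := by
    intro s hs
    rw [hv_eval] at hs
    have n1 := le_max_left (0:ℝ) (m - x s)
    have n2 := le_max_left (0:ℝ) (x s - 1)
    have n3 := le_max_left (0:ℝ) (k2 - y s)
    have n4 := le_max_left (0:ℝ) (y s - L)
    have m1 := le_max_right (0:ℝ) (m - x s)
    have m2 := le_max_right (0:ℝ) (x s - 1)
    have m3 := le_max_right (0:ℝ) (k2 - y s)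
    have m4 := le_max_right (0:ℝ) (y s - L)
    exact ⟨by linarith, by linarith, by linarith, by linarith⟩
  by_contra hcon
  push_neg at hcon
  obtain ⟨t0, ht0, hnP⟩ := hcon
  set S : Set ℝ := {t | 0 ≤ t ∧ ¬(m ≤ x t ∧ x t ≤ 1 ∧ k2 ≤ y t ∧ y t ≤ L)} with hSdef
  have hmemS : ∀ u, u ∈ S ↔ (0 ≤ u ∧ ¬(m ≤ x u ∧ x u ≤ 1 ∧ k2 ≤ y u ∧ y u ≤ L)) :=
    fun u => by rw [hSdef]; exact Iff.rfl
  clear_value S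
  have hSne : S.Nonempty :=
    ⟨t0, (hmemS t0).mpr ⟨ht0, fun h => absurd h.2.2.2 (not_le.mpr (hnP h.1 h.2.1 h.2.2.1))⟩⟩
  have hSbd : BddBelow S := ⟨0, fun u hu => ((hmemS u).mp hu).1⟩
  set T := sInf S with hTdef
  clear_value T
  have hT0 : 0 ≤ T := by
    rw [hTdef]
    exact le_csInf hSne fun u hu => ((hmemS u).mp hu).1
  have hbefore : ∀ s, 0 ≤ s → s < T → m ≤ x s ∧ x s ≤ 1 ∧ k2 ≤ y s ∧ y s ≤ L := by
    intro s hs0 hsT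
    by_contra hns
    exact absurd (hTdef ▸ csInf_le hSbd ((hmemS s).mpr ⟨hs0, hns⟩)) (not_le.mpr hsT)
  have hPT : m ≤ x T ∧ x T ≤ 1 ∧ k2 ≤ y T ∧ y T ≤ L := by
    rcases eq_or_lt_of_le hT0 with h0 | h0
    · rw [← h0]
      exact ⟨h1, h2, h3, h4⟩
    · have hxT : Tendsto x (𝓝[<] T) (𝓝 (x T)) :=
        (hxc T hT0).continuousWithinAt.tendsto
      have hyT : Tendsto y (𝓝[<] T) (𝓝 (y T)) :=
        (hyc T hT0).continuousWithinAt.tendsto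
      have hev : ∀ᶠ s in 𝓝[<] T, m ≤ x s ∧ x s ≤ 1 ∧ k2 ≤ y s ∧ y s ≤ L := by
        have ha' : ∀ᶠ s in 𝓝[<] T, 0 < s :=
          (eventually_gt_nhds h0).filter_mono nhdsWithin_le_nhds
        have hb' : ∀ᶠ s in 𝓝[<] T, s < T :=
          eventually_mem_nhdsWithin.mono fun s hs => hs
        filter_upwards [ha', hb'] with s hs1 hs2
        exact hbefore s hs1.le hs2
      exact ⟨ge_of_tendsto hxT (hev.mono fun s hs => hs.1),
        le_of_tendsto hxT (hev.mono fun s hs => hs.2.1),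
        ge_of_tendsto hyT (hev.mono fun s hs => hs.2.2.1),
        le_of_tendsto hyT (hev.mono fun s hs => hs.2.2.2)⟩
  obtain ⟨pa1, pa2, pa3, pa4⟩ := hPT
  obtain ⟨ε, hε, hball⟩ : ∃ ε > 0, ∀ u, dist u T < ε →
      |x u - x T| < 1 ∧ |y u - y T| < k2 / 2 := by
    have hx1 : ∀ᶠ u in 𝓝 T, dist (x u) (x T) < 1 :=
      Metric.tendsto_nhds.mp (hxc T hT0) 1 one_pos
    have hy1 : ∀ᶠ u in 𝓝 T, dist (y u) (y T) < k2 / 2 :=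
      Metric.tendsto_nhds.mp (hyc T hT0) (k2 / 2) (by positivity)
    have hxy := hx1.and hy1
    rw [Metric.eventually_nhds_iff] at hxy
    obtain ⟨ε, hε, h⟩ := hxy
    exact ⟨ε, hε, fun u hu => by simpa [Real.dist_eq] using h hu⟩
  set dlt : ℝ := ε / 2 with hdlt
  clear_value dlt
  have hdlt0 : 0 < dlt := by rw [hdlt]; positivity
  have hreg : ∀ s ∈ Icc T (T + dlt), |x s - x T| < 1 ∧ |y s - y T| < k2 / 2 := by
    intro s hs
    apply hball
    rw [Real.dist_eq, abs_of_nonneg (by linarith [hs.1])]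
    have := hs.2
    simp only [hdlt] at this
    linarith
  have hvc : ContinuousOn v (Icc T (T + dlt)) := by
    rw [hvdef]
    intro s hs
    have cx := hxc s (hT0.trans hs.1)
    have cy := hyc s (hT0.trans hs.1)
    have hca : ContinuousAt (fun u : ℝ =>
        max 0 (m - x u) + max 0 (x u - 1) + max 0 (k2 - y u) + max 0 (y u - L)) s :=
      (((continuousAt_const.max (continuousAt_const.sub cx)).add
        (continuousAt_const.max (cx.sub continuousAt_const))).add
        (continuousAt_const.max (continuousAt_const.sub cy))).add
        (continuousAt_const.max (cy.sub continuousAt_const))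
    exact hca.continuousWithinAt
  have hvT : v T ≤ 0 := by
    rw [hv_eval, max_eq_left (by linarith), max_eq_left (by linarith),
      max_eq_left (by linarith), max_eq_left (by linarith)]
    norm_num
  have hf' : ∀ s ∈ Ico T (T + dlt), ∀ r, (fun s => 4 * K * v s) s < r →
      ∃ᶠ z in 𝓝[>] s, (z - s)⁻¹ * (v z - v s) < r := by
    intro s hs r hr
    have hs0' : (0:ℝ) ≤ s := hT0.trans hs.1
    obtain ⟨hxr, hyr⟩ := hreg s ⟨hs.1, hs.2.le⟩
    rw [abs_lt] at hxr hyr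
    have hX1 : m - 1 ≤ x s := by linarith [hxr.1]
    have hX2 : x s ≤ 2 := by linarith [hxr.2]
    have hY1 : k2 / 2 ≤ y s := by linarith [hyr.1]
    have hY2 : y s ≤ L + k2 / 2 := by linarith [hyr.2]
    have hKv : 0 ≤ K * v s := mul_nonneg hK0 (hv_nonneg s)
    have n1 := le_max_left (0:ℝ) (m - x s)
    have n2 := le_max_left (0:ℝ) (x s - 1)
    have n3 := le_max_left (0:ℝ) (k2 - y s)
    have n4 := le_max_left (0:ℝ) (y s - L)
    have m1 := le_max_right (0:ℝ) (m - x s)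
    have m2 := le_max_right (0:ℝ) (x s - 1)
    have hvs := hv_eval s
    -- the four one-sided derivative limits
    have d1 : Tendsto (fun z => (z - s)⁻¹ * (max 0 (m - x z) - max 0 (m - x s))) (𝓝[>] s)
        (𝓝 (if m - x s < 0 then 0 else if 0 < m - x s then -preyRHS a k1 m (x s) (y s)
          else max 0 (-preyRHS a k1 m (x s) (y s)))) :=
      tendsto_slope_posPart ((hx s hs0').const_sub m)
    have d2 : Tendsto (fun z => (z - s)⁻¹ * (max 0 (x z - 1) - max 0 (x s - 1))) (𝓝[>] s)
        (𝓝 (if x s - 1 < 0 then 0 else if 0 < x s - 1 then preyRHS a k1 m (x s) (y s)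
          else max 0 (preyRHS a k1 m (x s) (y s)))) :=
      tendsto_slope_posPart ((hx s hs0').sub_const 1)
    have d3 : Tendsto (fun z => (z - s)⁻¹ * (max 0 (k2 - y z) - max 0 (k2 - y s))) (𝓝[>] s)
        (𝓝 (if k2 - y s < 0 then 0 else if 0 < k2 - y s then -predRHS b k2 m (x s) (y s)
          else max 0 (-predRHS b k2 m (x s) (y s)))) :=
      tendsto_slope_posPart ((hy s hs0').const_sub k2)
    have d4 : Tendsto (fun z => (z - s)⁻¹ * (max 0 (y z - L) - max 0 (y s - L))) (𝓝[>] s)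
        (𝓝 (if y s - L < 0 then 0 else if 0 < y s - L then predRHS b k2 m (x s) (y s)
          else max 0 (predRHS b k2 m (x s) (y s)))) :=
      tendsto_slope_posPart ((hy s hs0').sub_const L)
    have dsum := ((d1.add d2).add d3).add d4
    have dv : Tendsto (fun z => (z - s)⁻¹ * (v z - v s)) (𝓝[>] s) (𝓝
        ((if m - x s < 0 then 0 else if 0 < m - x s then -preyRHS a k1 m (x s) (y s)
          else max 0 (-preyRHS a k1 m (x s) (y s))) +
        (if x s - 1 < 0 then 0 else if 0 < x s - 1 then preyRHS a k1 m (x s) (y s)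
          else max 0 (preyRHS a k1 m (x s) (y s))) +
        (if k2 - y s < 0 then 0 else if 0 < k2 - y s then -predRHS b k2 m (x s) (y s)
          else max 0 (-predRHS b k2 m (x s) (y s))) +
        (if y s - L < 0 then 0 else if 0 < y s - L then predRHS b k2 m (x s) (y s)
          else max 0 (predRHS b k2 m (x s) (y s))))) := by
      refine dsum.congr fun z => ?_
      rw [hv_eval z, hv_eval s]
      ring
    -- estimate each limit term by K * v s
    have hD1 : (if m - x s < 0 then 0 else if 0 < m - x s then -preyRHS a k1 m (x s) (y s)
        else max 0 (-preyRHS a k1 m (x s) (y s))) ≤ K * v s := by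
      refine dini_le hKv fun hge => ?_
      have hmax : max 0 (x s - m) = 0 := max_eq_left (by linarith)
      rw [preyRHS, hmax]
      have hz : a * y s * 0 / (k1 + 0) = 0 := by simp
      rw [hz]
      have key : -(x s * (1 - x s) - 0) ≤ 2 * (m - x s) := by
        nlinarith [mul_nonneg hge (show (0:ℝ) ≤ x s - (m - 1) by linarith),
          mul_nonneg hm0 hge, mul_nonneg hm0 (show (0:ℝ) ≤ 1 - m by linarith)]
      have hKK : 0 ≤ (K - 2) * v s := mul_nonneg (by linarith) (hv_nonneg s)
      have hmv : m - x s ≤ v s := by rw [hvs]; linarith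
      linarith [key, hmv, hKK]
    have hD2 : (if x s - 1 < 0 then 0 else if 0 < x s - 1 then preyRHS a k1 m (x s) (y s)
        else max 0 (preyRHS a k1 m (x s) (y s))) ≤ K * v s := by
      refine dini_le hKv fun hge => ?_
      have hmax : max 0 (x s - m) = x s - m := max_eq_right (by linarith)
      rw [preyRHS, hmax]
      have hfrac : 0 ≤ a * y s * (x s - m) / (k1 + (x s - m)) := by
        apply div_nonneg
        · apply mul_nonneg (mul_nonneg ha.le (by linarith)) (by linarith)
        · linarith
      linarith [mul_nonneg (show (0:ℝ) ≤ x s by linarith) (show (0:ℝ) ≤ x s - 1 by linarith), hfrac, hKv]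
    have hD3 : (if k2 - y s < 0 then 0 else if 0 < k2 - y s then -predRHS b k2 m (x s) (y s)
        else max 0 (-predRHS b k2 m (x s) (y s))) ≤ K * v s := by
      refine dini_le hKv fun hge => ?_
      have hp0 : 0 ≤ max 0 (x s - m) := le_max_left _ _
      have hden : 0 < k2 + max 0 (x s - m) := by linarith
      have hfrac : y s / (k2 + max 0 (x s - m)) ≤ 1 :=
        (div_le_one hden).mpr (by linarith)
      have hpos : 0 ≤ predRHS b k2 m (x s) (y s) := by
        rw [predRHS]
        apply mul_nonneg (mul_nonneg hb.le (by linarith)) (by linarith)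
      linarith
    have hD4 : (if y s - L < 0 then 0 else if 0 < y s - L then predRHS b k2 m (x s) (y s)
        else max 0 (predRHS b k2 m (x s) (y s))) ≤ K * v s := by
      refine dini_le hKv fun hge => ?_
      set Q : ℝ := k2 + max 0 (x s - m) with hQdef
      have hp0 : 0 ≤ max 0 (x s - m) := le_max_left _ _
      have hQ : 0 < Q := by rw [hQdef]; linarith
      have hpub : max 0 (x s - m) ≤ 1 - m + max 0 (x s - 1) := by
        apply max_le
        · linarith
        · linarith
      have hnum : Q - y s ≤ max 0 (x s - 1) := by
        rw [hQdef]; linarith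
      have hys : 0 < y s := by linarith
      have hrw : (1 : ℝ) - y s / Q = (Q - y s) / Q := by
        field_simp
      rw [predRHS, ← hQdef, hrw]
      have step1 : b * y s * ((Q - y s) / Q) ≤ b * y s * (max 0 (x s - 1) / Q) := by
        apply mul_le_mul_of_nonneg_left _ (mul_nonneg hb.le hys.le)
        exact (div_le_div_iff_of_pos_right hQ).mpr hnum
      have hbyQ : b * y s / Q ≤ K := by
        have hA : b * y s / Q ≤ b * y s / k2 := by
          apply div_le_div_of_nonneg_left (mul_nonneg hb.le hys.le) hk2
          rw [hQdef]; linarith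
        have hB : b * y s ≤ b * (L + k2) :=
          mul_le_mul_of_nonneg_left (by linarith) hb.le
        have hC : b * y s / k2 ≤ b * (L + k2) / k2 := (div_le_div_iff_of_pos_right hk2).mpr hB
        rw [hKdef]
        have hpos2 : (0:ℝ) ≤ 2 := by norm_num
        linarith
      have he2 : 0 ≤ max 0 (x s - 1) := le_max_left _ _
      have step2 : b * y s * (max 0 (x s - 1) / Q) = b * y s / Q * max 0 (x s - 1) := by
        ring
      have step3 : b * y s / Q * max 0 (x s - 1) ≤ K * max 0 (x s - 1) :=
        mul_le_mul_of_nonneg_right hbyQ he2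
      have he2v : max 0 (x s - 1) ≤ v s := by rw [hvs]; linarith
      have step4 : K * max 0 (x s - 1) ≤ K * v s := mul_le_mul_of_nonneg_left he2v hK0
      linarith
    have hD : (if m - x s < 0 then 0 else if 0 < m - x s then -preyRHS a k1 m (x s) (y s)
          else max 0 (-preyRHS a k1 m (x s) (y s))) +
        (if x s - 1 < 0 then 0 else if 0 < x s - 1 then preyRHS a k1 m (x s) (y s)
          else max 0 (preyRHS a k1 m (x s) (y s))) +
        (if k2 - y s < 0 then 0 else if 0 < k2 - y s then -predRHS b k2 m (x s) (y s)
          else max 0 (-predRHS b k2 m (x s) (y s))) +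
        (if y s - L < 0 then 0 else if 0 < y s - L then predRHS b k2 m (x s) (y s)
          else max 0 (predRHS b k2 m (x s) (y s))) < r := by
      have h4v : 4 * K * v s < r := hr
      linarith
    exact (dv.eventually_lt_const hD).frequently
  have hbound : ∀ s ∈ Ico T (T + dlt), (fun s => 4 * K * v s) s ≤ 4 * K * v s + 0 :=
    fun s _ => le_of_eq (by ring)
  have gron := le_gronwallBound_of_liminf_deriv_right_le (f := v)
    (f' := fun s => 4 * K * v s) (δ := 0) (K := 4 * K) (ε := 0) (a := T) (b := T + dlt)
    hvc hf' hvT hbound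
  have hafter : ∀ s ∈ Icc T (T + dlt), m ≤ x s ∧ x s ≤ 1 ∧ k2 ≤ y s ∧ y s ≤ L := by
    intro s hs
    have hg := gron s hs
    rw [gronwallBound_ε0_δ0] at hg
    exact hvP s hg
  obtain ⟨s, hsS, hslt⟩ := exists_lt_of_csInf_lt hSne
    (show sInf S < T + dlt by rw [← hTdef]; linarith)
  obtain ⟨hs0', hnp⟩ := (hmemS s).mp hsS
  refine hnp ?_
  rcases lt_or_ge s T with h | h
  · exact hbefore s hs0' h
  · exact hafter s ⟨h, hslt.le⟩
end

section
/- If (x,y) is a solution of the system (S) on [0,∞) with x(0) > 0 and y(0) > 0, then m ≤ liminf_{t→∞} x(t) ≤ limsup_{t→∞} x(t) ≤ 1 and k₂ ≤ liminf_{t→∞} y(t) ≤ limsup_{t→∞} y(t) ≤ L. -/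
open Filter Topology Set

lemma eventually_gt_right {f : ℝ → ℝ} {d s : ℝ} (hf : HasDerivAt f d s) (hd : 0 < d) :
    ∀ᶠ t in 𝓝[>] s, f s < f t := by
  have h1 : Tendsto (slope f s) (𝓝[≠] s) (𝓝 d) := hasDerivAt_iff_tendsto_slope.1 hf
  have h2 : ∀ᶠ t in 𝓝[≠] s, 0 < slope f s t := h1.eventually (eventually_gt_nhds hd)
  have h3 : 𝓝[>] s ≤ 𝓝[≠] s := nhdsWithin_mono s fun t ht => ne_of_gt ht
  filter_upwards [h3 h2, self_mem_nhdsWithin] with t ht hts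
  rw [slope_def_field] at ht
  have hts' : (0:ℝ) < t - s := sub_pos.2 hts
  rcases div_pos_iff.1 ht with ⟨h, _⟩ | ⟨_, h⟩
  · linarith
  · linarith

lemma invariant_ge {f d : ℝ → ℝ} {T c : ℝ}
    (hf : ∀ t, T ≤ t → HasDerivAt f (d t) t)
    (hd : ∀ t, T ≤ t → f t = c → 0 < d t)
    (h0 : c ≤ f T) : ∀ t, T ≤ t → c ≤ f t := by
  intro t1 ht1
  by_contra hlt
  push_neg at hlt
  have hcont : ContinuousOn f (Icc T t1) := fun u hu =>
    ((hf u hu.1).continuousAt).continuousWithinAt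
  set S : Set ℝ := Icc T t1 ∩ f ⁻¹' Ici c with hS
  have hSclosed : IsClosed S :=
    hcont.preimage_isClosed_of_isClosed isClosed_Icc isClosed_Ici
  have hTS : T ∈ S := ⟨⟨le_refl T, ht1⟩, h0⟩
  have hbdd : BddAbove S := ⟨t1, fun u hu => hu.1.2⟩
  set s := sSup S with hs
  have hsS : s ∈ S := hSclosed.csSup_mem ⟨T, hTS⟩ hbdd
  have hsT : T ≤ s := hsS.1.1
  have hst1 : s ≤ t1 := hsS.1.2
  have hfs : c ≤ f s := hsS.2
  have hslt : s < t1 := lt_of_le_of_ne hst1 (fun h => absurd (h ▸ hfs) (not_le.2 hlt))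
  have hev : ∀ᶠ t in 𝓝[>] s, c ≤ f t := by
    rcases eq_or_lt_of_le hfs with heq | hgt
    · exact (eventually_gt_right (hf s hsT) (hd s hsT heq.symm)).mono
        fun t ht => le_of_lt (heq.trans_lt ht)
    · have : ∀ᶠ t in 𝓝 s, c < f t := ((hf s hsT).continuousAt).eventually_const_lt hgt
      exact (this.filter_mono nhdsWithin_le_nhds).mono fun t ht => ht.le
  have hIoc : Ioc s t1 ∈ 𝓝[>] s := Ioc_mem_nhdsGT_of_mem ⟨le_refl s, hslt⟩
  obtain ⟨t, ht, htm⟩ := (hev.and (eventually_of_mem hIoc fun t ht => ht)).exists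
  have : t ≤ s := le_csSup hbdd ⟨⟨hsT.trans htm.1.le, htm.2⟩, ht⟩
  exact absurd htm.1 (not_lt.2 this)

lemma invariant_le {f d : ℝ → ℝ} {T c : ℝ}
    (hf : ∀ t, T ≤ t → HasDerivAt f (d t) t)
    (hd : ∀ t, T ≤ t → f t = c → d t < 0)
    (h0 : f T ≤ c) : ∀ t, T ≤ t → f t ≤ c := by
  have h := invariant_ge (f := fun t => -f t) (d := fun t => -d t) (c := -c)
    (fun t ht => (hf t ht).neg)
    (fun t ht hft => by
      have : f t = c := by linarith [neg_eq_iff_eq_neg.1 hft]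
      simpa using hd t ht this)
    (by simpa using h0)
  intro t ht
  have := h t ht
  simpa using this

lemma mono_of_deriv_nonneg {f d : ℝ → ℝ} {T : ℝ}
    (hf : ∀ t, T ≤ t → HasDerivAt f (d t) t)
    (hd : ∀ t, T ≤ t → 0 ≤ d t) : ∀ t, T ≤ t → f T ≤ f t := by
  have hmono : MonotoneOn f (Ici T) :=
    monotoneOn_of_deriv_nonneg (convex_Ici T)
      (fun u hu => ((hf u hu).continuousAt).continuousWithinAt)
      (fun u hu => by
        rw [interior_Ici] at hu
        exact ((hf u (le_of_lt hu)).differentiableAt).differentiableWithinAt)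
      (fun u hu => by
        rw [interior_Ici] at hu
        rw [(hf u (le_of_lt hu)).deriv]
        exact hd u (le_of_lt hu))
  intro t ht
  exact hmono self_mem_Ici ht ht

lemma escape_up {f d : ℝ → ℝ} {T c δ : ℝ} (hδ : 0 < δ)
    (hf : ∀ t, T ≤ t → HasDerivAt f (d t) t)
    (hd : ∀ t, T ≤ t → δ ≤ d t)
    (hall : ∀ t, T ≤ t → f t ≤ c) : False := by
  have hg : ∀ t, T ≤ t → HasDerivAt (fun u => f u - δ * u) (d t - δ) t := fun t ht => by
    exact ((hf t ht).sub ((hasDerivAt_id t).const_mul δ)).congr_deriv (by simp)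
  have hmono := mono_of_deriv_nonneg hg (fun t ht => by linarith [hd t ht])
  have h1 : 0 ≤ (c - f T) / δ := div_nonneg (by linarith [hall T le_rfl]) hδ.le
  have hTt : T ≤ T + (c - f T) / δ + 1 := by linarith
  have h2 := hmono _ hTt
  have h3 : δ * ((c - f T) / δ) = c - f T := by field_simp
  have h4 := hall _ hTt
  nlinarith

lemma escape_down {f d : ℝ → ℝ} {T c δ : ℝ} (hδ : 0 < δ)
    (hf : ∀ t, T ≤ t → HasDerivAt f (d t) t)
    (hd : ∀ t, T ≤ t → d t ≤ -δ)
    (hall : ∀ t, T ≤ t → c ≤ f t) : False :=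
  escape_up (f := fun t => -f t) (d := fun t => -d t) (c := -c) hδ
    (fun t ht => (hf t ht).neg)
    (fun t ht => by linarith [hd t ht])
    (fun t ht => by linarith [hall t ht])

lemma pos_of_deriv_bound {f d : ℝ → ℝ}
    (hf : ∀ t, (0:ℝ) ≤ t → HasDerivAt f (d t) t) (h0 : 0 < f 0)
    (hK : ∀ T, 0 < T → ∃ K, 0 ≤ K ∧ ∀ t ∈ Icc (0:ℝ) T, |d t| ≤ K * |f t|) :
    ∀ t, 0 ≤ t → 0 < f t := by
  have hne : ∀ t, 0 < t → f t ≠ 0 := by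
    intro t0 ht0 hft0
    obtain ⟨K, hK0, hKb⟩ := hK t0 ht0
    set F : ℝ → ℝ := fun s => f (t0 - s) with hF
    have hFd : ∀ s ∈ Icc (0:ℝ) t0, HasDerivAt F (-(d (t0 - s))) s := by
      intro s hs
      have h1 : HasDerivAt f (d (t0 - s)) (t0 - s) := hf _ (by linarith [hs.2])
      have h2 : HasDerivAt (fun u : ℝ => t0 - u) (-1) s := by
        simpa using (hasDerivAt_id s).const_sub t0
      have := h1.comp s h2
      exact this.congr_deriv (by ring)
    have hcont : ContinuousOn F (Icc 0 t0) := fun s hs =>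
      ((hFd s hs).continuousAt).continuousWithinAt
    have hbound : ∀ s ∈ Ico (0:ℝ) t0, ‖-(d (t0 - s))‖ ≤ K * ‖F s‖ + 0 := by
      intro s hs
      rw [norm_neg, add_zero]
      have := hKb (t0 - s) ⟨by linarith [hs.2], by linarith [hs.1]⟩
      simpa [hF, Real.norm_eq_abs] using this
    have hFa : ‖F 0‖ ≤ 0 := by simp [hF, hft0]
    have hfin := norm_le_gronwallBound_of_norm_deriv_right_le hcont
      (fun s hs => (hFd s ⟨hs.1, hs.2.le⟩).hasDerivWithinAt) hFa hbound t0
      ⟨le_of_lt ht0, le_refl _⟩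
    rw [gronwallBound_ε0] at hfin
    simp [hF] at hfin
    have h5 : |f 0| ≤ 0 := by simpa using hfin
    have h6 := abs_nonneg (f 0)
    have hf0 : f 0 = 0 := abs_eq_zero.1 (le_antisymm h5 h6)
    linarith
  intro t ht
  rcases eq_or_lt_of_le ht with rfl | ht'
  · exact h0
  · by_contra hle
    push_neg at hle
    have hcont : ContinuousOn f (Icc 0 t) := fun u hu =>
      ((hf u hu.1).continuousAt).continuousWithinAt
    have hmem : (0:ℝ) ∈ Icc (f t) (f 0) := ⟨hle, h0.le⟩
    obtain ⟨c, hc, hfc⟩ := intermediate_value_Icc' (le_of_lt ht') hcont hmem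
    rcases eq_or_lt_of_le hc.1 with rfl | hcpos
    · exact absurd hfc (ne_of_gt h0)
    · exact hne c hcpos hfc

/-- For any solution starting in the open quadrant,
`m ≤ liminf x ≤ limsup x ≤ 1` and `k₂ ≤ liminf y ≤ limsup y ≤ L`. -/
theorem liminf_limsup_bounds (a b k1 k2 m L : ℝ)
    (ha : 0 < a) (hb : 0 < b) (hk1 : 0 < k1) (hk2 : 0 < k2)
    (hm0 : 0 ≤ m) (hm1 : m < 1) (hL : L = 1 + k2 - m)
    (x y : ℝ → ℝ)
    (hx : ∀ t : ℝ, 0 ≤ t → HasDerivAt x (preyRHS a k1 m (x t) (y t)) t)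
    (hy : ∀ t : ℝ, 0 ≤ t → HasDerivAt y (predRHS b k2 m (x t) (y t)) t)
    (hx0 : 0 < x 0) (hy0 : 0 < y 0) :
    m ≤ liminf x atTop ∧ liminf x atTop ≤ limsup x atTop ∧ limsup x atTop ≤ 1 ∧
    k2 ≤ liminf y atTop ∧ liminf y atTop ≤ limsup y atTop ∧ limsup y atTop ≤ L := by
  have hh0 : ∀ t, 0 ≤ max 0 (x t - m) := fun t => le_max_left _ _
  have hhk1 : ∀ t, 0 < k1 + max 0 (x t - m) := fun t => by linarith [hh0 t]
  have hhk2 : ∀ t, 0 < k2 + max 0 (x t - m) := fun t => by linarith [hh0 t]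
  have hcx : ∀ T : ℝ, ContinuousOn x (Icc 0 T) := fun T u hu =>
    ((hx u hu.1).continuousAt).continuousWithinAt
  have hcy : ∀ T : ℝ, ContinuousOn y (Icc 0 T) := fun T u hu =>
    ((hy u hu.1).continuousAt).continuousWithinAt
  have hhabs : ∀ t, max 0 (x t - m) ≤ |x t| := by
    intro t
    rcases le_or_gt (x t - m) 0 with hc | hc
    · rw [max_eq_left hc]; exact abs_nonneg _
    · rw [max_eq_right hc.le]
      exact le_trans (by linarith) (le_abs_self _)
  -- positivity of x
  have hxpos : ∀ t, 0 ≤ t → 0 < x t := by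
    refine pos_of_deriv_bound hx hx0 ?_
    intro T hT
    obtain ⟨Cx, hCx⟩ := isCompact_Icc.exists_bound_of_continuousOn (hcx T)
    obtain ⟨Cy, hCy⟩ := isCompact_Icc.exists_bound_of_continuousOn (hcy T)
    have hCx0 : 0 ≤ Cx := le_trans (norm_nonneg _) (hCx 0 ⟨le_rfl, hT.le⟩)
    have hCy0 : 0 ≤ Cy := le_trans (norm_nonneg _) (hCy 0 ⟨le_rfl, hT.le⟩)
    refine ⟨1 + Cx + a * Cy / k1, by positivity, ?_⟩
    intro t ht
    have hx' : |x t| ≤ Cx := by simpa [Real.norm_eq_abs] using hCx t ht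
    have hy' : |y t| ≤ Cy := by simpa [Real.norm_eq_abs] using hCy t ht
    have h1 : 0 ≤ max 0 (x t - m) := hh0 t
    have hk1h : 0 < k1 + max 0 (x t - m) := hhk1 t
    have hfrac : max 0 (x t - m) / (k1 + max 0 (x t - m)) ≤ |x t| / k1 :=
      div_le_div₀ (abs_nonneg _) (hhabs t) hk1 (by linarith)
    have b1 : |x t| * |1 - x t| ≤ |x t| * (1 + Cx) := by
      refine mul_le_mul_of_nonneg_left ?_ (abs_nonneg _)
      calc |1 - x t| ≤ |(1:ℝ)| + |x t| := abs_sub 1 (x t)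
        _ ≤ 1 + Cx := by rw [abs_one]; linarith
    have b2 : a * |y t| * (max 0 (x t - m) / (k1 + max 0 (x t - m))) ≤ a * Cy * (|x t| / k1) := by
      refine mul_le_mul (mul_le_mul_of_nonneg_left hy' ha.le) hfrac
        (div_nonneg h1 hk1h.le) (by positivity)
    calc |preyRHS a k1 m (x t) (y t)|
        = |x t * (1 - x t) - a * y t * max 0 (x t - m) / (k1 + max 0 (x t - m))| := by
          rw [preyRHS]
      _ ≤ |x t * (1 - x t)| + |a * y t * max 0 (x t - m) / (k1 + max 0 (x t - m))| :=
          abs_sub _ _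
      _ = |x t| * |1 - x t| + a * |y t| * (max 0 (x t - m) / (k1 + max 0 (x t - m))) := by
          rw [abs_mul, abs_div, abs_mul, abs_mul, abs_of_pos ha, abs_of_nonneg h1,
            abs_of_pos hk1h]
          ring
      _ ≤ |x t| * (1 + Cx) + a * Cy * (|x t| / k1) := by linarith
      _ = (1 + Cx + a * Cy / k1) * |x t| := by ring
  -- positivity of y
  have hypos : ∀ t, 0 ≤ t → 0 < y t := by
    refine pos_of_deriv_bound hy hy0 ?_
    intro T hT
    obtain ⟨Cy, hCy⟩ := isCompact_Icc.exists_bound_of_continuousOn (hcy T)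
    have hCy0 : 0 ≤ Cy := le_trans (norm_nonneg _) (hCy 0 ⟨le_rfl, hT.le⟩)
    refine ⟨b * (1 + Cy / k2), by positivity, ?_⟩
    intro t ht
    have hy' : |y t| ≤ Cy := by simpa [Real.norm_eq_abs] using hCy t ht
    have hk2h : 0 < k2 + max 0 (x t - m) := hhk2 t
    have hfrac : |y t| / (k2 + max 0 (x t - m)) ≤ Cy / k2 :=
      div_le_div₀ hCy0 hy' hk2 (by linarith [hh0 t])
    calc |predRHS b k2 m (x t) (y t)|
        = |b| * |y t| * |1 - y t / (k2 + max 0 (x t - m))| := by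
          rw [predRHS, abs_mul, abs_mul]
      _ ≤ b * |y t| * (1 + Cy / k2) := by
          rw [abs_of_pos hb]
          refine mul_le_mul_of_nonneg_left ?_ (by positivity)
          calc |1 - y t / (k2 + max 0 (x t - m))|
              ≤ |(1:ℝ)| + |y t / (k2 + max 0 (x t - m))| := abs_sub _ _
            _ = 1 + |y t| / (k2 + max 0 (x t - m)) := by
                rw [abs_one, abs_div, abs_of_pos hk2h]
            _ ≤ 1 + Cy / k2 := by linarith
      _ = b * (1 + Cy / k2) * |y t| := by ring
  -- predation term nonnegative
  have hPnn : ∀ t, 0 ≤ t →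
      0 ≤ a * y t * max 0 (x t - m) / (k1 + max 0 (x t - m)) := fun t ht =>
    div_nonneg (mul_nonneg (mul_nonneg ha.le (hypos t ht).le) (hh0 t)) (hhk1 t).le
  -- eventual upper bound for x
  have hxub : ∀ ε : ℝ, 0 < ε → ∃ T, 0 ≤ T ∧ ∀ t, T ≤ t → x t ≤ 1 + ε := by
    intro ε hε
    have key : ∃ t0, 0 ≤ t0 ∧ x t0 ≤ 1 + ε := by
      by_contra hcon
      push_neg at hcon
      refine escape_down (T := 0) (c := 1 + ε) (δ := ε * (1 + ε)) (by positivity) hx ?_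
        (fun t ht => (hcon t ht).le)
      intro t ht
      have h1 := (hcon t ht).le
      have h2 := hPnn t ht
      rw [preyRHS]
      nlinarith [mul_nonneg (by linarith : (0:ℝ) ≤ x t - (1 + ε))
        (by linarith : (0:ℝ) ≤ x t - 1)]
    obtain ⟨t0, ht0, hxt0⟩ := key
    refine ⟨t0, ht0, invariant_le (fun t ht => hx t (ht0.trans ht)) ?_ hxt0⟩
    intro t ht hxt
    have h2 := hPnn t (ht0.trans ht)
    rw [preyRHS, hxt]
    rw [hxt] at h2
    nlinarith
  -- eventual lower bound for x
  have hxlow : ∀ c, c < m → ∃ T, 0 ≤ T ∧ ∀ t, T ≤ t → c ≤ x t := by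
    intro c hc
    rcases le_or_gt c 0 with hc0 | hc0
    · exact ⟨0, le_rfl, fun t ht => hc0.trans (hxpos t ht).le⟩
    · have hsm : ∀ t, x t ≤ c → preyRHS a k1 m (x t) (y t) = x t * (1 - x t) := by
        intro t hxt
        have hmax : max 0 (x t - m) = 0 := max_eq_left (by linarith)
        rw [preyRHS, hmax]
        simp
      have key : ∃ t0, 0 ≤ t0 ∧ c ≤ x t0 := by
        by_contra hcon
        push_neg at hcon
        have hmono := mono_of_deriv_nonneg (T := 0) hx (fun t ht => by
          rw [hsm t (hcon t ht).le]
          have h1 := hxpos t ht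
          have h2 := hcon t ht
          nlinarith)
        refine escape_up (T := 0) (c := c) (δ := x 0 * (1 - c))
          (mul_pos hx0 (by linarith)) hx ?_ (fun t ht => (hcon t ht).le)
        intro t ht
        rw [hsm t (hcon t ht).le]
        have h1 := hmono t ht
        have h2 := hcon t ht
        nlinarith [mul_nonneg (by linarith : (0:ℝ) ≤ x t - x 0)
          (by linarith : (0:ℝ) ≤ 1 - x t), hx0]
      obtain ⟨t0, ht0, hxt0⟩ := key
      refine ⟨t0, ht0, invariant_ge (fun t ht => hx t (ht0.trans ht)) ?_ hxt0⟩
      intro t ht hxt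
      rw [hsm t hxt.le, hxt]
      nlinarith
  -- eventual lower bound for y
  have hylow : ∀ c, c < k2 → ∃ T, 0 ≤ T ∧ ∀ t, T ≤ t → c ≤ y t := by
    intro c hc
    rcases le_or_gt c 0 with hc0 | hc0
    · exact ⟨0, le_rfl, fun t ht => hc0.trans (hypos t ht).le⟩
    · have hfrac : ∀ t, y t ≤ c → y t / (k2 + max 0 (x t - m)) ≤ c / k2 := fun t h =>
        div_le_div₀ hc0.le h hk2 (by linarith [hh0 t])
      have hck2 : c / k2 < 1 := (div_lt_one hk2).2 hc
      have key : ∃ t0, 0 ≤ t0 ∧ c ≤ y t0 := by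
        by_contra hcon
        push_neg at hcon
        have hnn : ∀ t, 0 ≤ t → 0 ≤ predRHS b k2 m (x t) (y t) := by
          intro t ht
          have h1 := hfrac t (hcon t ht).le
          have h3 := hypos t ht
          rw [predRHS]
          exact mul_nonneg (mul_nonneg hb.le h3.le) (by linarith)
        have hmono := mono_of_deriv_nonneg (T := 0) hy hnn
        refine escape_up (T := 0) (c := c) (δ := b * y 0 * (1 - c / k2))
          (mul_pos (mul_pos hb hy0) (by linarith)) hy ?_ (fun t ht => (hcon t ht).le)
        intro t ht
        have h1 := hfrac t (hcon t ht).le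
        have h2 := hmono t ht
        have h3 := hypos t ht
        rw [predRHS]
        nlinarith [mul_nonneg (mul_nonneg hb.le (by linarith : (0:ℝ) ≤ y t - y 0))
          (by linarith : (0:ℝ) ≤ 1 - c / k2),
          mul_nonneg (mul_nonneg hb.le h3.le)
          (by linarith : (0:ℝ) ≤ c / k2 - y t / (k2 + max 0 (x t - m)))]
      obtain ⟨t0, ht0, hyt0⟩ := key
      refine ⟨t0, ht0, invariant_ge (fun t ht => hy t (ht0.trans ht)) ?_ hyt0⟩
      intro t ht hyt
      have h1 := hfrac t hyt.le
      rw [predRHS, hyt]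
      rw [hyt] at h1
      exact mul_pos (mul_pos hb hc0) (by linarith)
  -- eventual upper bound for y
  have hyub : ∀ ε : ℝ, 0 < ε → ∃ T, 0 ≤ T ∧ ∀ t, T ≤ t → y t ≤ L + 2 * ε := by
    intro ε hε
    obtain ⟨T, hT0, hTx⟩ := hxub ε hε
    have hK0 : 0 < L + ε := by rw [hL]; linarith
    have hhK : ∀ t, T ≤ t → k2 + max 0 (x t - m) ≤ L + ε := by
      intro t ht
      have h1 : max 0 (x t - m) ≤ 1 + ε - m :=
        max_le (by linarith) (by linarith [hTx t ht])
      rw [hL]; linarith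
    have hdyle : ∀ t, T ≤ t →
        predRHS b k2 m (x t) (y t) ≤ b * y t * (1 - y t / (L + ε)) := by
      intro t ht
      have h0t : (0:ℝ) ≤ t := hT0.trans ht
      have h2 := hypos t h0t
      have h1 : y t / (L + ε) ≤ y t / (k2 + max 0 (x t - m)) :=
        div_le_div₀ h2.le le_rfl (hhk2 t) (hhK t ht)
      rw [predRHS]
      nlinarith [mul_nonneg (mul_nonneg hb.le h2.le)
        (by linarith : (0:ℝ) ≤ y t / (k2 + max 0 (x t - m)) - y t / (L + ε))]
    have hL2 : 0 < L + 2 * ε := by rw [hL]; linarith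
    have hδ : 0 < b * (L + 2 * ε) * (ε / (L + ε)) :=
      mul_pos (mul_pos hb hL2) (div_pos hε hK0)
    have hble : ∀ u : ℝ, L + 2 * ε ≤ u →
        b * u * (1 - u / (L + ε)) ≤ -(b * (L + 2 * ε) * (ε / (L + ε))) := by
      intro u hu
      have e1 : b * u * (1 - u / (L + ε)) = b * (u * (L + ε) - u * u) / (L + ε) := by
        field_simp
      have e2 : -(b * (L + 2 * ε) * (ε / (L + ε))) =
          b * ((L + 2 * ε) * (L + ε) - (L + 2 * ε) * (L + 2 * ε)) / (L + ε) := by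
        field_simp
        ring
      rw [e1, e2]
      rw [div_le_div_iff₀ hK0 hK0]
      nlinarith [mul_nonneg hb.le (mul_nonneg (by linarith : (0:ℝ) ≤ u - (L + 2 * ε))
        (by linarith : (0:ℝ) ≤ u + (L + 2 * ε) - (L + ε)))]
    have key : ∃ t0, T ≤ t0 ∧ y t0 ≤ L + 2 * ε := by
      by_contra hcon
      push_neg at hcon
      exact escape_down (T := T) (c := L + 2 * ε) hδ
        (fun t ht => hy t (hT0.trans ht))
        (fun t ht => (hdyle t ht).trans (hble (y t) (hcon t ht).le))
        (fun t ht => (hcon t ht).le)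
    obtain ⟨t0, ht0, hyt0⟩ := key
    refine ⟨t0, hT0.trans ht0, invariant_le (fun t ht => hy t ((hT0.trans ht0).trans ht)) ?_ hyt0⟩
    intro t ht hyt
    have h1 := hdyle t (ht0.trans ht)
    rw [hyt] at h1
    have h2 := hble (L + 2 * ε) le_rfl
    calc predRHS b k2 m (x t) (y t) ≤ -(b * (L + 2 * ε) * (ε / (L + ε))) := by
          rw [hyt]; exact h1.trans h2
      _ < 0 := by linarith
  -- boundedness facts
  obtain ⟨T1, hT1, hxle2⟩ := hxub 1 one_pos
  have evx_up : ∀ᶠ t in atTop, x t ≤ 2 :=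
    eventually_atTop.2 ⟨T1, fun t ht => by linarith [hxle2 t ht]⟩
  have evx_lo : ∀ᶠ t in atTop, (0:ℝ) ≤ x t :=
    eventually_atTop.2 ⟨0, fun t ht => (hxpos t ht).le⟩
  obtain ⟨T2, hT2, hyle2⟩ := hyub 1 one_pos
  have evy_up : ∀ᶠ t in atTop, y t ≤ L + 2 :=
    eventually_atTop.2 ⟨T2, fun t ht => by linarith [hyle2 t ht]⟩
  have evy_lo : ∀ᶠ t in atTop, (0:ℝ) ≤ y t :=
    eventually_atTop.2 ⟨0, fun t ht => (hypos t ht).le⟩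
  have bx_up : IsBoundedUnder (· ≤ ·) atTop x := ⟨2, eventually_map.2 evx_up⟩
  have bx_lo : IsBoundedUnder (· ≥ ·) atTop x := ⟨0, eventually_map.2 evx_lo⟩
  have by_up : IsBoundedUnder (· ≤ ·) atTop y := ⟨L + 2, eventually_map.2 evy_up⟩
  have by_lo : IsBoundedUnder (· ≥ ·) atTop y := ⟨0, eventually_map.2 evy_lo⟩
  -- limsup x ≤ 1
  have hlimsupx : limsup x atTop ≤ 1 := by
    by_contra hgt
    push_neg at hgt
    obtain ⟨T, hT, hle⟩ := hxub ((limsup x atTop - 1) / 2) (by linarith)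
    have h1 : limsup x atTop ≤ 1 + (limsup x atTop - 1) / 2 :=
      limsup_le_of_le bx_lo.isCoboundedUnder_le (eventually_atTop.2 ⟨T, hle⟩)
    linarith
  -- m ≤ liminf x
  have hliminfx : m ≤ liminf x atTop := by
    by_contra hgt
    push_neg at hgt
    obtain ⟨T, hT, hle⟩ := hxlow ((liminf x atTop + m) / 2) (by linarith)
    have h1 : (liminf x atTop + m) / 2 ≤ liminf x atTop :=
      le_liminf_of_le bx_up.isCoboundedUnder_ge (eventually_atTop.2 ⟨T, hle⟩)
    linarith
  -- k2 ≤ liminf y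
  have hliminfy : k2 ≤ liminf y atTop := by
    by_contra hgt
    push_neg at hgt
    obtain ⟨T, hT, hle⟩ := hylow ((liminf y atTop + k2) / 2) (by linarith)
    have h1 : (liminf y atTop + k2) / 2 ≤ liminf y atTop :=
      le_liminf_of_le by_up.isCoboundedUnder_ge (eventually_atTop.2 ⟨T, hle⟩)
    linarith
  -- limsup y ≤ L
  have hlimsupy : limsup y atTop ≤ L := by
    by_contra hgt
    push_neg at hgt
    obtain ⟨T, hT, hle⟩ := hyub ((limsup y atTop - L) / 4) (by linarith)
    have h1 : limsup y atTop ≤ L + 2 * ((limsup y atTop - L) / 4) :=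
      limsup_le_of_le by_lo.isCoboundedUnder_le (eventually_atTop.2 ⟨T, hle⟩)
    linarith
  exact ⟨hliminfx, liminf_le_limsup bx_up bx_lo, hlimsupx, hliminfy,
    liminf_le_limsup by_up by_lo, hlimsupy⟩
end

section
/- Assume m > 0. Then for every solution (x,y) of the system (S) on [0,∞) with x(0) > 0 and y(0) > 0 there exists T ≥ 0 such that for all t ≥ T one has (x(t), y(t)) ∈ A, i.e. m ≤ x(t) ≤ 1 and k₂ ≤ y(t) ≤ L; in particular the system is uniformly persistent: liminf_{t→∞} x(t) ≥ m > 0 and liminf_{t→∞} y(t) ≥ k₂ > 0. -/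
open Filter Topology

open Set


lemma barrier_lower (v g : ℝ → ℝ) (t0 c : ℝ)
    (hv : ∀ s, t0 ≤ s → HasDerivAt v (g s) s)
    (h0 : c ≤ v t0)
    (hbar : ∀ s, t0 ≤ s → v s = c → 0 < g s) :
    ∀ t, t0 ≤ t → c ≤ v t := by
  intro t1 ht1
  by_contra hlt
  push_neg at hlt
  have ht01 : t0 < t1 := by
    rcases lt_or_eq_of_le ht1 with h | h
    · exact h
    · exfalso; rw [h] at h0; exact absurd h0 (not_le.2 hlt)
  set S : Set ℝ := Icc t0 t1 ∩ v ⁻¹' Ici c with hSdef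
  have hcont : ContinuousOn v (Icc t0 t1) := fun s hs =>
    ((hv s hs.1).continuousAt).continuousWithinAt
  have hScl : IsClosed S :=
    hcont.preimage_isClosed_of_isClosed isClosed_Icc isClosed_Ici
  have hS0 : t0 ∈ S := ⟨⟨le_refl _, ht1⟩, h0⟩
  have hScomp : IsCompact S :=
    isCompact_Icc.of_isClosed_subset hScl (fun s hs => hs.1)
  obtain ⟨s₀, hs₀S, hs₀max⟩ := hScomp.exists_isGreatest ⟨t0, hS0⟩
  have hs₀t0 : t0 ≤ s₀ := hs₀S.1.1
  have hs₀t1 : s₀ < t1 := by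
    rcases lt_or_eq_of_le hs₀S.1.2 with h | h
    · exact h
    · exfalso; have := hs₀S.2; rw [h] at this; exact absurd this (not_le.2 hlt)
  have hlt' : ∀ s, s ∈ Ioc s₀ t1 → v s < c := by
    intro s hs
    by_contra hge
    push_neg at hge
    exact absurd (hs₀max ⟨⟨hs₀t0.trans hs.1.le, hs.2⟩, hge⟩) (not_le.2 hs.1)
  have hmem : Ioc s₀ t1 ∈ 𝓝[>] s₀ := Ioc_mem_nhdsGT_of_mem ⟨le_refl _, hs₀t1⟩
  have hvle : v s₀ ≤ c := by
    have htend : Tendsto v (𝓝[>] s₀) (𝓝 (v s₀)) :=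
      ((hv s₀ hs₀t0).continuousAt.tendsto).mono_left nhdsWithin_le_nhds
    exact le_of_tendsto htend (eventually_of_mem hmem (fun s hs => (hlt' s hs).le))
  have hveq : v s₀ = c := le_antisymm hvle hs₀S.2
  have hg : 0 < g s₀ := hbar s₀ hs₀t0 hveq
  have hslope : Tendsto (slope v s₀) (𝓝[≠] s₀) (𝓝 (g s₀)) :=
    hasDerivAt_iff_tendsto_slope.mp (hv s₀ hs₀t0)
  have hev : ∀ᶠ s in 𝓝[>] s₀, 0 < slope v s₀ s :=
    (hslope.eventually (eventually_gt_nhds hg)).filter_mono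
      (nhdsWithin_mono s₀ (fun x hx => ne_of_gt hx))
  obtain ⟨s, hspos, hsmem⟩ := (hev.and (eventually_of_mem hmem (fun s hs => hs))).exists
  have hss : s₀ < s := hsmem.1
  have hgt : c < v s := by
    have h1 : 0 < (v s - v s₀) / (s - s₀) := by
      simpa [slope_def_field] using hspos
    have h2 : 0 < v s - v s₀ := by
      have := mul_pos h1 (sub_pos.mpr hss)
      rwa [div_mul_cancel₀] at this
      exact ne_of_gt (sub_pos.mpr hss)
    linarith [hveq ▸ h2]
  exact absurd hgt (not_lt.2 (hlt' s hsmem).le)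

lemma reach_upper (v g : ℝ → ℝ) (t0 c δ : ℝ) (hδ : 0 < δ)
    (hv : ∀ s, t0 ≤ s → HasDerivAt v (g s) s)
    (hdrive : ∀ s, t0 ≤ s → v s < c → δ ≤ g s) :
    ∃ s, t0 ≤ s ∧ c ≤ v s := by
  by_contra h
  push_neg at h
  have hvt0 : v t0 < c := h t0 le_rfl
  obtain ⟨T, hT⟩ : ∃ T, T = t0 + (c - v t0) / δ + 1 := ⟨_, rfl⟩
  have hq : 0 ≤ (c - v t0) / δ := div_nonneg (by linarith) hδ.le
  have hTt0 : t0 ≤ T := by rw [hT]; linarith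
  have hmono : MonotoneOn (fun t => v t - δ * t) (Icc t0 T) := by
    have hderiv : ∀ s ∈ Icc t0 T, HasDerivAt (fun t => v t - δ * t) (g s - δ) s := by
      intro s hs
      exact (hv s hs.1).sub (by simpa using (hasDerivAt_id s).const_mul δ)
    apply monotoneOn_of_deriv_nonneg (convex_Icc _ _)
    · exact fun s hs => (hderiv s hs).continuousAt.continuousWithinAt
    · intro s hs
      rw [interior_Icc] at hs
      exact (hderiv s ⟨hs.1.le, hs.2.le⟩).differentiableAt.differentiableWithinAt
    · intro s hs
      rw [interior_Icc] at hs
      rw [(hderiv s ⟨hs.1.le, hs.2.le⟩).deriv]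
      have := hdrive s hs.1.le (h s hs.1.le)
      linarith
  have hkey := hmono ⟨le_rfl, hTt0⟩ ⟨hTt0, le_rfl⟩ hTt0
  simp only at hkey
  have hvT : v T < c := h T hTt0
  have hδT : δ * (T - t0) = (c - v t0) + δ := by
    rw [hT]; field_simp; ring
  nlinarith [hkey, hδT]

lemma barrier_upper (v g : ℝ → ℝ) (t0 c : ℝ)
    (hv : ∀ s, t0 ≤ s → HasDerivAt v (g s) s)
    (h0 : v t0 ≤ c)
    (hbar : ∀ s, t0 ≤ s → v s = c → g s < 0) :
    ∀ t, t0 ≤ t → v t ≤ c := by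
  intro t ht
  have := barrier_lower (fun u => -v u) (fun u => -g u) t0 (-c)
    (fun s hs => (hv s hs).neg) (neg_le_neg h0)
    (fun s hs heq => neg_pos.mpr (hbar s hs (neg_inj.mp heq))) t ht
  simpa using this

lemma eventually_ge (v g : ℝ → ℝ) (t0 c δ : ℝ) (hδ : 0 < δ)
    (hv : ∀ s, t0 ≤ s → HasDerivAt v (g s) s)
    (hdrive : ∀ s, t0 ≤ s → v s < c → δ ≤ g s)
    (hbar : ∀ s, t0 ≤ s → v s = c → 0 < g s) :
    ∃ T, t0 ≤ T ∧ ∀ t, T ≤ t → c ≤ v t := by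
  obtain ⟨s, hs, hvs⟩ := reach_upper v g t0 c δ hδ hv hdrive
  exact ⟨s, hs, barrier_lower v g s c (fun u hu => hv u (hs.trans hu)) hvs
      (fun u hu => hbar u (hs.trans hu))⟩

lemma eventually_le (v g : ℝ → ℝ) (t0 c δ : ℝ) (hδ : 0 < δ)
    (hv : ∀ s, t0 ≤ s → HasDerivAt v (g s) s)
    (hdrive : ∀ s, t0 ≤ s → c < v s → g s ≤ -δ)
    (hbar : ∀ s, t0 ≤ s → v s = c → g s < 0) :
    ∃ T, t0 ≤ T ∧ ∀ t, T ≤ t → v t ≤ c := by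
  obtain ⟨T, hT, h⟩ := eventually_ge (fun u => -v u) (fun u => -g u) t0 (-c) δ hδ
    (fun s hs => (hv s hs).neg)
    (fun s hs hlt => le_neg.mp (hdrive s hs (neg_lt_neg_iff.mp hlt)))
    (fun s hs heq => neg_pos.mpr (hbar s hs (neg_inj.mp heq)))
  exact ⟨T, hT, fun t ht => neg_le_neg_iff.mp (h t ht)⟩

set_option maxHeartbeats 1000000 in
/-- When `m > 0`, every solution starting in the open quadrant enters the set
`A = [m,1] × [k₂,L]` in finite time; in particular the system is uniformly persistent. -/
theorem enters_A_in_finite_time (a b k1 k2 m L : ℝ)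
    (ha : 0 < a) (hb : 0 < b) (hk1 : 0 < k1) (hk2 : 0 < k2)
    (hm0 : 0 < m) (hm1 : m < 1) (hL : L = 1 + k2 - m)
    (x y : ℝ → ℝ)
    (hx : ∀ t : ℝ, 0 ≤ t → HasDerivAt x (preyRHS a k1 m (x t) (y t)) t)
    (hy : ∀ t : ℝ, 0 ≤ t → HasDerivAt y (predRHS b k2 m (x t) (y t)) t)
    (hx0 : 0 < x 0) (hy0 : 0 < y 0) :
    (∃ T : ℝ, 0 ≤ T ∧ ∀ t : ℝ, T ≤ t → m ≤ x t ∧ x t ≤ 1 ∧ k2 ≤ y t ∧ y t ≤ L) ∧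
    m ≤ liminf x atTop ∧ k2 ≤ liminf y atTop := by
  have hL0 : 0 < L := by rw [hL]; linarith
  have hs0 : ∀ t : ℝ, 0 ≤ max 0 (x t - m) := fun t => le_max_left _ _
  have hk1s : ∀ t : ℝ, 0 < k1 + max 0 (x t - m) := fun t => by linarith [hs0 t]
  have hk2s : ∀ t : ℝ, 0 < k2 + max 0 (x t - m) := fun t => by linarith [hs0 t]
  -- lower bound ε for y
  have hminpos : 0 < min (y 0) k2 := lt_min hy0 hk2
  set ε := min (y 0) k2 / 2 with hεdef
  have hεpos : 0 < ε := by rw [hεdef]; linarith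
  have hεy0 : ε ≤ y 0 := by
    rw [hεdef]; have := min_le_left (y 0) k2; linarith
  have hεk2 : ε < k2 := by
    rw [hεdef]; have := min_le_right (y 0) k2; linarith
  have HA : ∀ t, 0 ≤ t → ε ≤ y t := by
    refine barrier_lower y (fun t => predRHS b k2 m (x t) (y t)) 0 ε hy hεy0 ?_
    intro s hs heq
    show 0 < predRHS b k2 m (x s) (y s)
    simp only [predRHS]
    have hden := hk2s s
    have hlt : y s < k2 + max 0 (x s - m) := by rw [heq]; linarith [hs0 s]
    have h1 : y s / (k2 + max 0 (x s - m)) < 1 := (div_lt_one hden).mpr hlt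
    have h2 : 0 < y s := by rw [heq]; exact hεpos
    nlinarith [mul_pos hb h2]
  -- upper bound X for x
  set X := max (x 0) 1 + 1 with hXdef
  have hX1 : 1 < X := by rw [hXdef]; have := le_max_right (x 0) 1; linarith
  have hXx0 : x 0 ≤ X := by rw [hXdef]; have := le_max_left (x 0) 1; linarith
  have HB : ∀ t, 0 ≤ t → x t ≤ X := by
    refine barrier_upper x (fun t => preyRHS a k1 m (x t) (y t)) 0 X hx hXx0 ?_
    intro s hs heq
    show preyRHS a k1 m (x s) (y s) < 0
    simp only [preyRHS]
    have hys : 0 < y s := lt_of_lt_of_le hεpos (HA s hs)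
    have hpred : 0 ≤ a * y s * max 0 (x s - m) / (k1 + max 0 (x s - m)) :=
      div_nonneg (mul_nonneg (mul_nonneg ha.le hys.le) (hs0 s)) (hk1s s).le
    have hneg : x s * (1 - x s) < 0 := by rw [heq]; nlinarith
    linarith
  -- upper bound M for y
  set M := max (y 0) (k2 + X) + 1 with hMdef
  have hMy0 : y 0 ≤ M := by rw [hMdef]; have := le_max_left (y 0) (k2 + X); linarith
  have hMk2X : k2 + X < M := by rw [hMdef]; have := le_max_right (y 0) (k2 + X); linarith
  have hM0 : 0 < M := by linarith
  have HC : ∀ t, 0 ≤ t → y t ≤ M := by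
    refine barrier_upper y (fun t => predRHS b k2 m (x t) (y t)) 0 M hy hMy0 ?_
    intro s hs heq
    show predRHS b k2 m (x s) (y s) < 0
    simp only [predRHS]
    have hsx : max 0 (x s - m) ≤ X := max_le (by linarith) (by linarith [HB s hs])
    have hden := hk2s s
    have h1 : 1 < y s / (k2 + max 0 (x s - m)) := by
      rw [lt_div_iff₀ hden, heq]; linarith
    have h2 : 0 < y s := by rw [heq]; linarith
    nlinarith [mul_pos hb h2]
  -- lower bound c0 for x
  set c0 := min (x 0) m with hc0def
  have hc0pos : 0 < c0 := lt_min hx0 hm0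
  have hc0m : c0 ≤ m := min_le_right _ _
  have hc0x0 : c0 ≤ x 0 := min_le_left _ _
  have HD : ∀ t, 0 ≤ t → c0 ≤ x t := by
    refine barrier_lower x (fun t => preyRHS a k1 m (x t) (y t)) 0 c0 hx hc0x0 ?_
    intro s hs heq
    show 0 < preyRHS a k1 m (x s) (y s)
    simp only [preyRHS]
    have hsx : max 0 (x s - m) = 0 := max_eq_left (by rw [heq]; linarith)
    rw [hsx, heq]
    have h1 : 0 < c0 * (1 - c0) := mul_pos hc0pos (by linarith)
    simpa using h1
  -- x eventually ≥ m
  obtain ⟨T1, hT10, HE⟩ : ∃ T, (0:ℝ) ≤ T ∧ ∀ t, T ≤ t → m ≤ x t := by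
    refine eventually_ge x (fun t => preyRHS a k1 m (x t) (y t)) 0 m (c0 * (1 - m))
      (mul_pos hc0pos (by linarith)) hx ?_ ?_
    · intro s hs hlt
      show c0 * (1 - m) ≤ preyRHS a k1 m (x s) (y s)
      simp only [preyRHS]
      have hsx : max 0 (x s - m) = 0 := max_eq_left (by linarith)
      rw [hsx]
      have h1 : c0 ≤ x s := HD s hs
      have h2 : c0 * (1 - m) ≤ x s * (1 - x s) := by nlinarith
      simp only [mul_zero, add_zero, zero_div, sub_zero]
      exact h2
    · intro s hs heq
      show 0 < preyRHS a k1 m (x s) (y s)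
      simp only [preyRHS]
      have hsx : max 0 (x s - m) = 0 := max_eq_left (by rw [heq]; linarith)
      rw [hsx, heq]
      have h1 : 0 < m * (1 - m) := mul_pos hm0 (by linarith)
      simpa using h1
  -- x eventually ≥ m + δ
  have hamM : 0 < a * M := mul_pos ha hM0
  set δ := min ((1 - m) / 2) (k1 * (m * (1 - m)) / (4 * (a * M))) with hδdef
  have hδpos : 0 < δ := lt_min (by linarith)
    (div_pos (mul_pos hk1 (mul_pos hm0 (by linarith))) (by positivity))
  have hδa : δ ≤ (1 - m) / 2 := min_le_left _ _
  have hδb : a * M * δ ≤ k1 * (m * (1 - m)) / 4 := by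
    have h := min_le_right ((1 - m) / 2) (k1 * (m * (1 - m)) / (4 * (a * M)))
    have h2 : a * M * δ ≤ a * M * (k1 * (m * (1 - m)) / (4 * (a * M))) :=
      mul_le_mul_of_nonneg_left (hδdef ▸ h) hamM.le
    calc a * M * δ ≤ a * M * (k1 * (m * (1 - m)) / (4 * (a * M))) := h2
      _ = k1 * (m * (1 - m)) / 4 := by field_simp
  obtain ⟨T2, hT21, HF⟩ : ∃ T, T1 ≤ T ∧ ∀ t, T ≤ t → m + δ ≤ x t := by
    have key : ∀ s, T1 ≤ s → x s ≤ m + δ →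
        m * (1 - m) / 4 ≤ preyRHS a k1 m (x s) (y s) := by
      intro s hs hle
      have hs0' : 0 ≤ s := hT10.trans hs
      have hxm : m ≤ x s := HE s hs
      have hyM : y s ≤ M := HC s hs0'
      have hys : 0 < y s := lt_of_lt_of_le hεpos (HA s hs0')
      have hsxle : max 0 (x s - m) ≤ δ := max_le hδpos.le (by linarith)
      have hsxge := hs0 s
      have hk1' := hk1s s
      simp only [preyRHS]
      have hlog : m * (1 - m) / 2 ≤ x s * (1 - x s) := by
        linarith [mul_nonneg (sub_nonneg.mpr hxm) (show 0 ≤ 1 - x s by linarith),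
          mul_nonneg hm0.le (show 0 ≤ 1 - x s - (1 - m) / 2 by linarith)]
      have hpred : a * y s * max 0 (x s - m) / (k1 + max 0 (x s - m)) ≤ m * (1 - m) / 4 := by
        rw [div_le_iff₀ hk1']
        have h1 : a * y s * max 0 (x s - m) ≤ a * M * δ := by
          linarith [mul_nonneg (mul_nonneg ha.le (sub_nonneg.mpr hyM)) hsxge,
            mul_nonneg (mul_nonneg ha.le hM0.le) (sub_nonneg.mpr hsxle)]
        have hq : (0:ℝ) ≤ m * (1 - m) / 4 := by nlinarith
        calc a * y s * max 0 (x s - m) ≤ a * M * δ := h1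
          _ ≤ k1 * (m * (1 - m)) / 4 := hδb
          _ = m * (1 - m) / 4 * k1 := by ring
          _ ≤ m * (1 - m) / 4 * (k1 + max 0 (x s - m)) :=
              mul_le_mul_of_nonneg_left (by linarith [hsxge]) hq
      linarith
    refine eventually_ge x (fun t => preyRHS a k1 m (x t) (y t)) T1 (m + δ)
      (m * (1 - m) / 4) (by nlinarith) (fun s hs => hx s (hT10.trans hs))
      (fun s hs hlt => key s hs hlt.le)
      (fun s hs heq => lt_of_lt_of_le (by nlinarith) (key s hs heq.le))
  have hT20 : 0 ≤ T2 := hT10.trans hT21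
  -- predation lower bound p after T2
  have hk1X : 0 < k1 + X := by linarith
  set p := a * ε * δ / (k1 + X) with hpdef
  have hppos : 0 < p := by rw [hpdef]; positivity
  have hpred_ge : ∀ s, T2 ≤ s →
      p ≤ a * y s * max 0 (x s - m) / (k1 + max 0 (x s - m)) := by
    intro s hs
    have hs0' : 0 ≤ s := hT20.trans hs
    have hxs : m + δ ≤ x s := HF s hs
    have hsx_eq : max 0 (x s - m) = x s - m := max_eq_right (by linarith)
    have hyε : ε ≤ y s := HA s hs0'
    have hys : 0 ≤ y s := le_trans hεpos.le hyε
    have hxX : x s ≤ X := HB s hs0'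
    have hδX : δ ≤ X := by linarith
    rw [hsx_eq, hpdef, div_le_div_iff₀ hk1X (by linarith : (0:ℝ) < k1 + (x s - m))]
    have h4 : ε * δ ≤ y s * (x s - m) := mul_le_mul hyε (by linarith) hδpos.le hys
    have h5 : ε * δ ≤ y s * X := mul_le_mul hyε hδX hδpos.le hys
    linarith [mul_nonneg (mul_nonneg ha.le hk1.le) (sub_nonneg.mpr h4),
      mul_nonneg (mul_nonneg ha.le (show (0:ℝ) ≤ x s - m by linarith)) (sub_nonneg.mpr h5)]
  -- x eventually ≤ 1
  obtain ⟨T3, hT32, HG⟩ : ∃ T, T2 ≤ T ∧ ∀ t, T ≤ t → x t ≤ 1 := by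
    have key : ∀ s, T2 ≤ s → 1 ≤ x s → preyRHS a k1 m (x s) (y s) ≤ -p := by
      intro s hs hge
      have hp := hpred_ge s hs
      simp only [preyRHS]
      have hneg : x s * (1 - x s) ≤ 0 := by nlinarith
      linarith
    refine eventually_le x (fun t => preyRHS a k1 m (x t) (y t)) T2 1 p hppos
      (fun s hs => hx s (hT20.trans hs))
      (fun s hs hgt => key s hs hgt.le)
      (fun s hs heq => lt_of_le_of_lt (key s hs heq.ge) (by linarith))
  have hT30 : 0 ≤ T3 := hT20.trans hT32
  -- x eventually ≤ 1 - δ2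
  set δ2 := min (p / 2) ((1 - m) / 4) with hδ2def
  have hδ2pos : 0 < δ2 := lt_min (by linarith) (by linarith)
  have hδ2p : δ2 ≤ p / 2 := min_le_left _ _
  have hδ2m : δ2 ≤ (1 - m) / 4 := min_le_right _ _
  obtain ⟨T4, hT43, HH⟩ : ∃ T, T3 ≤ T ∧ ∀ t, T ≤ t → x t ≤ 1 - δ2 := by
    have key : ∀ s, T3 ≤ s → 1 - δ2 ≤ x s → preyRHS a k1 m (x s) (y s) ≤ -(p / 2) := by
      intro s hs hge
      have hx1 : x s ≤ 1 := HG s hs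
      have hp := hpred_ge s (hT32.trans hs)
      simp only [preyRHS]
      have hlog : x s * (1 - x s) ≤ δ2 := by linarith [sq_nonneg (1 - x s)]
      linarith
    refine eventually_le x (fun t => preyRHS a k1 m (x t) (y t)) T3 (1 - δ2) (p / 2)
      (by linarith) (fun s hs => hx s (hT30.trans hs))
      (fun s hs hgt => key s hs hgt.le)
      (fun s hs heq => lt_of_le_of_lt (key s hs heq.ge) (by linarith))
  have hT40 : 0 ≤ T4 := hT30.trans hT43
  -- y eventually ≥ k2
  set r := b * ε * (δ / (k2 + δ)) with hrdef
  have hrpos : 0 < r := by rw [hrdef]; positivity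
  obtain ⟨T5, hT52, HI⟩ : ∃ T, T2 ≤ T ∧ ∀ t, T ≤ t → k2 ≤ y t := by
    have key : ∀ s, T2 ≤ s → y s ≤ k2 → r ≤ predRHS b k2 m (x s) (y s) := by
      intro s hs hyk
      have hs0' : 0 ≤ s := hT20.trans hs
      have hyε : ε ≤ y s := HA s hs0'
      have hxs : m + δ ≤ x s := HF s hs
      have hsx_ge : δ ≤ max 0 (x s - m) := le_trans (by linarith) (le_max_right _ _)
      have hden := hk2s s
      have hfrac : y s / (k2 + max 0 (x s - m)) ≤ k2 / (k2 + δ) :=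
        div_le_div₀ hk2.le hyk (by linarith) (by linarith)
      have h1 : δ / (k2 + δ) ≤ 1 - y s / (k2 + max 0 (x s - m)) := by
        have he : k2 / (k2 + δ) + δ / (k2 + δ) = 1 := by
          field_simp
        linarith
      have h2 : (0:ℝ) ≤ δ / (k2 + δ) := by positivity
      show r ≤ predRHS b k2 m (x s) (y s)
      simp only [predRHS]
      calc r = b * ε * (δ / (k2 + δ)) := hrdef
        _ ≤ b * y s * (δ / (k2 + δ)) :=
            mul_le_mul_of_nonneg_right (mul_le_mul_of_nonneg_left hyε hb.le) h2
        _ ≤ b * y s * (1 - y s / (k2 + max 0 (x s - m))) :=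
            mul_le_mul_of_nonneg_left h1 (mul_nonneg hb.le (hεpos.le.trans hyε))
    refine eventually_ge y (fun t => predRHS b k2 m (x t) (y t)) T2 k2 r hrpos
      (fun s hs => hy s (hT20.trans hs))
      (fun s hs hlt => key s hs hlt.le)
      (fun s hs heq => lt_of_lt_of_le hrpos (key s hs heq.le))
  -- y eventually ≤ L
  have hLδ2 : δ2 < L := by rw [hL]; linarith
  have hLd : 0 < L - δ2 := by linarith
  set q2 := b * L * δ2 / (L - δ2) with hq2def
  have hq2pos : 0 < q2 := by rw [hq2def]; positivity
  obtain ⟨T6, hT64, HJ⟩ : ∃ T, T4 ≤ T ∧ ∀ t, T ≤ t → y t ≤ L := by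
    have key : ∀ s, T4 ≤ s → L ≤ y s → predRHS b k2 m (x s) (y s) ≤ -q2 := by
      intro s hs hyL
      have hx1 : x s ≤ 1 - δ2 := HH s hs
      have hsxle : max 0 (x s - m) ≤ 1 - δ2 - m := max_le (by linarith) (by linarith)
      have hden := hk2s s
      have hcap : k2 + max 0 (x s - m) ≤ L - δ2 := by rw [hL]; linarith
      have hys : 0 < y s := lt_of_lt_of_le hL0 hyL
      have hstep : y s * (1 - y s / (k2 + max 0 (x s - m))) ≤ -(L * δ2 / (L - δ2)) := by
        have e1 : y s * (1 - y s / (k2 + max 0 (x s - m))) =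
            (y s * ((k2 + max 0 (x s - m)) - y s)) / (k2 + max 0 (x s - m)) := by
          field_simp
        have e2 : -(L * δ2 / (L - δ2)) = (-(L * δ2)) / (L - δ2) := by ring
        rw [e1, e2, div_le_div_iff₀ hden hLd]
        linarith [mul_nonneg (mul_nonneg hys.le hLd.le)
            (show (0:ℝ) ≤ y s - (k2 + max 0 (x s - m)) - δ2 by linarith),
          mul_nonneg hδ2pos.le
            (sub_nonneg.mpr (mul_le_mul hyL hcap hden.le hys.le))]
      show predRHS b k2 m (x s) (y s) ≤ -q2
      simp only [predRHS]
      rw [hq2def]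
      calc b * y s * (1 - y s / (k2 + max 0 (x s - m)))
          = b * (y s * (1 - y s / (k2 + max 0 (x s - m)))) := by ring
        _ ≤ b * (-(L * δ2 / (L - δ2))) := mul_le_mul_of_nonneg_left hstep hb.le
        _ = -(b * L * δ2 / (L - δ2)) := by ring
    refine eventually_le y (fun t => predRHS b k2 m (x t) (y t)) T4 L q2 hq2pos
      (fun s hs => hy s (hT40.trans hs))
      (fun s hs hgt => key s hs hgt.le)
      (fun s hs heq => lt_of_le_of_lt (key s hs heq.ge) (by linarith))
  -- assemble
  have hmain : ∀ t, max T5 T6 ≤ t → m ≤ x t ∧ x t ≤ 1 ∧ k2 ≤ y t ∧ y t ≤ L := by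
    intro t ht
    have ht5 : T5 ≤ t := le_trans (le_max_left _ _) ht
    have ht6 : T6 ≤ t := le_trans (le_max_right _ _) ht
    have ht2 : T2 ≤ t := hT52.trans ht5
    have ht4 : T4 ≤ t := hT64.trans ht6
    have ht3 : T3 ≤ t := hT43.trans ht4
    refine ⟨?_, HG t ht3, HI t ht5, HJ t ht6⟩
    have := HF t ht2
    linarith
  have hT0 : 0 ≤ max T5 T6 := le_trans hT20 (hT52.trans (le_max_left _ _))
  refine ⟨⟨max T5 T6, hT0, hmain⟩, ?_, ?_⟩
  · have hbx : IsBoundedUnder (· ≤ ·) atTop x :=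
      ⟨1, eventually_map.mpr (eventually_atTop.mpr
        ⟨max T5 T6, fun t ht => (hmain t ht).2.1⟩)⟩
    exact le_liminf_of_le hbx.isCoboundedUnder_ge
      (eventually_atTop.mpr ⟨max T5 T6, fun t ht => (hmain t ht).1⟩)
  · have hby : IsBoundedUnder (· ≤ ·) atTop y :=
      ⟨L, eventually_map.mpr (eventually_atTop.mpr
        ⟨max T5 T6, fun t ht => (hmain t ht).2.2.2⟩)⟩
    exact le_liminf_of_le hby.isCoboundedUnder_ge
      (eventually_atTop.mpr ⟨max T5 T6, fun t ht => (hmain t ht).2.2.1⟩)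
end

section
/- Assume m = 0 and a·L < k₁, where L = 1 + k₂. Then for every solution (x,y) of the system (S) on [0,∞) with x(0) > 0 and y(0) > 0 one has liminf_{t→∞} x(t) ≥ (k₁ − a·L)/k₁; in particular the system is uniformly persistent. -/
open Filter Topology Set

private lemma slope_le {f F : ℝ → ℝ} {u s : ℝ} (c : ℝ) (hus : u ≤ s)
    (hf : ∀ t ∈ Icc u s, HasDerivAt f (F t) t)
    (hF : ∀ t ∈ Icc u s, F t ≤ c) : f s ≤ f u + c * (s - u) := by
  have hg : ∀ t ∈ Icc u s, HasDerivAt (fun t => c * t - f t) (c - F t) t := by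
    intro t ht
    have h1 : HasDerivAt (fun t : ℝ => c * t) c t := by
      simpa using (hasDerivAt_id t).const_mul c
    exact h1.sub (hf t ht)
  have mono : MonotoneOn (fun t => c * t - f t) (Icc u s) := by
    apply monotoneOn_of_deriv_nonneg (convex_Icc u s)
    · exact fun t ht => (hg t ht).continuousAt.continuousWithinAt
    · intro t ht
      rw [interior_Icc] at ht
      exact (hg t (Ioo_subset_Icc_self ht)).differentiableAt.differentiableWithinAt
    · intro t ht
      rw [interior_Icc] at ht
      rw [(hg t (Ioo_subset_Icc_self ht)).deriv]
      linarith [hF t (Ioo_subset_Icc_self ht)]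
  have := mono (left_mem_Icc.2 hus) (right_mem_Icc.2 hus) hus
  simp only at this
  linarith

private lemma slope_ge {f F : ℝ → ℝ} {u s : ℝ} (c : ℝ) (hus : u ≤ s)
    (hf : ∀ t ∈ Icc u s, HasDerivAt f (F t) t)
    (hF : ∀ t ∈ Icc u s, c ≤ F t) : f u + c * (s - u) ≤ f s := by
  have := slope_le (f := fun t => -f t) (F := fun t => -F t) (-c) hus
    (fun t ht => (hf t ht).neg) (fun t ht => by show -F t ≤ -c; linarith [hF t ht])
  linarith

private lemma exp_slope {f F : ℝ → ℝ} {u s : ℝ} (δ : ℝ) (hus : u ≤ s)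
    (hf : ∀ t ∈ Icc u s, HasDerivAt f (F t) t)
    (hF : ∀ t ∈ Icc u s, δ * f t ≤ F t) :
    f u * Real.exp (δ * (s - u)) ≤ f s := by
  set g : ℝ → ℝ := fun t => f t * Real.exp (-(δ * t)) with hgdef
  have hexp : ∀ t : ℝ, HasDerivAt (fun t : ℝ => Real.exp (-(δ * t)))
      (-δ * Real.exp (-(δ * t))) t := by
    intro t
    have h1 : HasDerivAt (fun t : ℝ => -(δ * t)) (-δ) t := by
      simpa using ((hasDerivAt_id' t).const_mul δ).fun_neg
    simpa [mul_comm, Function.comp_def] using (Real.hasDerivAt_exp (-(δ * t))).comp t h1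
  have hg : ∀ t ∈ Icc u s,
      HasDerivAt g ((F t - δ * f t) * Real.exp (-(δ * t))) t := by
    intro t ht
    have := (hf t ht).fun_mul (hexp t)
    refine this.congr_deriv ?_
    ring
  have mono : MonotoneOn g (Icc u s) := by
    apply monotoneOn_of_deriv_nonneg (convex_Icc u s)
    · exact fun t ht => (hg t ht).continuousAt.continuousWithinAt
    · intro t ht
      rw [interior_Icc] at ht
      exact (hg t (Ioo_subset_Icc_self ht)).differentiableAt.differentiableWithinAt
    · intro t ht
      rw [interior_Icc] at ht
      rw [(hg t (Ioo_subset_Icc_self ht)).deriv]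
      have h1 := hF t (Ioo_subset_Icc_self ht)
      have h2 := (Real.exp_pos (-(δ * t))).le
      nlinarith
  have h3 : g u ≤ g s := mono (left_mem_Icc.2 hus) (right_mem_Icc.2 hus) hus
  have h4 := mul_le_mul_of_nonneg_right h3 (Real.exp_pos (δ * s)).le
  have e1 : g u * Real.exp (δ * s) = f u * Real.exp (δ * (s - u)) := by
    rw [hgdef]
    simp only
    rw [mul_assoc, ← Real.exp_add]
    ring_nf
  have e2 : g s * Real.exp (δ * s) = f s := by
    rw [hgdef]
    simp only
    rw [mul_assoc, ← Real.exp_add]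
    simp
  rw [e1, e2] at h4
  exact h4


private lemma stays_below {f F : ℝ → ℝ} {β t1 : ℝ}
    (hf : ∀ t, t1 ≤ t → HasDerivAt f (F t) t)
    (hF : ∀ t, t1 ≤ t → β ≤ f t → F t ≤ 0)
    (h1 : f t1 ≤ β) : ∀ s, t1 ≤ s → f s ≤ β := by
  intro s hs
  by_contra hlt
  push_neg at hlt
  have hts : t1 < s := by
    rcases eq_or_lt_of_le hs with h | h
    · rw [← h] at hlt; linarith
    · exact h
  set A := Icc t1 s ∩ f ⁻¹' Iic β with hA
  have hcont : ContinuousOn f (Icc t1 s) :=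
    fun t ht => (hf t ht.1).continuousAt.continuousWithinAt
  have hA_closed : IsClosed A :=
    hcont.preimage_isClosed_of_isClosed isClosed_Icc isClosed_Iic
  have hA_ne : A.Nonempty := ⟨t1, ⟨le_refl _, hs⟩, h1⟩
  have hA_bdd : BddAbove A := ⟨s, fun t ht => ht.1.2⟩
  set u := sSup A with hu_def
  have hu : u ∈ A := hA_closed.csSup_mem hA_ne hA_bdd
  have hus : u < s := by
    rcases eq_or_lt_of_le hu.1.2 with h | h
    · exfalso; have := hu.2; rw [h] at this; exact absurd this (not_le.2 hlt)
    · exact h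
  have habove : ∀ t ∈ Ioc u s, β ≤ f t := by
    intro t ht
    by_contra h
    push_neg at h
    have htA : t ∈ A := ⟨⟨hu.1.1.trans ht.1.le, ht.2⟩, h.le⟩
    exact absurd (le_csSup hA_bdd htA) (not_le.2 ht.1)
  have hfu : β ≤ f u := by
    have hc : Tendsto f (𝓝[>] u) (𝓝 (f u)) :=
      (hf u hu.1.1).continuousAt.continuousWithinAt
    exact ge_of_tendsto hc (eventually_of_mem (Ioc_mem_nhdsGT hus) habove)
  have hIcc : ∀ t ∈ Icc u s, β ≤ f t := by
    intro t ht
    rcases eq_or_lt_of_le ht.1 with h | h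
    · rw [← h]; exact hfu
    · exact habove t ⟨h, ht.2⟩
  have hslope := slope_le 0 hus.le
    (fun t ht => hf t (hu.1.1.trans ht.1))
    (fun t ht => hF t (hu.1.1.trans ht.1) (hIcc t ht))
  have : f u ≤ β := hu.2
  simp only [zero_mul, add_zero] at hslope
  linarith

private lemma stays_above {f F : ℝ → ℝ} {β t1 : ℝ}
    (hf : ∀ t, t1 ≤ t → HasDerivAt f (F t) t)
    (hF : ∀ t, t1 ≤ t → f t ≤ β → 0 ≤ F t)
    (h1 : β ≤ f t1) : ∀ s, t1 ≤ s → β ≤ f s := by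
  intro s hs
  have := stays_below (f := fun t => -f t) (F := fun t => -F t) (β := -β) (t1 := t1)
    (fun t ht => (hf t ht).neg)
    (fun t ht hb => by
      show -F t ≤ 0
      have : f t ≤ β := by simpa using neg_le_neg hb
      linarith [hF t ht this])
    (by simpa using neg_le_neg h1) s hs
  simpa using this

private lemma eventually_below {f F : ℝ → ℝ} {β δ T : ℝ} (hδ : 0 < δ)
    (hf : ∀ t, T ≤ t → HasDerivAt f (F t) t)
    (hF : ∀ t, T ≤ t → β ≤ f t → F t ≤ -δ) :
    ∃ T', T ≤ T' ∧ ∀ t, T' ≤ t → f t ≤ β := by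
  have hstay : ∀ t1, T ≤ t1 → f t1 ≤ β → ∀ s, t1 ≤ s → f s ≤ β := by
    intro t1 ht1 h1
    exact stays_below (fun t ht => hf t (ht1.trans ht))
      (fun t ht hb => (hF t (ht1.trans ht) hb).trans (by linarith)) h1
  rcases le_or_gt (f T) β with h | h
  · exact ⟨T, le_rfl, hstay T le_rfl h⟩
  · set s := T + (f T - β) / δ with hs_def
    have hds : 0 < (f T - β) / δ := div_pos (by linarith) hδ
    have hTs : T ≤ s := by rw [hs_def]; linarith
    by_cases hall : ∀ t ∈ Icc T s, β ≤ f t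
    · have hsl := slope_le (-δ) hTs (fun t ht => hf t ht.1)
        (fun t ht => hF t ht.1 (hall t ht))
    -- f s ≤ f T + (-δ) * (s - T) = β
      have he : f T + (-δ) * (s - T) = β := by
        rw [hs_def]
        field_simp
        ring
      rw [he] at hsl
      exact ⟨s, hTs, hstay s hTs hsl⟩
    · push_neg at hall
      obtain ⟨t1, ht1, hlt⟩ := hall
      exact ⟨t1, ht1.1, hstay t1 ht1.1 hlt.le⟩

private lemma eventually_above {f F : ℝ → ℝ} {β δ T : ℝ} (hδ : 0 < δ) (hβ : 0 < β)
    (hf : ∀ t, T ≤ t → HasDerivAt f (F t) t)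
    (hpos : ∀ t, T ≤ t → 0 < f t)
    (hF : ∀ t, T ≤ t → f t ≤ β → δ * f t ≤ F t) :
    ∃ T', T ≤ T' ∧ ∀ t, T' ≤ t → β ≤ f t := by
  have hstay : ∀ t1, T ≤ t1 → β ≤ f t1 → ∀ s, t1 ≤ s → β ≤ f s := by
    intro t1 ht1 h1
    exact stays_above (fun t ht => hf t (ht1.trans ht))
      (fun t ht hb => le_trans (by nlinarith [hpos t (ht1.trans ht)]) (hF t (ht1.trans ht) hb)) h1
  rcases le_or_gt β (f T) with h | h
  · exact ⟨T, le_rfl, hstay T le_rfl h⟩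
  · have hfT := hpos T le_rfl
    set s := T + (Real.log (β / f T) + 1) / δ with hs_def
    have hlog : 0 < Real.log (β / f T) + 1 := by
      have : 0 < Real.log (β / f T) := Real.log_pos (by rw [lt_div_iff₀ hfT]; linarith)
      linarith
    have hTs : T ≤ s := by
      have := div_pos hlog hδ
      rw [hs_def]; linarith
    by_cases hall : ∀ t ∈ Icc T s, f t ≤ β
    · exfalso
      have hsl := exp_slope δ hTs (fun t ht => hf t ht.1)
        (fun t ht => hF t ht.1 (hall t ht))
      have h1 : δ * (s - T) = Real.log (β / f T) + 1 := by
        rw [hs_def]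
        field_simp
        ring
      have h2 : β / f T < Real.exp (δ * (s - T)) := by
        rw [h1, Real.exp_add, Real.exp_log (div_pos hβ hfT)]
        nlinarith [Real.exp_one_gt_d9, div_pos hβ hfT]
      have h3 : β < f T * Real.exp (δ * (s - T)) := by
        rw [div_lt_iff₀ hfT] at h2
        linarith [mul_comm (f T) (Real.exp (δ * (s - T)))]
      have h4 := hall s ⟨hTs, le_rfl⟩
      linarith
    · push_neg at hall
      obtain ⟨t1, ht1, hgt⟩ := hall
      exact ⟨t1, ht1.1, hstay t1 ht1.1 hgt.le⟩


private lemma pos_forever {f F : ℝ → ℝ}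
    (hf : ∀ t, 0 ≤ t → HasDerivAt f (F t) t) (h0 : 0 < f 0)
    (hC : ∀ s, 0 < s → ∃ C, ∀ t ∈ Icc 0 s, 0 ≤ f t → -C * f t ≤ F t) :
    ∀ t, 0 ≤ t → 0 < f t := by
  intro t0 ht0
  by_contra h
  push_neg at h
  have ht0pos : 0 < t0 := by
    rcases eq_or_lt_of_le ht0 with h' | h'
    · rw [← h'] at h; linarith
    · exact h'
  set A := Icc (0:ℝ) t0 ∩ f ⁻¹' Iic 0 with hA
  have hcont : ContinuousOn f (Icc 0 t0) :=
    fun t ht => (hf t ht.1).continuousAt.continuousWithinAt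
  have hA_closed : IsClosed A :=
    hcont.preimage_isClosed_of_isClosed isClosed_Icc isClosed_Iic
  have hA_ne : A.Nonempty := ⟨t0, ⟨ht0, le_rfl⟩, h⟩
  have hA_bdd : BddBelow A := ⟨0, fun t ht => ht.1.1⟩
  set u := sInf A with hu_def
  have hu : u ∈ A := hA_closed.csInf_mem hA_ne hA_bdd
  have hu0 : 0 < u := by
    rcases eq_or_lt_of_le hu.1.1 with h' | h'
    · exfalso; have := hu.2; rw [← h'] at this; exact absurd this (not_le.2 h0)
    · exact h'
  have hbelow : ∀ t ∈ Ico (0:ℝ) u, 0 ≤ f t := by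
    intro t ht
    by_contra h'
    push_neg at h'
    have htA : t ∈ A := ⟨⟨ht.1, ht.2.le.trans hu.1.2⟩, h'.le⟩
    exact absurd (csInf_le hA_bdd htA) (not_le.2 ht.2)
  have hfu : 0 ≤ f u := by
    have hc : Tendsto f (𝓝[<] u) (𝓝 (f u)) :=
      (hf u (hu0.le)).continuousAt.continuousWithinAt
    exact ge_of_tendsto hc (eventually_of_mem (Ico_mem_nhdsLT hu0) hbelow)
  have hIcc : ∀ t ∈ Icc (0:ℝ) u, 0 ≤ f t := by
    intro t ht
    rcases eq_or_lt_of_le ht.2 with h' | h'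
    · rw [h']; exact hfu
    · exact hbelow t ⟨ht.1, h'⟩
  obtain ⟨C, hCb⟩ := hC u hu0
  have hsub : Icc (0:ℝ) u ⊆ Icc (0:ℝ) t0 := Icc_subset_Icc le_rfl hu.1.2
  have hsl := exp_slope (-C) hu0.le
    (fun t ht => hf t ht.1)
    (fun t ht => hCb t ht (hIcc t ht))
  have hp := Real.exp_pos (-C * (u - 0))
  have h2 : f u ≤ 0 := hu.2
  nlinarith [mul_pos h0 hp]

/-- When `m = 0` and `a·L < k₁` (with `L = 1 + k₂`), every solution starting in the open
quadrant satisfies `liminf x ≥ (k₁ − a·L)/k₁`; in particular the system is uniformly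
persistent. -/
theorem uniform_persistence_m_zero (a b k1 k2 m L : ℝ)
    (ha : 0 < a) (hb : 0 < b) (hk1 : 0 < k1) (hk2 : 0 < k2)
    (hm : m = 0) (hL : L = 1 + k2) (hcond : a * L < k1)
    (x y : ℝ → ℝ)
    (hx : ∀ t : ℝ, 0 ≤ t → HasDerivAt x (preyRHS a k1 m (x t) (y t)) t)
    (hy : ∀ t : ℝ, 0 ≤ t → HasDerivAt y (predRHS b k2 m (x t) (y t)) t)
    (hx0 : 0 < x 0) (hy0 : 0 < y 0) :
    (k1 - a * L) / k1 ≤ liminf x atTop := by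
  subst hm
  subst hL
  -- Positivity of x
  have hxpos : ∀ t, 0 ≤ t → 0 < x t := by
    apply pos_forever hx hx0
    intro s hs
    obtain ⟨M, hM⟩ := (isCompact_Icc (a := (0:ℝ)) (b := s)).exists_bound_of_continuousOn
      (fun t ht => (hy t ht.1).continuousAt.continuousWithinAt)
    obtain ⟨N, hN⟩ := (isCompact_Icc (a := (0:ℝ)) (b := s)).exists_bound_of_continuousOn
      (fun t ht => (hx t ht.1).continuousAt.continuousWithinAt)
    refine ⟨N + a * M / k1, fun t ht hxt => ?_⟩
    have hyb := abs_le.mp (Real.norm_eq_abs (y t) ▸ hM t ht)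
    have hxb := abs_le.mp (Real.norm_eq_abs (x t) ▸ hN t ht)
    have hM0 : 0 ≤ M := (norm_nonneg _).trans (hM 0 (left_mem_Icc.2 hs.le))
    simp only [preyRHS, sub_zero, max_eq_right hxt]
    have hk1x : (0:ℝ) < k1 + x t := by linarith
    have h2 : a * y t * x t / (k1 + x t) ≤ a * M * x t / k1 := by
      have hnum : a * y t * x t ≤ a * M * x t :=
        mul_le_mul_of_nonneg_right (mul_le_mul_of_nonneg_left hyb.2 ha.le) hxt
      calc a * y t * x t / (k1 + x t) ≤ a * M * x t / (k1 + x t) :=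
            (div_le_div_iff_of_pos_right hk1x).mpr hnum
        _ ≤ a * M * x t / k1 :=
            div_le_div_of_nonneg_left (by positivity) hk1 (by linarith)
    have hx2 : x t * x t ≤ N * x t := mul_le_mul_of_nonneg_right hxb.2 hxt
    have e1 : -(N + a * M / k1) * x t = -(N * x t) - a * M / k1 * x t := by ring
    have e2 : x t * (1 - x t) = x t - x t * x t := by ring
    have e3 : a * M * x t / k1 = a * M / k1 * x t := by ring
    linarith
  -- Positivity of y
  have hypos : ∀ t, 0 ≤ t → 0 < y t := by
    apply pos_forever hy hy0
    intro s hs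
    obtain ⟨M, hM⟩ := (isCompact_Icc (a := (0:ℝ)) (b := s)).exists_bound_of_continuousOn
      (fun t ht => (hy t ht.1).continuousAt.continuousWithinAt)
    refine ⟨b * M / k2, fun t ht hyt => ?_⟩
    have hyb := abs_le.mp (Real.norm_eq_abs (y t) ▸ hM t ht)
    simp only [predRHS, sub_zero]
    have hKk : k2 ≤ k2 + max 0 (x t) := by linarith [le_max_left 0 (x t)]
    have hK1 : (0:ℝ) < k2 + max 0 (x t) := by linarith
    have h1 : y t * y t / (k2 + max 0 (x t)) ≤ M * y t / k2 := by
      have hnum : y t * y t ≤ M * y t := mul_le_mul_of_nonneg_right hyb.2 hyt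
      calc y t * y t / (k2 + max 0 (x t)) ≤ y t * y t / k2 :=
            div_le_div_of_nonneg_left (mul_self_nonneg _) hk2 hKk
        _ ≤ M * y t / k2 := (div_le_div_iff_of_pos_right hk2).mpr hnum
    have h2 : b * (y t * y t / (k2 + max 0 (x t))) ≤ b * (M * y t / k2) :=
      mul_le_mul_of_nonneg_left h1 hb.le
    have h3 : 0 ≤ b * y t := mul_nonneg hb.le hyt
    have e : b * y t * (1 - y t / (k2 + max 0 (x t)))
        = b * y t - b * (y t * y t / (k2 + max 0 (x t))) := by ring
    have e2 : b * (M * y t / k2) = b * M / k2 * y t := by ring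
    have e3 : -(b * M / k2) * y t = -(b * M / k2 * y t) := by ring
    linarith
  -- simplified prey RHS on the positive orbit
  have hprey : ∀ t, 0 ≤ t → preyRHS a k1 0 (x t) (y t)
      = x t * (1 - x t) - a * y t * x t / (k1 + x t) := by
    intro t ht
    simp [preyRHS, max_eq_right (hxpos t ht).le]
  -- Step 3 : x eventually below 1 + ε
  have step3 : ∀ ε : ℝ, 0 < ε → ∃ T, 0 ≤ T ∧ ∀ t, T ≤ t → x t ≤ 1 + ε := by
    intro ε hε
    refine eventually_below (T := 0) (β := 1 + ε) (δ := ε * (1 + ε)) (by positivity) hx ?_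
    intro t ht hxb
    rw [hprey t ht]
    have hx1 := hxpos t ht
    have hy1 := hypos t ht
    have hk1x : (0:ℝ) < k1 + x t := by linarith
    have hterm : 0 ≤ a * y t * x t / (k1 + x t) :=
      div_nonneg (by positivity) hk1x.le
    nlinarith [mul_nonneg (sub_nonneg.2 hxb) (by linarith : (0:ℝ) ≤ x t + ε)]
  -- Step 4 : y eventually below 1 + k2 + ε
  have step4 : ∀ ε : ℝ, 0 < ε → ∃ T, 0 ≤ T ∧ ∀ t, T ≤ t → y t ≤ 1 + k2 + ε := by
    intro ε hε
    obtain ⟨T0, hT0, hxb⟩ := step3 (ε / 2) (by positivity)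
    have hβε : (0:ℝ) < (1 + k2 + ε) - ε / 2 := by linarith
    have hδ : (0:ℝ) < b * (1 + k2 + ε) * (ε / 2) / ((1 + k2 + ε) - ε / 2) :=
      div_pos (by positivity) hβε
    have hF : ∀ t, T0 ≤ t → 1 + k2 + ε ≤ y t → predRHS b k2 0 (x t) (y t)
        ≤ -(b * (1 + k2 + ε) * (ε / 2) / ((1 + k2 + ε) - ε / 2)) := by
      intro t ht hyβ
      have htnn : 0 ≤ t := hT0.trans ht
      simp only [predRHS, sub_zero]
      have hK1 : (0:ℝ) < k2 + max 0 (x t) := by linarith [le_max_left 0 (x t)]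
      have hK2 : k2 + max 0 (x t) ≤ (1 + k2 + ε) - ε / 2 := by
        have h1 : x t ≤ 1 + ε / 2 := hxb t ht
        have h2 : max 0 (x t) ≤ 1 + ε / 2 := max_le (by linarith) h1
        linarith
      have hylb : (0:ℝ) < y t := hypos t htnn
      have hdiv : (1 + k2 + ε) / ((1 + k2 + ε) - ε / 2) ≤ y t / (k2 + max 0 (x t)) :=
        div_le_div₀ hylb.le hyβ hK1 hK2
      have hr1 : 1 < (1 + k2 + ε) / ((1 + k2 + ε) - ε / 2) :=
        (one_lt_div hβε).mpr (by linarith)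
      have h5 : b * y t * (1 - y t / (k2 + max 0 (x t)))
          ≤ b * y t * (1 - (1 + k2 + ε) / ((1 + k2 + ε) - ε / 2)) :=
        mul_le_mul_of_nonneg_left (by linarith) (mul_nonneg hb.le hylb.le)
      have h6 : b * y t * (1 - (1 + k2 + ε) / ((1 + k2 + ε) - ε / 2))
          ≤ b * (1 + k2 + ε) * (1 - (1 + k2 + ε) / ((1 + k2 + ε) - ε / 2)) := by
        nlinarith [mul_nonneg (mul_nonneg hb.le (sub_nonneg.2 hyβ))
          (by linarith : (0:ℝ) ≤ (1 + k2 + ε) / ((1 + k2 + ε) - ε / 2) - 1)]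
      have h7 : b * (1 + k2 + ε) * (1 - (1 + k2 + ε) / ((1 + k2 + ε) - ε / 2))
          = -(b * (1 + k2 + ε) * (ε / 2) / ((1 + k2 + ε) - ε / 2)) := by
        rw [one_sub_div (ne_of_gt hβε)]
        have e0 : (1 + k2 + ε) - ε / 2 - (1 + k2 + ε) = -(ε / 2) := by ring
        rw [e0]
        ring
      linarith
    obtain ⟨T', hT', hb'⟩ := eventually_below (T := T0) (β := 1 + k2 + ε) hδ
      (fun t ht => hy t (hT0.trans ht)) hF
    exact ⟨T', hT0.trans hT', hb'⟩
  -- Step 5 : liminf lower barrier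
  have step5 : ∀ ε : ℝ, 0 < ε → 0 < 1 - a * (1 + k2 + ε) / k1 - ε →
      ∃ T, ∀ t, T ≤ t → 1 - a * (1 + k2 + ε) / k1 - ε ≤ x t := by
    intro ε hε hβ
    obtain ⟨T1, hT1, hyb⟩ := step4 ε hε
    have hF : ∀ t, T1 ≤ t → x t ≤ 1 - a * (1 + k2 + ε) / k1 - ε →
        ε * x t ≤ preyRHS a k1 0 (x t) (y t) := by
      intro t ht hxβ
      have htnn : 0 ≤ t := hT1.trans ht
      rw [hprey t htnn]
      have hx1 := hxpos t htnn
      have hy1 := hypos t htnn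
      have hk1x : (0:ℝ) < k1 + x t := by linarith
      have hyub := hyb t ht
      have hterm : a * y t * x t / (k1 + x t) ≤ a * (1 + k2 + ε) * x t / k1 := by
        have hnum : a * y t * x t ≤ a * (1 + k2 + ε) * x t :=
          mul_le_mul_of_nonneg_right (mul_le_mul_of_nonneg_left hyub ha.le) hx1.le
        calc a * y t * x t / (k1 + x t) ≤ a * (1 + k2 + ε) * x t / (k1 + x t) :=
              (div_le_div_iff_of_pos_right hk1x).mpr hnum
          _ ≤ a * (1 + k2 + ε) * x t / k1 :=
              div_le_div_of_nonneg_left (by positivity) hk1 (by linarith)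
      have key : ε + a * (1 + k2 + ε) / k1 ≤ 1 - x t := by linarith
      have h8 : x t * (ε + a * (1 + k2 + ε) / k1) ≤ x t * (1 - x t) :=
        mul_le_mul_of_nonneg_left key hx1.le
      have e : x t * (ε + a * (1 + k2 + ε) / k1)
          = ε * x t + a * (1 + k2 + ε) * x t / k1 := by ring
      linarith
    obtain ⟨T', _, h⟩ := eventually_above (T := T1) (δ := ε) hε hβ
      (fun t ht => hx t (hT1.trans ht)) (fun t ht => hxpos t (hT1.trans ht)) hF
    exact ⟨T', h⟩
  -- Final assembly
  have htgt : (0:ℝ) < (k1 - a * (1 + k2)) / k1 := div_pos (by linarith) hk1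
  obtain ⟨T2, _, hx2b⟩ := step3 1 one_pos
  have hcob : IsCoboundedUnder (· ≥ ·) atTop x :=
    isCoboundedUnder_ge_of_eventually_le atTop (x := 1 + 1)
      (eventually_atTop.2 ⟨T2, fun t ht => hx2b t ht⟩)
  by_contra hcon
  push_neg at hcon
  obtain ⟨c, hc1, hc2⟩ := exists_between hcon
  have hc'1 : max c ((k1 - a * (1 + k2)) / k1 / 2) < (k1 - a * (1 + k2)) / k1 :=
    max_lt hc2 (by linarith)
  have hc'pos : 0 < max c ((k1 - a * (1 + k2)) / k1 / 2) :=
    lt_of_lt_of_le (by linarith) (le_max_right _ _)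
  set c' := max c ((k1 - a * (1 + k2)) / k1 / 2) with hc'def
  have hden : (0:ℝ) < a / k1 + 1 := by positivity
  set ε := ((k1 - a * (1 + k2)) / k1 - c') / (a / k1 + 1) with hεdef
  have hε : 0 < ε := div_pos (by linarith) hden
  have hβeq : 1 - a * (1 + k2 + ε) / k1 - ε = c' := by
    have h1 : ε * (a / k1 + 1) = (k1 - a * (1 + k2)) / k1 - c' :=
      div_mul_cancel₀ _ (ne_of_gt hden)
    have h2 : (k1 - a * (1 + k2)) / k1 = 1 - a * (1 + k2) / k1 := by
      field_simp
    have h3 : a * (1 + k2 + ε) / k1 = a * (1 + k2) / k1 + ε * (a / k1) := by ring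
    have h4 : ε * (a / k1 + 1) = ε * (a / k1) + ε := by ring
    linarith
  have hβpos : 0 < 1 - a * (1 + k2 + ε) / k1 - ε := by rw [hβeq]; exact hc'pos
  obtain ⟨T3, hT3b⟩ := step5 ε hε hβpos
  have hliminf : c' ≤ liminf x atTop :=
    le_liminf_of_le hcob
      (eventually_atTop.2 ⟨T3, fun t ht => hβeq ▸ hT3b t ht⟩)
  have : c ≤ c' := le_max_left _ _
  linarith
end

section
/- Assume m = 0 and a·k₂ < k₁ ≤ a·L, where L = 1 + k₂. Then for every solution (x,y) of the system (S) on [0,∞) with x(0) > 0 and y(0) > 0 one has limsup_{t→∞} x(t) ≥ min( k₁/a − k₂ , (1 − k₁ − a + √((1 − k₁ − a)² + 4(k₁ − a·k₂)))/2 ); in particular the system is uniformly weakly persistent. -/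
open Filter Topology

section helpers

open Set Filter

lemma mono_Icc {f f' : ℝ → ℝ} {a b : ℝ} (hab : a ≤ b)
    (hd : ∀ t ∈ Set.Icc a b, HasDerivAt f (f' t) t)
    (hpos : ∀ t ∈ Set.Icc a b, 0 ≤ f' t) : f a ≤ f b := by
  have hc : ContinuousOn f (Set.Icc a b) := fun t ht => (hd t ht).continuousAt.continuousWithinAt
  have hsub : interior (Set.Icc a b) ⊆ Set.Icc a b := interior_subset
  have := monotoneOn_of_deriv_nonneg (convex_Icc a b) hc
    (fun t ht => ((hd t (hsub ht)).differentiableAt).differentiableWithinAt)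
    (fun t ht => by rw [(hd t (hsub ht)).deriv]; exact hpos t (hsub ht))
  exact this (left_mem_Icc.2 hab) (right_mem_Icc.2 hab) hab

lemma anti_Icc {f f' : ℝ → ℝ} {a b : ℝ} (hab : a ≤ b)
    (hd : ∀ t ∈ Set.Icc a b, HasDerivAt f (f' t) t)
    (hneg : ∀ t ∈ Set.Icc a b, f' t ≤ 0) : f b ≤ f a := by
  have hc : ContinuousOn f (Set.Icc a b) := fun t ht => (hd t ht).continuousAt.continuousWithinAt
  have hsub : interior (Set.Icc a b) ⊆ Set.Icc a b := interior_subset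
  have := antitoneOn_of_deriv_nonpos (convex_Icc a b) hc
    (fun t ht => ((hd t (hsub ht)).differentiableAt).differentiableWithinAt)
    (fun t ht => by rw [(hd t (hsub ht)).deriv]; exact hneg t (hsub ht))
  exact this (left_mem_Icc.2 hab) (right_mem_Icc.2 hab) hab

lemma pos_of_deriv_ge {f f' : ℝ → ℝ} {t0 t2 K : ℝ} (ht : t0 ≤ t2)
    (hd : ∀ t ∈ Set.Icc t0 t2, HasDerivAt f (f' t) t)
    (h0 : 0 < f t0)
    (hK : ∀ t ∈ Set.Icc t0 t2, 0 ≤ f t → -K * f t ≤ f' t) : 0 < f t2 := by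
  by_contra h
  push_neg at h
  have hc : ContinuousOn f (Set.Icc t0 t2) :=
    fun t ht => (hd t ht).continuousAt.continuousWithinAt
  set S : Set ℝ := Set.Icc t0 t2 ∩ f ⁻¹' (Set.Iic 0) with hS
  have hScl : IsClosed S := hc.preimage_isClosed_of_isClosed isClosed_Icc isClosed_Iic
  have hScom : IsCompact S := isCompact_Icc.of_isClosed_subset hScl Set.inter_subset_left
  have hSne : S.Nonempty := ⟨t2, ⟨⟨ht, le_refl _⟩, h⟩⟩
  set t1 := sInf S with ht1def
  have ht1S : t1 ∈ S := hScom.sInf_mem hSne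
  obtain ⟨⟨ht01, ht12⟩, hft1⟩ := ht1S
  have hft1' : f t1 ≤ 0 := hft1
  have ht0lt : t0 < t1 := by
    rcases eq_or_lt_of_le ht01 with heq | hlt
    · exfalso; rw [← heq] at hft1'; linarith
    · exact hlt
  have hpos' : ∀ t ∈ Set.Ico t0 t1, 0 < f t := by
    intro t ⟨h1, h2⟩
    by_contra hle
    push_neg at hle
    have htS : t ∈ S := ⟨⟨h1, le_trans h2.le ht12⟩, hle⟩
    exact absurd (csInf_le hScom.bddBelow htS) (not_le.2 h2)
  have hge : ∀ t ∈ Set.Icc t0 t1, 0 ≤ f t := by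
    intro t ⟨h1, h2⟩
    rcases lt_or_eq_of_le h2 with hlt | heq
    · exact (hpos' t ⟨h1, hlt⟩).le
    · rw [heq]
      -- f t1 ≥ 0 by continuity from the left
      have hcw : ContinuousWithinAt f (Set.Ico t0 t1) t1 :=
        (hc t1 ⟨ht01, ht12⟩).mono (fun u hu => ⟨hu.1, hu.2.le.trans ht12⟩)
      have hnb : (nhdsWithin t1 (Set.Ico t0 t1)).NeBot := by
        rw [← mem_closure_iff_nhdsWithin_neBot, closure_Ico (ne_of_lt ht0lt)]
        exact ⟨ht01, le_refl _⟩
      exact ge_of_tendsto hcw (eventually_mem_nhdsWithin.mono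
        (fun u hu => (hpos' u hu).le))
  -- exp trick
  have hsub : Set.Icc t0 t1 ⊆ Set.Icc t0 t2 := Set.Icc_subset_Icc le_rfl ht12
  have hdg : ∀ t ∈ Set.Icc t0 t1,
      HasDerivAt (fun t => f t * Real.exp (K * t))
        (f' t * Real.exp (K * t) + f t * (Real.exp (K * t) * K)) t := by
    intro t htm
    have he : HasDerivAt (fun s => Real.exp (K * s)) (Real.exp (K * t) * K) t := by
      simpa using (((hasDerivAt_id t).const_mul K).exp)
    exact (hd t (hsub htm)).mul he
  have hmono := mono_Icc ht01 hdg (fun t htm => by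
    have h1 := hge t htm
    have h2 := hK t (hsub htm) h1
    have he : (0:ℝ) < Real.exp (K * t) := Real.exp_pos _
    nlinarith)
  have hle0 : f t1 * Real.exp (K * t1) ≤ 0 := by
    have := Real.exp_pos (K * t1)
    nlinarith
  have : 0 < f t0 * Real.exp (K * t0) := by positivity
  linarith

lemma barrier_le {f f' : ℝ → ℝ} {t0 c : ℝ}
    (hd : ∀ t, t0 ≤ t → HasDerivAt f (f' t) t)
    (h0 : f t0 ≤ c)
    (hb : ∀ t, t0 ≤ t → c ≤ f t → f' t ≤ 0) : ∀ t, t0 ≤ t → f t ≤ c := by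
  intro t2 ht2
  by_contra hcon
  push_neg at hcon
  have hc : ContinuousOn f (Set.Icc t0 t2) :=
    fun t ht => (hd t ht.1).continuousAt.continuousWithinAt
  set S : Set ℝ := Set.Icc t0 t2 ∩ f ⁻¹' (Set.Iic c) with hS
  have hScl : IsClosed S := hc.preimage_isClosed_of_isClosed isClosed_Icc isClosed_Iic
  have hScom : IsCompact S := isCompact_Icc.of_isClosed_subset hScl Set.inter_subset_left
  have hSne : S.Nonempty := ⟨t0, ⟨⟨le_refl _, ht2⟩, h0⟩⟩
  set t1 := sSup S with ht1def
  have ht1S : t1 ∈ S := hScom.sSup_mem hSne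
  obtain ⟨⟨ht01, ht12⟩, hft1⟩ := ht1S
  have hft1' : f t1 ≤ c := hft1
  have ht1lt : t1 < t2 := by
    rcases lt_or_eq_of_le ht12 with h | h
    · exact h
    · exfalso; rw [h] at hft1'; linarith
  have hgt : ∀ u ∈ Set.Ioc t1 t2, c < f u := by
    intro u ⟨h1, h2⟩
    by_contra hle
    push_neg at hle
    have huS : u ∈ S := ⟨⟨le_trans ht01 h1.le, h2⟩, hle⟩
    exact absurd (le_csSup hScom.bddAbove huS) (not_le.2 h1)
  have hstep : ∀ u ∈ Set.Ioc t1 t2, f t2 ≤ f u := by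
    intro u ⟨h1, h2⟩
    refine anti_Icc h2 (fun s hs => hd s (le_trans (le_trans ht01 h1.le) hs.1)) ?_
    intro s hs
    have hsIoc : s ∈ Set.Ioc t1 t2 := ⟨lt_of_lt_of_le h1 hs.1, hs.2⟩
    exact hb s (le_trans ht01 hsIoc.1.le) (hgt s hsIoc).le
  have hcw : ContinuousWithinAt f (Set.Ioc t1 t2) t1 :=
    (hc t1 ⟨ht01, ht12⟩).mono (fun u hu => ⟨le_trans ht01 hu.1.le, hu.2⟩)
  have hnb : (nhdsWithin t1 (Set.Ioc t1 t2)).NeBot := by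
    rw [← mem_closure_iff_nhdsWithin_neBot, closure_Ioc (ne_of_lt ht1lt)]
    exact ⟨le_refl _, ht1lt.le⟩
  have : f t2 ≤ f t1 :=
    ge_of_tendsto hcw (eventually_mem_nhdsWithin.mono (fun u hu => hstep u hu))
  linarith

lemma exists_le_of_deriv_le {f f' : ℝ → ℝ} {T c μ : ℝ} (hμ : 0 < μ)
    (hd : ∀ t, T ≤ t → HasDerivAt f (f' t) t)
    (hb : ∀ t, T ≤ t → c ≤ f t → f' t ≤ -μ) : ∃ t, T ≤ t ∧ f t ≤ c := by
  by_contra hcon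
  push_neg at hcon
  have hgt : ∀ t, T ≤ t → c < f t := fun t ht => hcon t ht
  have hder : ∀ t, T ≤ t → f' t ≤ -μ := fun t ht => hb t ht (hgt t ht).le
  obtain ⟨tstar, htstar⟩ : ∃ s : ℝ, s = T + (f T - c) / μ + 1 := ⟨_, rfl⟩
  have hdivpos : 0 < (f T - c) / μ := div_pos (by linarith [hgt T le_rfl]) hμ
  have hTt : T ≤ tstar := by linarith
  have key : (fun t => f t + μ * t) tstar ≤ (fun t => f t + μ * t) T := by
    refine anti_Icc (f := fun t => f t + μ * t) (f' := fun t => f' t + μ) hTt ?_ ?_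
    · intro t htm
      exact ((hd t htm.1).add ((hasDerivAt_id t).const_mul μ)).congr_deriv (by simp)
    · intro t htm
      have := hder t htm.1
      linarith
  simp only [] at key
  have hmul : μ * tstar - μ * T = (f T - c) + μ := by
    rw [htstar]; field_simp; ring
  linarith [hgt tstar hTt]

lemma no_growth_bounded {f f' : ℝ → ℝ} {T c B : ℝ} (hc : 0 < c)
    (hd : ∀ t, T ≤ t → HasDerivAt f (f' t) t)
    (hT : 0 < f T)
    (hg : ∀ t, T ≤ t → c * f t ≤ f' t)
    (hB : ∀ t, T ≤ t → f t ≤ B) : False := by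
  obtain ⟨tstar, htstar⟩ : ∃ s : ℝ, s = T + B / (c * f T) + 1 := ⟨_, rfl⟩
  have hBpos : 0 < B := lt_of_lt_of_le hT (hB T le_rfl)
  have hdivpos : 0 < B / (c * f T) := div_pos hBpos (by positivity)
  have hTt : T ≤ tstar := by linarith
  have hmono : (fun t => f t * Real.exp (-(c * t))) T
      ≤ (fun t => f t * Real.exp (-(c * t))) tstar := by
    refine mono_Icc (f := fun t => f t * Real.exp (-(c * t)))
      (f' := fun t => f' t * Real.exp (-(c * t)) + f t * (Real.exp (-(c * t)) * (-c)))
      hTt ?_ ?_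
    · intro t htm
      have he : HasDerivAt (fun s => Real.exp (-(c * s))) (Real.exp (-(c * t)) * (-c)) t := by
        simpa using (HasDerivAt.exp (((hasDerivAt_id t).const_mul c).neg))
      exact (hd t htm.1).mul he
    · intro t htm
      have h1 := hg t htm.1
      have h2 : (0:ℝ) < Real.exp (-(c * t)) := Real.exp_pos _
      nlinarith
  simp only [] at hmono
  have hE : 1 + c * (tstar - T) ≤ Real.exp (c * (tstar - T)) := by
    linarith [Real.add_one_le_exp (c * (tstar - T))]
  have key : f T * Real.exp (c * (tstar - T)) ≤ f tstar := by
    have hpos : (0:ℝ) < Real.exp (c * tstar) := Real.exp_pos _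
    have h2 := mul_le_mul_of_nonneg_right hmono hpos.le
    calc f T * Real.exp (c * (tstar - T))
        = f T * Real.exp (-(c * T)) * Real.exp (c * tstar) := by
          rw [mul_assoc, ← Real.exp_add]; ring_nf
      _ ≤ f tstar * Real.exp (-(c * tstar)) * Real.exp (c * tstar) := h2
      _ = f tstar := by rw [mul_assoc, ← Real.exp_add]; simp
  have hprod : f T * (c * (tstar - T)) = B + c * f T := by
    rw [htstar]; field_simp; ring
  nlinarith [hB tstar hTt, mul_le_mul_of_nonneg_left hE hT.le]

lemma concave_min_bound {k1 aw e xx mP : ℝ} (hx0 : 0 ≤ xx) (hxε : xx ≤ e) (hε : 0 < e)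
    (h1 : mP ≤ k1 - aw) (h2 : mP ≤ (1 - e) * (k1 + e) - aw) :
    mP ≤ (1 - xx) * (k1 + xx) - aw := by
  nlinarith [mul_nonneg hx0 (sub_nonneg.2 hxε),
    mul_nonneg (sub_nonneg.2 hxε) (sub_nonneg.2 h1),
    mul_nonneg hx0 (sub_nonneg.2 h2)]

end helpers

set_option maxHeartbeats 1000000 in
/-- When `m = 0` and `a·k₂ < k₁ ≤ a·L` (with `L = 1 + k₂`), every solution starting in the
open quadrant satisfies the stated lower bound on `limsup x`; in particular the system is
uniformly weakly persistent. -/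
theorem uniform_weak_persistence_m_zero (a b k1 k2 m L : ℝ)
    (ha : 0 < a) (hb : 0 < b) (hk1 : 0 < k1) (hk2 : 0 < k2)
    (hm : m = 0) (hL : L = 1 + k2)
    (hcond1 : a * k2 < k1) (hcond2 : k1 ≤ a * L)
    (x y : ℝ → ℝ)
    (hx : ∀ t : ℝ, 0 ≤ t → HasDerivAt x (preyRHS a k1 m (x t) (y t)) t)
    (hy : ∀ t : ℝ, 0 ≤ t → HasDerivAt y (predRHS b k2 m (x t) (y t)) t)
    (hx0 : 0 < x 0) (hy0 : 0 < y 0) :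
    min (k1 / a - k2)
      ((1 - k1 - a + Real.sqrt ((1 - k1 - a) ^ 2 + 4 * (k1 - a * k2))) / 2)
      ≤ limsup x atTop := by
  subst hm
  -- step 1 : positivity of x and y
  have hxpos : ∀ t, 0 ≤ t → 0 < x t := by
    intro t2 ht2
    obtain ⟨X, hX⟩ := isCompact_Icc.exists_bound_of_continuousOn (f := x)
      (s := Set.Icc 0 t2) (fun t ht => (hx t ht.1).continuousAt.continuousWithinAt)
    obtain ⟨Y, hY⟩ := isCompact_Icc.exists_bound_of_continuousOn (f := y)
      (s := Set.Icc 0 t2) (fun t ht => (hy t ht.1).continuousAt.continuousWithinAt)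
    have hX0 : 0 ≤ X := le_trans (norm_nonneg _) (hX 0 ⟨le_rfl, ht2⟩)
    have hY0 : 0 ≤ Y := le_trans (norm_nonneg _) (hY 0 ⟨le_rfl, ht2⟩)
    refine pos_of_deriv_ge (K := 1 + X + a * Y / k1) ht2 (fun t ht => hx t ht.1) hx0 ?_
    intro t htm hxt
    have hXt := hX t htm
    have hYt := hY t htm
    rw [Real.norm_eq_abs, abs_le] at hXt hYt
    have hmax : max 0 (x t - 0) = x t := by rw [sub_zero]; exact max_eq_right hxt
    simp only [preyRHS, hmax]
    have hdpos : 0 < k1 + x t := by linarith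
    have h1 : a * y t * x t / (k1 + x t) ≤ a * Y * x t / k1 :=
      div_le_div₀ (by positivity)
        (by nlinarith [mul_nonneg (mul_nonneg ha.le hxt) (sub_nonneg.2 hYt.2)]) hk1 (by linarith)
    have h2 : a * Y * x t / k1 = a * Y / k1 * x t := by ring
    nlinarith [mul_nonneg hxt (show (0:ℝ) ≤ 2 + X - x t by linarith [hXt.2])]
  have hypos : ∀ t, 0 ≤ t → 0 < y t := by
    intro t2 ht2
    obtain ⟨Y, hY⟩ := isCompact_Icc.exists_bound_of_continuousOn (f := y)
      (s := Set.Icc 0 t2) (fun t ht => (hy t ht.1).continuousAt.continuousWithinAt)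
    have hY0 : 0 ≤ Y := le_trans (norm_nonneg _) (hY 0 ⟨le_rfl, ht2⟩)
    refine pos_of_deriv_ge (K := b * Y / k2) ht2 (fun t ht => hy t ht.1) hy0 ?_
    intro t htm hyt
    have hYt := hY t htm
    rw [Real.norm_eq_abs, abs_le] at hYt
    have hmx : (0:ℝ) ≤ max 0 (x t - 0) := le_max_left _ _
    simp only [predRHS]
    have hdpos : 0 < k2 + max 0 (x t - 0) := by linarith
    have h1 : y t / (k2 + max 0 (x t - 0)) ≤ Y / k2 :=
      div_le_div₀ hY0 hYt.2 hk2 (by linarith)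
    have hr0 : 0 ≤ Y / k2 := div_nonneg hY0 hk2.le
    have key : 0 ≤ b * y t * (1 - y t / (k2 + max 0 (x t - 0)) + Y / k2) :=
      mul_nonneg (mul_nonneg hb.le hyt) (by linarith)
    ring_nf at key ⊢
    linarith
  -- step 2 : upper bound on x
  have hxB : ∀ t, 0 ≤ t → x t ≤ max (x 0) 1 := by
    refine barrier_le (fun t ht => hx t ht) (le_max_left _ _) ?_
    intro t ht hge
    have hxt : (0:ℝ) < x t := lt_of_lt_of_le (lt_of_lt_of_le one_pos (le_max_right (x 0) 1)) hge
    have hx1 : (1:ℝ) ≤ x t := le_trans (le_max_right (x 0) 1) hge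
    have hyt := hypos t ht
    have hmax : max 0 (x t - 0) = x t := by rw [sub_zero]; exact max_eq_right hxt.le
    simp only [preyRHS, hmax]
    have hdpos : 0 < k1 + x t := by linarith
    have h1 : 0 ≤ a * y t * x t / (k1 + x t) :=
      div_nonneg (by positivity) hdpos.le
    nlinarith
  have hbdd : IsBoundedUnder (· ≤ ·) atTop x :=
    isBoundedUnder_of_eventually_le (a := max (x 0) 1)
      (eventually_atTop.2 ⟨0, hxB⟩)
  by_contra hcon
  push_neg at hcon
  set M := min (k1 / a - k2)
      ((1 - k1 - a + Real.sqrt ((1 - k1 - a) ^ 2 + 4 * (k1 - a * k2))) / 2) with hM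
  -- M is positive
  have hq : 0 < k1 - a * k2 := by linarith
  have hDnn : 0 ≤ Real.sqrt ((1 - k1 - a) ^ 2 + 4 * (k1 - a * k2)) := Real.sqrt_nonneg _
  have hD2 : (Real.sqrt ((1 - k1 - a) ^ 2 + 4 * (k1 - a * k2))) ^ 2
      = (1 - k1 - a) ^ 2 + 4 * (k1 - a * k2) := Real.sq_sqrt (by nlinarith)
  have hMpos : 0 < M := by
    rw [hM]
    apply lt_min
    · rw [sub_pos, lt_div_iff₀ ha]; nlinarith
    · nlinarith [hD2, hDnn, hq]
  -- choice of ε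
  set ε := (max (limsup x atTop) 0 + M) / 2 with hε
  have hmaxlt : max (limsup x atTop) 0 < M := max_lt hcon hMpos
  have hmax0 : (0:ℝ) ≤ max (limsup x atTop) 0 := le_max_right _ _
  have hmaxls : limsup x atTop ≤ max (limsup x atTop) 0 := le_max_left _ _
  have hε0 : 0 < ε := by rw [hε]; linarith
  have hεM : ε < M := by rw [hε]; linarith
  have hlim : limsup x atTop < ε := by rw [hε]; linarith
  have heps1 : a * (k2 + ε) < k1 := by
    have h1 : M ≤ k1 / a - k2 := min_le_left _ _
    have h2 : ε + k2 < k1 / a := by linarith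
    have := (lt_div_iff₀ ha).1 h2
    nlinarith
  have heps2 : a * (k2 + ε) < (1 - ε) * (k1 + ε) := by
    have h1 : M ≤ (1 - k1 - a + Real.sqrt ((1 - k1 - a) ^ 2 + 4 * (k1 - a * k2))) / 2 :=
      min_le_right _ _
    have h2 : 2 * ε < (1 - k1 - a) + Real.sqrt ((1 - k1 - a) ^ 2 + 4 * (k1 - a * k2)) := by
      linarith
    have h3 : 0 < Real.sqrt ((1 - k1 - a) ^ 2 + 4 * (k1 - a * k2)) + 2 * ε - (1 - k1 - a) := by
      nlinarith [hD2, hDnn, hq, hε0]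
    nlinarith [mul_pos (show (0:ℝ) <
      (1 - k1 - a) + Real.sqrt ((1 - k1 - a) ^ 2 + 4 * (k1 - a * k2)) - 2 * ε by linarith) h3,
      hD2]
  -- choice of δ
  set δ := min (k1 - a * (k2 + ε)) ((1 - ε) * (k1 + ε) - a * (k2 + ε)) / (2 * a) with hδdef
  have hδ : 0 < δ := by
    rw [hδdef]
    exact div_pos (lt_min (by linarith) (by linarith)) (by linarith)
  set w := k2 + ε + δ with hw
  have haδ : a * δ = min (k1 - a * (k2 + ε)) ((1 - ε) * (k1 + ε) - a * (k2 + ε)) / 2 := by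
    rw [hδdef]; field_simp
  have hminle1 : min (k1 - a * (k2 + ε)) ((1 - ε) * (k1 + ε) - a * (k2 + ε)) ≤ k1 - a * (k2 + ε) :=
    min_le_left _ _
  have hminle2 : min (k1 - a * (k2 + ε)) ((1 - ε) * (k1 + ε) - a * (k2 + ε))
      ≤ (1 - ε) * (k1 + ε) - a * (k2 + ε) := min_le_right _ _
  have hminpos : 0 < min (k1 - a * (k2 + ε)) ((1 - ε) * (k1 + ε) - a * (k2 + ε)) :=
    lt_min (by linarith) (by linarith)
  have hww : a * w = a * (k2 + ε) + a * δ := by rw [hw]; ring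
  have hP0 : 0 < k1 - a * w := by linarith
  have hPε : 0 < (1 - ε) * (k1 + ε) - a * w := by linarith
  -- eventual bound on x
  obtain ⟨T0, hT0⟩ : ∃ T0, ∀ t ≥ T0, x t < ε :=
    eventually_atTop.1 (eventually_lt_of_limsup_lt hlim hbdd)
  set T := max T0 0 with hT
  have hTx : ∀ t, T ≤ t → x t < ε := fun t ht => hT0 t (le_trans (le_max_left _ _) ht)
  have hT0' : (0:ℝ) ≤ T := le_max_right _ _
  -- eventual bound on y
  have hwpos : 0 < w := by rw [hw]; linarith
  have hμpos : 0 < b * δ * w / (k2 + ε) := by positivity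
  have hdecay : ∀ t, T ≤ t → w ≤ y t →
      predRHS b k2 0 (x t) (y t) ≤ -(b * δ * w / (k2 + ε)) := by
    intro t ht hge
    have ht0 : 0 ≤ t := le_trans hT0' ht
    have hxt := hxpos t ht0
    have hxε := hTx t ht
    have hyt : 0 < y t := lt_of_lt_of_le hwpos hge
    have hmax : max 0 (x t - 0) = x t := by rw [sub_zero]; exact max_eq_right hxt.le
    simp only [predRHS, hmax]
    have hdpos : 0 < k2 + x t := by linarith
    have hdε : k2 + x t ≤ k2 + ε := by linarith
    have h1 : y t / (k2 + ε) ≤ y t / (k2 + x t) := div_le_div₀ hyt.le le_rfl hdpos hdε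
    have h2 : w / (k2 + ε) ≤ y t / (k2 + ε) := div_le_div₀ hyt.le hge (by linarith) le_rfl
    have h3 : w / (k2 + ε) = 1 + δ / (k2 + ε) := by rw [hw]; field_simp
    have h4 : 1 - y t / (k2 + x t) ≤ -(δ / (k2 + ε)) := by linarith
    have h5 : b * y t * (1 - y t / (k2 + x t)) ≤ b * y t * (-(δ / (k2 + ε))) :=
      mul_le_mul_of_nonneg_left h4 (mul_nonneg hb.le hyt.le)
    have h6 : b * w * (δ / (k2 + ε)) ≤ b * y t * (δ / (k2 + ε)) :=
      mul_le_mul_of_nonneg_right (mul_le_mul_of_nonneg_left hge hb.le) (by positivity)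
    have h7 : b * δ * w / (k2 + ε) = b * w * (δ / (k2 + ε)) := by ring
    ring_nf at h5 h6 h7 ⊢
    linarith
  obtain ⟨t0, ht0T, hyt0⟩ := exists_le_of_deriv_le hμpos
    (fun t ht => hy t (le_trans hT0' ht)) hdecay
  have hyw : ∃ t0, T ≤ t0 ∧ ∀ t, t0 ≤ t → y t ≤ w := by
    refine ⟨t0, ht0T, barrier_le (fun t ht => hy t (le_trans (le_trans hT0' ht0T) ht)) hyt0 ?_⟩
    intro t ht hge
    exact le_trans (hdecay t (le_trans ht0T ht) hge) (by linarith)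
  obtain ⟨t0, ht0T, hyw'⟩ := hyw
  have ht00 : (0:ℝ) ≤ t0 := le_trans hT0' ht0T
  -- growth rate
  set c := min (k1 - a * w) ((1 - ε) * (k1 + ε) - a * w) / (k1 + ε) with hc
  have hcpos : 0 < c := div_pos (lt_min hP0 hPε) (by linarith)
  have hgrow : ∀ t, t0 ≤ t → c * x t ≤ preyRHS a k1 0 (x t) (y t) := by
    intro t ht
    have htT : T ≤ t := le_trans ht0T ht
    have ht0' : (0:ℝ) ≤ t := le_trans ht00 ht
    have hxt := hxpos t ht0'
    have hxε := hTx t htT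
    have hyt := hypos t ht0'
    have hywt := hyw' t ht
    have hmax : max 0 (x t - 0) = x t := by rw [sub_zero]; exact max_eq_right hxt.le
    simp only [preyRHS, hmax]
    have hdpos : 0 < k1 + x t := by linarith
    have hdle : k1 + x t ≤ k1 + ε := by linarith
    have h1 : a * y t * x t / (k1 + x t) ≤ a * w * x t / (k1 + x t) :=
      div_le_div₀ (mul_nonneg (mul_nonneg ha.le hwpos.le) hxt.le)
        (mul_le_mul_of_nonneg_right (mul_le_mul_of_nonneg_left hywt ha.le) hxt.le)
        hdpos le_rfl
    have hm1 : min (k1 - a * w) ((1 - ε) * (k1 + ε) - a * w) ≤ k1 - a * w := min_le_left _ _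
    have hm2 : min (k1 - a * w) ((1 - ε) * (k1 + ε) - a * w) ≤ (1 - ε) * (k1 + ε) - a * w :=
      min_le_right _ _
    have hmP : min (k1 - a * w) ((1 - ε) * (k1 + ε) - a * w)
        ≤ (1 - x t) * (k1 + x t) - a * w :=
      concave_min_bound hxt.le hxε.le hε0 hm1 hm2
    have hc' : c * (k1 + ε) = min (k1 - a * w) ((1 - ε) * (k1 + ε) - a * w) := by
      rw [hc]; field_simp
    have hcd : c * (k1 + x t) ≤ min (k1 - a * w) ((1 - ε) * (k1 + ε) - a * w) := by
      have h2 := mul_le_mul_of_nonneg_left hdle hcpos.le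
      linarith
    have hstar : c * (k1 + x t) + a * w ≤ (1 - x t) * (k1 + x t) := by linarith
    have h6 := mul_le_mul_of_nonneg_left hstar hxt.le
    have h7 : a * w * x t / (k1 + x t) ≤ x t * (1 - x t) - c * x t := by
      rw [div_le_iff₀ hdpos]
      ring_nf at h6 ⊢
      linarith
    linarith [h1, h7]
  exact no_growth_bounded hcpos
    (fun t ht => hx t (le_trans ht00 ht)) (hxpos t0 ht00) hgrow
    (fun t ht => hxB t (le_trans ht00 ht))
end

section
/- Assume m = 0, k₁ = a·k₂ and 1 − k₁ − a > 0. Then for every solution (x,y) of the system (S) on [0,∞) with x(0) > 0 and y(0) > 0 one has limsup_{t→∞} x(t) ≥ 1 − k₁ − a; in particular the system is uniformly weakly persistent. -/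
open Filter Topology

section WpAux

open Set



/-- continuity of `t ↦ f (max t t₀)` from continuity of `f` on `[t₀, ∞)`. -/
lemma wp_cont_comp_max {f : ℝ → ℝ} {t₀ : ℝ} (hf : ∀ t, t₀ ≤ t → ContinuousAt f t) :
    Continuous (fun t => f (max t t₀)) := by
  rw [continuous_iff_continuousAt]
  intro t
  have h1 : Continuous fun s : ℝ => max s t₀ := continuous_id.max continuous_const
  exact ContinuousAt.comp (f := fun s => max s t₀) (g := f) (hf _ (le_max_right t t₀)) h1.continuousAt

lemma wp_stay_above (f d : ℝ → ℝ) (t₀ r : ℝ)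
    (hf : ∀ t, t₀ ≤ t → HasDerivAt f (d t) t)
    (hcond : ∀ t, t₀ ≤ t → r < f t → 0 < d t)
    (h0 : r < f t₀) : ∀ t, t₀ ≤ t → r < f t := by
  intro T hT
  by_contra hc
  push_neg at hc
  set F : ℝ → ℝ := fun s => f (max s t₀) with hFdef
  have hFc : Continuous F := wp_cont_comp_max (fun t ht => (hf t ht).continuousAt)
  have hFeq : ∀ s, t₀ ≤ s → F s = f s := fun s hs => by simp [hFdef, max_eq_left hs]
  set S : Set ℝ := Icc t₀ T ∩ F ⁻¹' (Iic r) with hSdef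
  have hSc : IsClosed S := isClosed_Icc.inter (isClosed_Iic.preimage hFc)
  have hTS : T ∈ S := ⟨⟨hT, le_refl T⟩, by simpa [mem_preimage, hFeq T hT] using hc⟩
  have hbdd : BddBelow S := ⟨t₀, fun s hs => hs.1.1⟩
  obtain ⟨⟨hta, htb⟩, hFt⟩ := hSc.csInf_mem ⟨T, hTS⟩ hbdd
  simp only [mem_preimage, mem_Iic] at hFt
  have hfts : f (sInf S) ≤ r := by rwa [hFeq _ hta] at hFt
  have ht0lt : t₀ < sInf S := lt_of_le_of_ne hta (fun h => by rw [← h] at hfts; linarith)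
  have hmono : StrictMonoOn f (Icc t₀ (sInf S)) := by
    apply strictMonoOn_of_deriv_pos (convex_Icc _ _)
    · exact fun s hs => (hf s hs.1).continuousAt.continuousWithinAt
    · intro s hs
      rw [interior_Icc] at hs
      have hs1 : t₀ ≤ s := hs.1.le
      have hnotS : s ∉ S := fun hmem => (not_lt.mpr (csInf_le hbdd hmem)) hs.2
      have hrf : r < f s := by
        by_contra hle
        push_neg at hle
        exact hnotS ⟨⟨hs1, hs.2.le.trans htb⟩, by rwa [mem_preimage, mem_Iic, hFeq s hs1]⟩
      rw [(hf s hs1).deriv]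
      exact hcond s hs1 hrf
  have := hmono (left_mem_Icc.mpr ht0lt.le) (right_mem_Icc.mpr ht0lt.le) ht0lt
  linarith

lemma wp_stay_ge (f d : ℝ → ℝ) (t₀ r : ℝ)
    (hf : ∀ t, t₀ ≤ t → HasDerivAt f (d t) t)
    (hcond : ∀ t, t₀ ≤ t → f t < r → 0 < d t)
    (h0 : r ≤ f t₀) : ∀ t, t₀ ≤ t → r ≤ f t := by
  intro T hT
  by_contra hc
  push_neg at hc
  set F : ℝ → ℝ := fun s => f (max s t₀) with hFdef
  have hFc : Continuous F := wp_cont_comp_max (fun t ht => (hf t ht).continuousAt)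
  have hFeq : ∀ s, t₀ ≤ s → F s = f s := fun s hs => by simp [hFdef, max_eq_left hs]
  set S : Set ℝ := Icc t₀ T ∩ F ⁻¹' (Ici r) with hSdef
  have hSc : IsClosed S := isClosed_Icc.inter (isClosed_Ici.preimage hFc)
  have ht0S : t₀ ∈ S := ⟨⟨le_refl _, hT⟩, by simpa [mem_preimage, hFeq t₀ (le_refl t₀)] using h0⟩
  have hbdd : BddAbove S := ⟨T, fun s hs => hs.1.2⟩
  obtain ⟨⟨hta, htb⟩, hFt⟩ := hSc.csSup_mem ⟨t₀, ht0S⟩ hbdd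
  simp only [mem_preimage, mem_Ici] at hFt
  have hfts : r ≤ f (sSup S) := by rwa [hFeq _ hta] at hFt
  have htlt : sSup S < T := lt_of_le_of_ne htb (fun h => by rw [h] at hfts; linarith)
  have hmono : StrictMonoOn f (Icc (sSup S) T) := by
    apply strictMonoOn_of_deriv_pos (convex_Icc _ _)
    · exact fun s hs => (hf s (hta.trans hs.1)).continuousAt.continuousWithinAt
    · intro s hs
      rw [interior_Icc] at hs
      have hs1 : t₀ ≤ s := hta.trans hs.1.le
      have hnotS : s ∉ S := fun hmem => (not_lt.mpr (le_csSup hbdd hmem)) hs.1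
      have hrf : f s < r := by
        by_contra hle
        push_neg at hle
        exact hnotS ⟨⟨hs1, hs.2.le⟩, by rwa [mem_preimage, mem_Ici, hFeq s hs1]⟩
      rw [(hf s hs1).deriv]
      exact hcond s hs1 hrf
  have := hmono (left_mem_Icc.mpr htlt.le) (right_mem_Icc.mpr htlt.le) htlt
  linarith

lemma wp_growth (f d : ℝ → ℝ) (t₀ C : ℝ)
    (hf : ∀ t, t₀ ≤ t → HasDerivAt f (d t) t)
    (hC : ∀ t, t₀ ≤ t → C ≤ d t) :
    ∀ t, t₀ ≤ t → f t₀ + C * (t - t₀) ≤ f t := by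
  intro T hT
  have key : ∀ s, t₀ ≤ s → HasDerivAt (fun u => f u - C * u) (d s - C) s := by
    intro s hs
    simpa using (hf s hs).fun_sub ((hasDerivAt_id s).const_mul C)
  have h : MonotoneOn (fun s => f s - C * s) (Icc t₀ T) := by
    apply monotoneOn_of_deriv_nonneg (convex_Icc _ _)
    · exact fun s hs => (key s hs.1).continuousAt.continuousWithinAt
    · intro s hs
      rw [interior_Icc] at hs
      exact (key s hs.1.le).differentiableAt.differentiableWithinAt
    · intro s hs
      rw [interior_Icc] at hs
      rw [(key s hs.1.le).deriv]
      linarith [hC s hs.1.le]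
  have := h (left_mem_Icc.mpr hT) (right_mem_Icc.mpr hT) hT
  simp only at this
  linarith

lemma wp_ftc {g : ℝ → ℝ} (hg : Continuous g) (t : ℝ) :
    HasDerivAt (fun u => ∫ s in (0:ℝ)..u, g s) (g t) t :=
  intervalIntegral.integral_hasDerivAt_right (hg.intervalIntegrable _ _)
    (hg.stronglyMeasurableAtFilter _ _) hg.continuousAt

lemma wp_ypos (b k2 : ℝ) (hb : 0 < b) (hk2 : 0 < k2) (x y : ℝ → ℝ)
    (hxc : ∀ t : ℝ, 0 ≤ t → ContinuousAt x t)
    (hy : ∀ t : ℝ, 0 ≤ t → HasDerivAt y (b * y t * (1 - y t / (k2 + max 0 (x t)))) t)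
    (hy0 : 0 < y 0) : ∀ t : ℝ, 0 ≤ t → 0 < y t := by
  have hyc : ∀ t : ℝ, 0 ≤ t → ContinuousAt y t := fun t ht => (hy t ht).continuousAt
  set xt : ℝ → ℝ := fun t => x (max t 0) with hxtdef
  set yt : ℝ → ℝ := fun t => y (max t 0) with hytdef
  have hxtc : Continuous xt := wp_cont_comp_max hxc
  have hytc : Continuous yt := wp_cont_comp_max hyc
  set g : ℝ → ℝ := fun t => b * (1 - yt t / (k2 + max 0 (xt t))) with hgdef
  have hden : ∀ t : ℝ, k2 + max 0 (xt t) ≠ 0 := by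
    intro t
    have : 0 ≤ max 0 (xt t) := le_max_left _ _
    positivity
  have hgc : Continuous g :=
    continuous_const.mul (continuous_const.sub (hytc.div
      (continuous_const.add (continuous_const.max hxtc)) hden))
  set G : ℝ → ℝ := fun t => ∫ s in (0:ℝ)..t, g s with hGdef
  have hG : ∀ t : ℝ, HasDerivAt G (g t) t := fun t => wp_ftc hgc t
  set F : ℝ → ℝ := fun t => y t * Real.exp (-G t) with hFdef
  have hF : ∀ t : ℝ, 0 ≤ t → HasDerivAt F 0 t := by
    intro t ht
    have h1 : HasDerivAt (fun u => Real.exp (-G u)) (Real.exp (-G t) * (-g t)) t := by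
      simpa using ((hG t).neg).exp
    have h2 := (hy t ht).fun_mul h1
    refine h2.congr_deriv ?_
    have hmax : max t 0 = t := max_eq_left ht
    simp only [hgdef, hxtdef, hytdef, hmax]
    ring
  intro T hT
  have hconst := constant_of_has_deriv_right_zero (f := F) (a := 0) (b := T)
    (fun s hs => ((hyc s hs.1).mul (((hG s).neg.exp).continuousAt)).continuousWithinAt)
    (fun s hs => (hF s hs.1).hasDerivWithinAt)
  have hFT : F T = F 0 := hconst T ⟨hT, le_refl T⟩
  have hF0 : F 0 = y 0 := by
    simp [hFdef, hGdef, intervalIntegral.integral_same]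
  have hFTpos : 0 < F T := by rw [hFT, hF0]; exact hy0
  have hexp : 0 < Real.exp (-G T) := Real.exp_pos _
  by_contra hyT
  push_neg at hyT
  have hval : F T = y T * Real.exp (-G T) := rfl
  nlinarith [hFTpos, hexp, hval]

lemma wp_xpos (a k1 : ℝ) (ha : 0 < a) (hk1 : 0 < k1) (x y : ℝ → ℝ)
    (hyc : ∀ t : ℝ, 0 ≤ t → ContinuousAt y t)
    (hx : ∀ t : ℝ, 0 ≤ t →
      HasDerivAt x (x t * (1 - x t) - a * y t * max 0 (x t) / (k1 + max 0 (x t))) t)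
    (hx0 : 0 < x 0) : ∀ t : ℝ, 0 ≤ t → 0 < x t := by
  by_contra hc
  push_neg at hc
  obtain ⟨T, hT, hxT⟩ := hc
  have hxc : ∀ t : ℝ, 0 ≤ t → ContinuousAt x t := fun t ht => (hx t ht).continuousAt
  set xt : ℝ → ℝ := fun t => x (max t 0) with hxtdef
  set yt : ℝ → ℝ := fun t => y (max t 0) with hytdef
  have hxtc : Continuous xt := wp_cont_comp_max hxc
  have hytc : Continuous yt := wp_cont_comp_max hyc
  set h : ℝ → ℝ := fun t => (1 - xt t) - a * yt t / (k1 + max 0 (xt t)) with hhdef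
  have hden : ∀ t : ℝ, k1 + max 0 (xt t) ≠ 0 := by
    intro t
    have : 0 ≤ max 0 (xt t) := le_max_left _ _
    positivity
  have hhc : Continuous h :=
    (continuous_const.sub hxtc).sub ((continuous_const.mul hytc).div
      (continuous_const.add (continuous_const.max hxtc)) hden)
  set H : ℝ → ℝ := fun t => ∫ s in (0:ℝ)..t, h s with hHdef
  have hH : ∀ t : ℝ, HasDerivAt H (h t) t := fun t => wp_ftc hhc t
  set F : ℝ → ℝ := fun t => x t * Real.exp (-H t) with hFdef
  set S : Set ℝ := Icc 0 T ∩ xt ⁻¹' (Iic 0) with hSdef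
  have hSc : IsClosed S := isClosed_Icc.inter (isClosed_Iic.preimage hxtc)
  have hTS : T ∈ S := by
    refine ⟨⟨hT, le_refl T⟩, ?_⟩
    simp only [mem_preimage, mem_Iic, hxtdef]
    rwa [max_eq_left hT]
  have hbdd : BddBelow S := ⟨0, fun s hs => hs.1.1⟩
  obtain ⟨⟨hta, htb⟩, hxts⟩ := hSc.csInf_mem ⟨T, hTS⟩ hbdd
  simp only [mem_preimage, mem_Iic, hxtdef] at hxts
  rw [max_eq_left hta] at hxts
  set τ := sInf S with hτdef
  have hpos : ∀ s : ℝ, 0 ≤ s → s < τ → 0 < x s := by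
    intro s hs hsτ
    have hnotS : s ∉ S := fun hmem => absurd (csInf_le hbdd hmem) (not_le.mpr hsτ)
    by_contra hle
    push_neg at hle
    exact hnotS ⟨⟨hs, hsτ.le.trans htb⟩, by
      simp only [mem_preimage, mem_Iic, hxtdef]; rwa [max_eq_left hs]⟩
  have hF : ∀ s ∈ Ico (0:ℝ) τ, HasDerivWithinAt F 0 (Ici s) s := by
    intro s hs
    have hxs : 0 < x s := hpos s hs.1 hs.2
    have h1 : HasDerivAt (fun u => Real.exp (-H u)) (Real.exp (-H s) * (-h s)) s := by
      simpa using ((hH s).neg).exp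
    have h2 := (hx s hs.1).fun_mul h1
    have h3 : HasDerivAt F 0 s := by
      refine h2.congr_deriv ?_
      have hmax : max s 0 = s := max_eq_left hs.1
      have hmax2 : max 0 (x s) = x s := max_eq_right hxs.le
      simp only [hhdef, hxtdef, hytdef, hmax, hmax2]
      field_simp
      ring
    exact h3.hasDerivWithinAt
  have hconst := constant_of_has_deriv_right_zero (f := F) (a := 0) (b := τ)
    (fun s hs => ((hxc s hs.1).mul (((hH s).neg.exp).continuousAt)).continuousWithinAt) hF
  have hFτ : F τ = F 0 := hconst τ ⟨hta, le_refl τ⟩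
  have hF0 : F 0 = x 0 := by
    simp [hFdef, hHdef, intervalIntegral.integral_same]
  have hexp : 0 < Real.exp (-H τ) := Real.exp_pos _
  have hval : F τ = x τ * Real.exp (-H τ) := rfl
  have : F τ ≤ 0 := by nlinarith
  rw [hFτ, hF0] at this
  linarith

lemma wp_y_upper (b k2 K δ : ℝ) (hb : 0 < b) (hK : 0 < K) (hδ : 0 < δ)
    (x y : ℝ → ℝ) (T₀ : ℝ)
    (hx1 : ∀ t, T₀ ≤ t → 0 < k2 + x t)
    (hx2 : ∀ t, T₀ ≤ t → k2 + x t < K)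
    (hyp : ∀ t, T₀ ≤ t → 0 < y t)
    (hyd : ∀ t, T₀ ≤ t → HasDerivAt y (b * y t * (1 - y t / (k2 + x t))) t) :
    ∃ T₁, T₀ ≤ T₁ ∧ ∀ t, T₁ ≤ t → y t ≤ K + δ := by
  set e : ℝ → ℝ := fun t => b * y t * (1 - y t / (k2 + x t)) with hedef
  by_cases hcase : ∃ t₁, T₀ ≤ t₁ ∧ y t₁ ≤ K + δ
  · obtain ⟨t₁, ht₁, hyt₁⟩ := hcase
    refine ⟨t₁, ht₁, ?_⟩
    have hstay := wp_stay_ge (fun t => -y t) (fun t => -e t) t₁ (-(K + δ))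
      (fun t ht => (hyd t (ht₁.trans ht)).neg)
      (by
        intro t ht hlt
        have htT : T₀ ≤ t := ht₁.trans ht
        simp only [neg_lt_neg_iff] at hlt
        have h1 : 0 < k2 + x t := hx1 t htT
        have h2 : k2 + x t < K := hx2 t htT
        have hyt : 0 < y t := hyp t htT
        have h3 : 1 - y t / (k2 + x t) < 0 := by
          rw [sub_neg, lt_div_iff₀ h1]
          nlinarith
        have h4 : e t < 0 := mul_neg_of_pos_of_neg (by positivity) h3
        simpa using h4)
      (show -(K + δ) ≤ -y t₁ by linarith)
    intro t ht
    have := hstay t ht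
    linarith
  · push_neg at hcase
    exfalso
    set C := b * (K + δ) * (δ / K) with hCdef
    have hCpos : 0 < C := by positivity
    have hdecay : ∀ t, T₀ ≤ t → C ≤ -e t := by
      intro t ht
      have h1 := hx1 t ht
      have h2 := hx2 t ht
      have h3 := hcase t ht
      have hyt : 0 < y t := hyp t ht
      have h5 : y t / K ≤ y t / (k2 + x t) := by
        apply div_le_div_of_nonneg_left hyt.le h1 h2.le
      have h6 : (K + δ) / K ≤ y t / K := by gcongr
      have h7 : (K + δ) / K = 1 + δ / K := by field_simp
      have h4 : 1 - y t / (k2 + x t) ≤ -(δ / K) := by linarith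
      have h8 : e t ≤ b * y t * (-(δ / K)) :=
        mul_le_mul_of_nonneg_left h4 (by positivity)
      have h9 : b * (K + δ) * (δ / K) ≤ b * y t * (δ / K) := by
        have : 0 ≤ δ / K := by positivity
        nlinarith
      nlinarith
    have hgrow := wp_growth (fun t => -y t) (fun t => -e t) T₀ C
      (fun t ht => (hyd t ht).neg) hdecay
    obtain ⟨t₂, ht₂def⟩ : ∃ t₂, t₂ = T₀ + y T₀ / C + 1 := ⟨_, rfl⟩
    have hyT₀ : 0 < y T₀ := hyp T₀ le_rfl
    have ht₂ : T₀ ≤ t₂ := by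
      have : 0 < y T₀ / C := div_pos hyT₀ hCpos
      linarith
    have hg := hgrow t₂ ht₂
    have hy2 := hcase t₂ ht₂
    have hCt : C * (t₂ - T₀) = y T₀ + C := by
      rw [ht₂def]
      field_simp
      ring
    nlinarith

lemma wp_y_lower (b k2 η : ℝ) (hb : 0 < b) (hk2 : 0 < k2) (hη : 0 < η) (hηk2 : η < k2)
    (x y : ℝ → ℝ) (T₀ : ℝ)
    (hxpos : ∀ t, T₀ ≤ t → 0 < x t)
    (hyp : ∀ t, T₀ ≤ t → 0 < y t)
    (hyd : ∀ t, T₀ ≤ t → HasDerivAt y (b * y t * (1 - y t / (k2 + x t))) t) :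
    ∃ T₁, T₀ ≤ T₁ ∧ ∀ t, T₁ ≤ t → k2 - η ≤ y t := by
  set e : ℝ → ℝ := fun t => b * y t * (1 - y t / (k2 + x t)) with hedef
  have hepos : ∀ t, T₀ ≤ t → y t < k2 - η → 0 < e t := by
    intro t ht hlt
    have hx := hxpos t ht
    have hyt := hyp t ht
    have h1 : 0 < k2 + x t := by linarith
    have h2 : y t / (k2 + x t) < 1 := by
      rw [div_lt_one h1]
      linarith
    have h3 : 0 < 1 - y t / (k2 + x t) := by linarith
    positivity
  by_cases hcase : ∃ t₁, T₀ ≤ t₁ ∧ k2 - η ≤ y t₁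
  · obtain ⟨t₁, ht₁, hyt₁⟩ := hcase
    refine ⟨t₁, ht₁, ?_⟩
    exact wp_stay_ge y e t₁ (k2 - η)
      (fun t ht => hyd t (ht₁.trans ht))
      (fun t ht hlt => hepos t (ht₁.trans ht) hlt)
      hyt₁
  · push_neg at hcase
    exfalso
    have hylt : ∀ t, T₀ ≤ t → y t < k2 - η := hcase
    set y₀ := y T₀ with hy₀def
    have hy₀ : 0 < y₀ := hyp T₀ le_rfl
    have hyab : ∀ t, T₀ ≤ t → y₀ / 2 < y t := by
      apply wp_stay_above y e T₀ (y₀ / 2) (fun t ht => hyd t ht)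
      · intro t ht _
        exact hepos t ht (hylt t ht)
      · linarith
    set C := b * (y₀ / 2) * (η / k2) with hCdef
    have hCpos : 0 < C := by positivity
    have hegeC : ∀ t, T₀ ≤ t → C ≤ e t := by
      intro t ht
      have hx := hxpos t ht
      have hyt := hyp t ht
      have h1 : 0 < k2 + x t := by linarith
      have h2 : y t / (k2 + x t) ≤ y t / k2 := by
        apply div_le_div_of_nonneg_left hyt.le hk2
        linarith
      have h3 : y t / k2 ≤ (k2 - η) / k2 := by gcongr; exact (hylt t ht).le
      have h4 : (k2 - η) / k2 = 1 - η / k2 := by field_simp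
      have h5 : η / k2 ≤ 1 - y t / (k2 + x t) := by linarith
      have h6 : y₀ / 2 ≤ y t := (hyab t ht).le
      have h7 : 0 < η / k2 := by positivity
      calc C = b * (y₀ / 2) * (η / k2) := rfl
        _ ≤ b * y t * (η / k2) := by nlinarith
        _ ≤ b * y t * (1 - y t / (k2 + x t)) := by
            apply mul_le_mul_of_nonneg_left h5 (by positivity)
    have hgrow := wp_growth y e T₀ C (fun t ht => hyd t ht) hegeC
    obtain ⟨t₂, ht₂def⟩ : ∃ t₂, t₂ = T₀ + (k2 - y₀) / C + 1 := ⟨_, rfl⟩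
    have ht₂ : T₀ ≤ t₂ := by
      rcases le_or_gt y₀ k2 with h | h
      · have : 0 ≤ (k2 - y₀) / C := div_nonneg (by linarith) hCpos.le
        linarith
      · exfalso
        have := hylt T₀ le_rfl
        linarith
    have hg := hgrow t₂ ht₂
    have hCt : C * (t₂ - T₀) = k2 - y₀ + C := by
      rw [ht₂def]
      field_simp
      ring
    have := hylt t₂ ht₂
    nlinarith

end WpAux

open Set in
set_option maxHeartbeats 2000000 in
/-- When `m = 0`, `k₁ = a·k₂` and `1 − k₁ − a > 0`, every solution starting in the open
quadrant satisfies `limsup x ≥ 1 − k₁ − a`; in particular the system is uniformly weakly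
persistent. -/
theorem weak_persistence_boundary_case (a b k1 k2 m : ℝ)
    (ha : 0 < a) (hb : 0 < b) (hk1 : 0 < k1) (hk2 : 0 < k2)
    (hm : m = 0) (hcond1 : k1 = a * k2) (hcond2 : 0 < 1 - k1 - a)
    (x y : ℝ → ℝ)
    (hx : ∀ t : ℝ, 0 ≤ t → HasDerivAt x (preyRHS a k1 m (x t) (y t)) t)
    (hy : ∀ t : ℝ, 0 ≤ t → HasDerivAt y (predRHS b k2 m (x t) (y t)) t)
    (hx0 : 0 < x 0) (hy0 : 0 < y 0) :
    1 - k1 - a ≤ limsup x atTop := by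
  subst hm
  subst hcond1
  obtain ⟨c, hcdef⟩ : ∃ c : ℝ, c = 1 - a * k2 - a := ⟨_, rfl⟩
  have hcpos : 0 < c := by rw [hcdef]; exact hcond2
  have h1a : 0 < 1 - a := by rw [hcdef] at hcpos; nlinarith
  have hx' : ∀ t : ℝ, 0 ≤ t →
      HasDerivAt x (x t * (1 - x t) - a * y t * max 0 (x t) / (a * k2 + max 0 (x t))) t := by
    intro t ht
    simpa [preyRHS] using hx t ht
  have hy' : ∀ t : ℝ, 0 ≤ t →
      HasDerivAt y (b * y t * (1 - y t / (k2 + max 0 (x t)))) t := by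
    intro t ht
    simpa [predRHS] using hy t ht
  have hxp : ∀ t : ℝ, 0 ≤ t → 0 < x t :=
    wp_xpos a (a * k2) ha hk1 x y (fun t ht => (hy' t ht).continuousAt) hx' hx0
  have hyp : ∀ t : ℝ, 0 ≤ t → 0 < y t :=
    wp_ypos b k2 hb hk2 x y (fun t ht => (hx' t ht).continuousAt) hy' hy0
  have hmax : ∀ t : ℝ, 0 ≤ t → max 0 (x t) = x t := fun t ht => max_eq_right (hxp t ht).le
  obtain ⟨d, hdeq⟩ : ∃ d : ℝ → ℝ, ∀ t, d t = x t * (1 - x t) - a * y t * x t / (a * k2 + x t) :=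
    ⟨_, fun _ => rfl⟩
  obtain ⟨e, heeq⟩ : ∃ e : ℝ → ℝ, ∀ t, e t = b * y t * (1 - y t / (k2 + x t)) :=
    ⟨_, fun _ => rfl⟩
  have hxd : ∀ t : ℝ, 0 ≤ t → HasDerivAt x (d t) t := by
    intro t ht
    have h := hx' t ht
    rw [hmax t ht] at h
    rw [hdeq t]
    exact h
  have hyd : ∀ t : ℝ, 0 ≤ t → HasDerivAt y (e t) t := by
    intro t ht
    have h := hy' t ht
    rw [hmax t ht] at h
    rw [heeq t]
    exact h
  have hkx : ∀ t : ℝ, 0 ≤ t → 0 < a * k2 + x t := fun t ht => by nlinarith [hxp t ht]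
  obtain ⟨B, hBdef⟩ : ∃ B : ℝ, B = max (x 0) 1 := ⟨_, rfl⟩
  have hB1 : (1:ℝ) ≤ B := hBdef ▸ le_max_right _ _
  have hx0B : x 0 ≤ B := hBdef ▸ le_max_left _ _
  have hB : ∀ t : ℝ, 0 ≤ t → x t ≤ B := by
    intro t ht
    have hstay := wp_stay_ge (fun s => -x s) (fun s => -d s) 0 (-B)
      (fun s hs => (hxd s hs).neg)
      (by
        intro s hs hlt
        simp only [neg_lt_neg_iff] at hlt
        have h1 : 1 < x s := lt_of_le_of_lt hB1 hlt
        have h2 : 0 < x s := by linarith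
        have h3 : x s * (1 - x s) < 0 := mul_neg_of_pos_of_neg h2 (by linarith)
        have h4 : 0 < a * y s * x s / (a * k2 + x s) := by
          have hy4 := hyp s hs
          have hk4 := hkx s hs
          positivity
        have h5 : d s < 0 := by
          have hds := hdeq s
          linarith
        simpa using neg_pos.mpr h5)
      (show -B ≤ -x 0 by linarith)
    have := hstay t ht
    simp only [neg_le_neg_iff] at this
    linarith [this]
  have hbound : atTop.IsBoundedUnder (· ≤ ·) x := by
    apply isBoundedUnder_of_eventually_le (a := B)
    filter_upwards [eventually_ge_atTop (0:ℝ)] with t ht using hB t ht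
  have hboundlow : atTop.IsBoundedUnder (· ≥ ·) x := by
    apply isBoundedUnder_of_eventually_ge (a := (0:ℝ))
    filter_upwards [eventually_ge_atTop (0:ℝ)] with t ht using (hxp t ht).le
  have hcob : atTop.IsCoboundedUnder (· ≤ ·) x := hboundlow.isCoboundedUnder_le
  obtain ⟨L, hLdef⟩ : ∃ L : ℝ, L = limsup x atTop := ⟨_, rfl⟩
  have hL0 : 0 ≤ L := by
    rw [hLdef]
    apply le_limsup_of_frequently_le _ hbound
    apply Eventually.frequently
    filter_upwards [eventually_ge_atTop (0:ℝ)] with t ht using (hxp t ht).le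
  have hLB : L ≤ B := by
    rw [hLdef]
    apply limsup_le_of_le hcob
    filter_upwards [eventually_ge_atTop (0:ℝ)] with t ht using hB t ht
  by_contra hcon
  push_neg at hcon
  have hLc : L < c := by rw [hLdef, hcdef]; exact hcon
  -- Phase 2 : L = 0
  have hLzero : L = 0 := by
    rcases eq_or_lt_of_le hL0 with h | hLpos
    · exact h.symm
    exfalso
    obtain ⟨κ, hκdef⟩ : ∃ κ : ℝ, κ = L * (c - L) / 2 := ⟨_, rfl⟩
    have hκ : 0 < κ := by
      have h' : 0 < L * (c - L) := mul_pos hLpos (by linarith)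
      rw [hκdef]; linarith
    have hk1B : 0 < a * k2 + B := by nlinarith
    obtain ⟨μ, hμdef⟩ : ∃ μ : ℝ, μ = L / 2 * κ / (a * k2 + B) := ⟨_, rfl⟩
    have hμ : 0 < μ := by
      rw [hμdef]; exact div_pos (mul_pos (by linarith) hκ) hk1B
    have hden2 : 0 < 1 + a * k2 + 2 * B + 2 * a := by nlinarith
    obtain ⟨ε, hεdef⟩ : ∃ ε : ℝ, ε = min (L / 2) (min (κ / (1 + a * k2 + 2 * B + 2 * a)) (μ / 2)) :=
      ⟨_, rfl⟩
    have hε : 0 < ε := by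
      rw [hεdef]
      exact lt_min (by linarith) (lt_min (div_pos hκ hden2) (by linarith))
    have hεL : ε ≤ L / 2 := hεdef ▸ min_le_left _ _
    have hεκ : ε * (1 + a * k2 + 2 * B + 2 * a) ≤ κ := by
      calc ε * (1 + a * k2 + 2 * B + 2 * a)
          ≤ κ / (1 + a * k2 + 2 * B + 2 * a) * (1 + a * k2 + 2 * B + 2 * a) := by
            apply mul_le_mul_of_nonneg_right _ hden2.le
            rw [hεdef]
            exact (min_le_right _ _).trans (min_le_left _ _)
        _ = κ := by field_simp
    have hεμ : ε ≤ μ / 2 := hεdef ▸ (min_le_right _ _).trans (min_le_right _ _)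
    have hev1 : ∀ᶠ t in atTop, x t < L + ε :=
      eventually_lt_of_limsup_lt (by rw [← hLdef]; linarith) hbound
    obtain ⟨T₀', hT₀'⟩ := eventually_atTop.mp (hev1.and (eventually_ge_atTop (0:ℝ)))
    obtain ⟨T₀, hT₀def⟩ : ∃ T₀, T₀ = max T₀' 0 := ⟨_, rfl⟩
    have hT₀0 : (0:ℝ) ≤ T₀ := by rw [hT₀def]; exact le_max_right _ _
    have hxup : ∀ t, T₀ ≤ t → x t < L + ε := by
      intro t ht
      exact (hT₀' t ((hT₀def ▸ le_max_left _ _ : T₀' ≤ T₀).trans ht)).1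
    have ht0 : ∀ t : ℝ, T₀ ≤ t → 0 ≤ t := fun t ht => hT₀0.trans ht
    have hKpos : 0 < k2 + L + ε := by linarith
    obtain ⟨T₁, hT₁T₀, hyup⟩ := wp_y_upper b k2 (k2 + L + ε) ε hb hKpos hε x y T₀
      (fun t ht => by linarith [hxp t (ht0 t ht)])
      (fun t ht => by linarith [hxup t ht])
      (fun t ht => hyp t (ht0 t ht))
      (fun t ht => by rw [← heeq t]; exact hyd t (ht0 t ht))
    have hT₁0 : (0:ℝ) ≤ T₁ := hT₀0.trans hT₁T₀
    have hfreq : ∃ t, T₁ ≤ t ∧ L - ε < x t ∧ d t ≤ ε := by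
      by_contra hno
      push_neg at hno
      have hfr : ∃ᶠ t in atTop, L - ε < x t :=
        frequently_lt_of_lt_limsup hcob (by rw [← hLdef]; linarith)
      obtain ⟨t₀, ht₀x, ht₀T₁⟩ := (hfr.and_eventually (eventually_ge_atTop T₁)).exists
      have ht₀0 : (0:ℝ) ≤ t₀ := hT₁0.trans ht₀T₁
      have hstay := wp_stay_above x d t₀ (L - ε)
        (fun t ht => hxd t (ht₀0.trans ht))
        (fun t ht hlt => by linarith [hno t (ht₀T₁.trans ht) hlt])
        ht₀x
      have hdge : ∀ t, t₀ ≤ t → ε ≤ d t := fun t ht =>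
        (hno t (ht₀T₁.trans ht) (hstay t ht)).le
      have hgrow := wp_growth x d t₀ ε (fun t ht => hxd t (ht₀0.trans ht)) hdge
      obtain ⟨t₂, ht₂def⟩ : ∃ t₂, t₂ = t₀ + (B - x t₀) / ε + 1 := ⟨_, rfl⟩
      have hBx : 0 ≤ (B - x t₀) / ε := div_nonneg (by linarith [hB t₀ ht₀0]) hε.le
      have ht₂ : t₀ ≤ t₂ := by rw [ht₂def]; linarith
      have hg := hgrow t₂ ht₂
      have h2 : ε * (t₂ - t₀) = B - x t₀ + ε := by
        rw [ht₂def]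
        field_simp
        ring
      have h3 := hB t₂ (ht₀0.trans ht₂)
      linarith
    obtain ⟨t, htT₁, hxLε, hdle⟩ := hfreq
    have ht0' : (0:ℝ) ≤ t := hT₁0.trans htT₁
    have hu0 : 0 < x t := hxp t ht0'
    have huB : x t ≤ B := hB t ht0'
    have huLε : x t < L + ε := hxup t (hT₁T₀.trans htT₁)
    have hyt : y t ≤ k2 + L + ε + ε := hyup t htT₁
    have hkxu : 0 < a * k2 + x t := hkx t ht0'
    have hyt0 : 0 < y t := hyp t ht0'
    have h1 : x t * (1 - x t) - ε ≤ a * y t * x t / (a * k2 + x t) := by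
      have hdt := hdeq t
      linarith [hdle]
    have h2 : (x t * (1 - x t) - ε) * (a * k2 + x t) ≤ a * y t * x t :=
      (le_div_iff₀ hkxu).mp h1
    have h3 : a * y t * x t ≤ a * (k2 + L + 2 * ε) * x t := by
      have h := mul_le_mul_of_nonneg_right (show y t ≤ k2 + L + 2 * ε by linarith)
        (mul_nonneg ha.le hu0.le)
      nlinarith [h]
    have hκexp : 2 * κ = L - a * k2 * L - a * L - L * L := by
      rw [hκdef, hcdef]; ring
    have hp1 : 0 ≤ (ε - (x t - L)) * ((1 + a * k2 + 2 * B) - (1 - a * k2 - x t - L)) :=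
      mul_nonneg (by linarith) (by linarith)
    have hp2 : 0 ≤ (ε + (x t - L)) * ((1 + a * k2 + 2 * B) + (1 - a * k2 - x t - L)) :=
      mul_nonneg (by linarith) (by linarith)
    have hφκ : κ ≤ (1 - x t) * (a * k2 + x t) - a * k2 - a * L - 2 * a * ε := by
      linarith [hp1, hp2, hεκ, hκexp]
    have huL2 : L / 2 ≤ x t := by linarith
    have h4 : L / 2 * κ ≤ x t * ((1 - x t) * (a * k2 + x t) - a * k2 - a * L - 2 * a * ε) :=
      mul_le_mul huL2 hφκ hκ.le hu0.le
    have h5 : x t * ((1 - x t) * (a * k2 + x t) - a * k2 - a * L - 2 * a * ε)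
        ≤ ε * (a * k2 + x t) := by linarith [h2, h3]
    have h6 : μ * (a * k2 + B) = L / 2 * κ := by
      rw [hμdef]
      field_simp
    have h7 : ε * (a * k2 + x t) ≤ μ / 2 * (a * k2 + B) := by
      have := mul_le_mul hεμ (show a * k2 + x t ≤ a * k2 + B by linarith) hkxu.le (by linarith)
      linarith
    linarith [h4, h5, h6, h7, mul_pos hμ hk1B]
  -- Phase 3
  obtain ⟨η, hηdef⟩ : ∃ η : ℝ, η = min 1 (min (k2 / 2) (k2 * c / (a * k2 + k2 + 2))) := ⟨_, rfl⟩
  have hdenη : 0 < a * k2 + k2 + 2 := by nlinarith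
  have hη : 0 < η := by
    rw [hηdef]
    exact lt_min one_pos (lt_min (by linarith) (div_pos (mul_pos hk2 hcpos) hdenη))
  have hη1 : η ≤ 1 := hηdef ▸ min_le_left _ _
  have hηhalf : η ≤ k2 / 2 := hηdef ▸ (min_le_right _ _).trans (min_le_left _ _)
  have hηc : η * (a * k2 + k2 + 2) ≤ k2 * c := by
    calc η * (a * k2 + k2 + 2) ≤ k2 * c / (a * k2 + k2 + 2) * (a * k2 + k2 + 2) := by
          apply mul_le_mul_of_nonneg_right _ hdenη.le
          rw [hηdef]
          exact (min_le_right _ _).trans (min_le_right _ _)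
      _ = k2 * c := by field_simp
  have hev2 : ∀ᶠ t in atTop, x t < η :=
    eventually_lt_of_limsup_lt (by rw [← hLdef, hLzero]; exact hη) hbound
  obtain ⟨T₂', hT₂'⟩ := eventually_atTop.mp (hev2.and (eventually_ge_atTop (0:ℝ)))
  obtain ⟨T₂, hT₂def⟩ : ∃ T₂, T₂ = max T₂' 0 := ⟨_, rfl⟩
  have hT₂0 : (0:ℝ) ≤ T₂ := by rw [hT₂def]; exact le_max_right _ _
  have hxupη : ∀ t, T₂ ≤ t → x t < η := by
    intro t ht
    exact (hT₂' t ((hT₂def ▸ le_max_left _ _ : T₂' ≤ T₂).trans ht)).1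
  have ht20 : ∀ t : ℝ, T₂ ≤ t → 0 ≤ t := fun t ht => hT₂0.trans ht
  obtain ⟨T₃, hT₃T₂, hylow⟩ := wp_y_lower b k2 η hb hk2 hη (by linarith) x y T₂
    (fun t ht => hxp t (ht20 t ht))
    (fun t ht => hyp t (ht20 t ht))
    (fun t ht => by rw [← heeq t]; exact hyd t (ht20 t ht))
  have hT₃0 : (0:ℝ) ≤ T₃ := hT₂0.trans hT₃T₂
  obtain ⟨W, hWeq⟩ : ∃ W : ℝ → ℝ, ∀ s, W s = Real.log (x s) - 1 / b * Real.log (y s) :=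
    ⟨_, fun _ => rfl⟩
  obtain ⟨dW, hdWeq⟩ : ∃ dW : ℝ → ℝ, ∀ s, dW s = d s / x s - 1 / b * (e s / y s) :=
    ⟨_, fun _ => rfl⟩
  have hWd : ∀ s, T₃ ≤ s → HasDerivAt W (dW s) s := by
    intro s hs
    have h0s : (0:ℝ) ≤ s := hT₃0.trans hs
    have hfun : W = fun s => Real.log (x s) - 1 / b * Real.log (y s) := funext hWeq
    rw [hdWeq s, hfun]
    exact HasDerivAt.sub ((hxd s h0s).log (hxp s h0s).ne')
      (((hyd s h0s).log (hyp s h0s).ne').const_mul (1 / b))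
  have hdW0 : ∀ s, T₃ ≤ s → 0 ≤ dW s := by
    intro s hs
    have h0s : (0:ℝ) ≤ s := hT₃0.trans hs
    have hu : 0 < x s := hxp s h0s
    have huη : x s < η := hxupη s (hT₃T₂.trans hs)
    have hv : 0 < y s := hyp s h0s
    have hvlow : k2 - η ≤ y s := hylow s hs
    have hkey : (a * k2 + x s) * (k2 + x s) ≤ (1 - a) * y s := by
      have hc2 : k2 * c = k2 - a * k2 * k2 - a * k2 := by rw [hcdef]; ring
      have step1 : (a * k2 + x s) * (k2 + x s) ≤ (a * k2 + η) * (k2 + η) := by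
        have hp : 0 ≤ (η - x s) * (a * k2 + k2 + η + x s) :=
          mul_nonneg (by linarith) (by linarith)
        linarith [hp]
      have step2 : (a * k2 + η) * (k2 + η) ≤ (1 - a) * (k2 - η) := by
        have hp1 : 0 ≤ η * (1 - η) := mul_nonneg hη.le (by linarith)
        have hp2 : 0 ≤ a * η := mul_nonneg ha.le hη.le
        linarith [hηc, hc2, hp1, hp2]
      have step3 : (1 - a) * (k2 - η) ≤ (1 - a) * y s :=
        mul_le_mul_of_nonneg_left hvlow h1a.le
      linarith
    have hden1 : 0 < a * k2 + x s := hkx s h0s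
    have hdenk2 : 0 < k2 + x s := by linarith
    have hid : dW s = x s * ((1 - a) * y s - (a * k2 + x s) * (k2 + x s))
        / ((a * k2 + x s) * (k2 + x s)) := by
      rw [hdWeq s, hdeq s, heeq s]
      field_simp
      ring
    rw [hid]
    apply div_nonneg _ (by positivity)
    apply mul_nonneg hu.le
    linarith
  have hWmono := wp_growth W dW T₃ 0 hWd hdW0
  have hk2η : 0 < k2 - η := by linarith
  obtain ⟨ρ, hρdef⟩ : ∃ ρ, ρ = Real.exp (W T₃ + 1 / b * Real.log (k2 - η)) := ⟨_, rfl⟩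
  have hρ : 0 < ρ := hρdef ▸ Real.exp_pos _
  have hxρ : ∀ t, T₃ ≤ t → ρ ≤ x t := by
    intro t ht
    have h0t : (0:ℝ) ≤ t := hT₃0.trans ht
    have h1 : Real.log (k2 - η) ≤ Real.log (y t) := Real.log_le_log hk2η (hylow t ht)
    have h2 := hWmono t ht
    have hbpos : (0:ℝ) ≤ 1 / b := by positivity
    have h3 : W T₃ + 1 / b * Real.log (k2 - η) ≤ Real.log (x t) := by
      have hWt := hWeq t
      have h4 := mul_le_mul_of_nonneg_left h1 hbpos
      linarith [h2, h4]
    calc ρ = Real.exp (W T₃ + 1 / b * Real.log (k2 - η)) := hρdef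
      _ ≤ Real.exp (Real.log (x t)) := Real.exp_le_exp.mpr h3
      _ = x t := Real.exp_log (hxp t h0t)
  have hev3 : ∀ᶠ t in atTop, x t < ρ :=
    eventually_lt_of_limsup_lt (by rw [← hLdef, hLzero]; exact hρ) hbound
  obtain ⟨t, htρ, htT₃⟩ := (hev3.and (eventually_ge_atTop T₃)).exists
  exact absurd (hxρ t htT₃) (not_le.mpr htρ)
end

section
/- Assume m = 0 and either 4·a·k₂ > (1 − k₁ − a)² + 4·k₁, or (a·k₂ ≥ k₁ and 1 − k₁ − a ≤ 0). Then the point E₂ = (0, k₂) is globally attracting on the open quadrant: every solution (x,y) of the system (S) on [0,∞) with x(0) > 0 and y(0) > 0 satisfies lim_{t→∞} x(t) = 0 and lim_{t→∞} y(t) = k₂, so the prey becomes extinct asymptotically. -/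
open Filter Topology

section helpers
open Set
set_option maxHeartbeats 1000000

/-- Monotonicity from pointwise derivatives. -/
lemma mono_aux {f g : ℝ → ℝ} {A B : ℝ} (hAB : A ≤ B)
    (hd : ∀ t ∈ Set.Icc A B, HasDerivAt f (g t) t)
    (hg : ∀ t ∈ Set.Icc A B, 0 ≤ g t) : f A ≤ f B := by
  have hcont : ContinuousOn f (Set.Icc A B) := fun t ht =>
    (hd t ht).continuousAt.continuousWithinAt
  have hdiff : DifferentiableOn ℝ f (interior (Set.Icc A B)) := by
    rw [interior_Icc]
    exact fun t ht => ((hd t (Ioo_subset_Icc_self ht)).differentiableAt).differentiableWithinAt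
  have hder : ∀ t ∈ interior (Set.Icc A B), 0 ≤ deriv f t := by
    rw [interior_Icc]
    intro t ht
    rw [(hd t (Ioo_subset_Icc_self ht)).deriv]
    exact hg t (Ioo_subset_Icc_self ht)
  exact monotoneOn_of_deriv_nonneg (convex_Icc A B) hcont hdiff hder
    (left_mem_Icc.2 hAB) (right_mem_Icc.2 hAB) hAB

/-- Barrier lemma: if `h T ≥ 0` and the derivative is strictly positive whenever `h = 0`,
then `h` stays nonnegative. -/
lemma barrier {h g : ℝ → ℝ} {T : ℝ}
    (hd : ∀ t, T ≤ t → HasDerivAt h (g t) t)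
    (h0 : 0 ≤ h T)
    (hg : ∀ t, T ≤ t → h t = 0 → 0 < g t) :
    ∀ t, T ≤ t → 0 ≤ h t := by
  by_contra hcon
  push_neg at hcon
  obtain ⟨t', ht'T, ht'⟩ := hcon
  set S : Set ℝ := {t | T ≤ t ∧ h t < 0} with hS
  have hne : S.Nonempty := ⟨t', ht'T, ht'⟩
  have hbdd : BddBelow S := ⟨T, fun s hs => hs.1⟩
  set t₁ := sInf S with ht₁def
  have ht₁T : T ≤ t₁ := le_csInf hne (fun s hs => hs.1)
  have hle : ∀ s ∈ S, t₁ ≤ s := fun s hs => csInf_le hbdd hs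
  have hnonneg : ∀ t, T ≤ t → t < t₁ → 0 ≤ h t := by
    intro t htT htlt
    by_contra hneg
    exact absurd (hle t ⟨htT, lt_of_not_ge hneg⟩) (not_le.2 htlt)
  have hcontt₁ : ContinuousAt h t₁ := (hd t₁ ht₁T).continuousAt
  -- h t₁ ≤ 0
  have ht₁le : h t₁ ≤ 0 := by
    by_contra hpos
    push_neg at hpos
    obtain ⟨δ, hδ, hball⟩ := Metric.continuousAt_iff.1 hcontt₁ (h t₁) hpos
    have : t₁ + δ/2 ≤ t₁ := by
      apply le_csInf hne
      intro s hs
      by_contra hs'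
      push_neg at hs'
      have h1 : t₁ ≤ s := hle s hs
      have : dist s t₁ < δ := by
        rw [Real.dist_eq, abs_of_nonneg (by linarith)]
        linarith
      have := hball this
      rw [Real.dist_eq] at this
      have := abs_lt.1 this
      have : 0 < h s := by linarith
      linarith [hs.2]
    linarith
  -- h t₁ = 0
  have ht₁eq : h t₁ = 0 := by
    rcases eq_or_lt_of_le ht₁le with h' | h'
    · exact h'
    · exfalso
      have ht₁gt : T < t₁ := by
        rcases eq_or_lt_of_le ht₁T with h'' | h''
        · exfalso; rw [← h''] at h'; linarith
        · exact h''
      obtain ⟨δ, hδ, hball⟩ := Metric.continuousAt_iff.1 hcontt₁ (-(h t₁)) (by linarith)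
      set s := max T (t₁ - δ/2) with hs
      have hsT : T ≤ s := le_max_left _ _
      have hslt : s < t₁ := by
        apply max_lt ht₁gt
        linarith
      have hdist : dist s t₁ < δ := by
        rw [Real.dist_eq, abs_of_nonpos (by linarith)]
        have : t₁ - δ/2 ≤ s := le_max_right _ _
        linarith
      have := hball hdist
      rw [Real.dist_eq] at this
      have habs := abs_lt.1 this
      have : h s < 0 := by linarith
      linarith [hnonneg s hsT hslt]
  have hgpos := hg t₁ ht₁T ht₁eq
  -- slope argument: points of S just right of t₁ give negative slope
  have hslope := hasDerivAt_iff_tendsto_slope.1 (hd t₁ ht₁T)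
  have hev : ∀ᶠ s in 𝓝[≠] t₁, 0 < slope h t₁ s :=
    hslope.eventually (eventually_gt_nhds hgpos)
  rw [eventually_nhdsWithin_iff] at hev
  obtain ⟨δ, hδ, hball⟩ := Metric.eventually_nhds_iff.1 hev
  obtain ⟨s, hsS, hslt⟩ := exists_lt_of_csInf_lt hne (show sInf S < t₁ + δ by linarith)
  have hst₁ : t₁ ≤ s := hle s hsS
  have hsne : s ≠ t₁ := by
    intro h'
    rw [h'] at hsS
    linarith [hsS.2, ht₁eq.ge]
  have hdist : dist s t₁ < δ := by
    rw [Real.dist_eq, abs_of_nonneg (by linarith)]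
    linarith
  have hsl := hball hdist hsne
  rw [slope_def_field] at hsl
  have hsgt : t₁ < s := lt_of_le_of_ne hst₁ (Ne.symm hsne)
  rw [ht₁eq] at hsl
  have : 0 < h s := by
    have h2 : 0 < s - t₁ := by linarith
    have := mul_pos hsl h2
    rw [div_mul_cancel₀] at this
    · linarith
    · linarith
  linarith [hsS.2]

/-- Linear growth from a derivative lower bound. -/
lemma linear_growth {f g : ℝ → ℝ} {T δ : ℝ}
    (hd : ∀ t, T ≤ t → HasDerivAt f (g t) t)
    (hg : ∀ t, T ≤ t → δ ≤ g t) :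
    ∀ t, T ≤ t → f T + δ * (t - T) ≤ f t := by
  intro t ht
  have := mono_aux (f := fun s => f s - δ * s) (g := fun s => g s - δ) ht
    (fun s hs => by
      have h := (hd s hs.1).sub ((hasDerivAt_id s).const_mul δ); rw [mul_one] at h; exact h)
    (fun s hs => sub_nonneg.2 (hg s hs.1))
  linarith

lemma tendsto_of_monoOn {f : ℝ → ℝ} {T C : ℝ}
    (hmono : ∀ s t, T ≤ s → s ≤ t → f s ≤ f t)
    (hbdd : ∀ t, T ≤ t → f t ≤ C) :
    ∃ L, Tendsto f atTop (𝓝 L) ∧ (∀ t, T ≤ t → f t ≤ L) ∧ L ≤ C := by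
  set g : ℝ → ℝ := fun s => f (max T s) with hg
  have hgmono : Monotone g := by
    intro s t hst
    exact hmono _ _ (le_max_left _ _) (max_le_max le_rfl hst)
  have hgbdd : BddAbove (Set.range g) := ⟨C, by rintro _ ⟨s, rfl⟩; exact hbdd _ (le_max_left _ _)⟩
  have htend : Tendsto g atTop (𝓝 (⨆ s, g s)) := tendsto_atTop_ciSup hgmono hgbdd
  refine ⟨⨆ s, g s, ?_, ?_, ?_⟩
  · apply htend.congr'
    filter_upwards [eventually_ge_atTop T] with t ht
    simp [hg, max_eq_right ht]
  · intro t ht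
    have : g t ≤ ⨆ s, g s := le_ciSup hgbdd t
    simpa [hg, max_eq_right ht] using this
  · exact ciSup_le fun s => hbdd _ (le_max_left _ _)

lemma tendsto_of_antiOn {f : ℝ → ℝ} {T C : ℝ}
    (hanti : ∀ s t, T ≤ s → s ≤ t → f t ≤ f s)
    (hbdd : ∀ t, T ≤ t → C ≤ f t) :
    ∃ L, Tendsto f atTop (𝓝 L) ∧ (∀ t, T ≤ t → L ≤ f t) ∧ C ≤ L := by
  obtain ⟨L, h1, h2, h3⟩ := tendsto_of_monoOn (f := fun t => -f t) (T := T) (C := -C)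
    (fun s t hs hst => neg_le_neg (hanti s t hs hst)) (fun t ht => neg_le_neg (hbdd t ht))
  refine ⟨-L, ?_, fun t ht => by linarith [h2 t ht], by linarith⟩
  have := h1.neg
  simpa using this

lemma deriv_lim_not_pos {f g : ℝ → ℝ} {T L c : ℝ}
    (hd : ∀ t, T ≤ t → HasDerivAt f (g t) t)
    (hf : Tendsto f atTop (𝓝 L))
    (hgc : Tendsto g atTop (𝓝 c)) : ¬ (0 < c) := by
  intro hc
  have hev : ∀ᶠ t in atTop, c/2 ≤ g t := hgc.eventually (eventually_ge_nhds (by linarith))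
  have hev2 : ∀ᶠ t in atTop, f t ≤ L + 1 := hf.eventually (eventually_le_nhds (by linarith))
  obtain ⟨T₁, hT₁⟩ := ((hev.and hev2).and (eventually_ge_atTop T)).exists_forall_of_atTop
  have hlin : ∀ t, T₁ ≤ t → f T₁ + (c/2) * (t - T₁) ≤ f t :=
    linear_growth (fun s hs => hd s (hT₁ s hs).2) (fun s hs => (hT₁ s hs).1.1)
  set t := max T₁ (T₁ + (L + 1 - f T₁) * (2/c)) + 1 with htdef
  have hm1 : T₁ ≤ max T₁ (T₁ + (L + 1 - f T₁) * (2/c)) := le_max_left _ _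
  have hm2 : T₁ + (L + 1 - f T₁) * (2/c) ≤ max T₁ (T₁ + (L + 1 - f T₁) * (2/c)) := le_max_right _ _
  have htge : T₁ ≤ t := by rw [htdef]; linarith
  have h1 := hlin t htge
  have h2 := (hT₁ t htge).1.2
  have h3 : T₁ + (L + 1 - f T₁) * (2/c) + 1 ≤ t := by rw [htdef]; linarith
  have hc' : (0:ℝ) < 2/c := by positivity
  have h4 : c/2 * (t - T₁) ≥ c/2 * ((L + 1 - f T₁) * (2/c) + 1) :=
    mul_le_mul_of_nonneg_left (by linarith) (by linarith)
  have h5 : c/2 * ((L + 1 - f T₁) * (2/c) + 1) = (L + 1 - f T₁) + c/2 := by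
    field_simp
  nlinarith

/-- If a function converges and its derivative converges, the derivative limit is `0`. -/
lemma deriv_lim_zero {f g : ℝ → ℝ} {T L c : ℝ}
    (hd : ∀ t, T ≤ t → HasDerivAt f (g t) t)
    (hf : Tendsto f atTop (𝓝 L))
    (hgc : Tendsto g atTop (𝓝 c)) : c = 0 := by
  have h1 := deriv_lim_not_pos hd hf hgc
  have h2 := deriv_lim_not_pos (f := fun t => -f t) (g := fun t => -g t) (c := -c)
    (fun t ht => (hd t ht).neg) hf.neg hgc.neg
  push_neg at h1 h2
  have h2' : 0 ≤ c := by simpa using h2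
  linarith

/-- Asymptotically autonomous logistic equation: `y → K∞`. -/
lemma logistic_limit {y K : ℝ → ℝ} {b k Kb Kinf : ℝ} (hb : 0 < b)
    (hk : 0 < k) (hKlo : ∀ t, 0 ≤ t → k ≤ K t) (hKhi : ∀ t, 0 ≤ t → K t ≤ Kb)
    (hy0 : ∀ t, 0 ≤ t → 0 < y t)
    (hyd : ∀ t, 0 ≤ t → HasDerivAt y (b * y t * (1 - y t / K t)) t)
    (hK : Tendsto K atTop (𝓝 Kinf)) (hKinf : 0 < Kinf) :
    Tendsto y atTop (𝓝 Kinf) := by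
  have hKb : 0 < Kb := lt_of_lt_of_le hk (le_trans (hKlo 0 le_rfl) (hKhi 0 le_rfl))
  rw [Metric.tendsto_atTop]
  intro ε hε
  set e := min (ε/2) (Kinf/2) with hedef
  have he : 0 < e := lt_min (by linarith) (by linarith)
  have heε : e < ε := lt_of_le_of_lt (min_le_left _ _) (by linarith)
  have heK : e ≤ Kinf/2 := min_le_right _ _
  -- T₀ : time after which K is within e/2 of Kinf
  have hevK : ∀ᶠ t in atTop, |K t - Kinf| < e/2 := by
    have := hK.eventually (Metric.ball_mem_nhds Kinf (by linarith : (0:ℝ) < e/2))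
    simpa [Real.dist_eq] using this
  obtain ⟨T₀, hT₀⟩ := (hevK.and (eventually_ge_atTop (0:ℝ))).exists_forall_of_atTop
  have hT₀0 : (0:ℝ) ≤ T₀ := (hT₀ T₀ le_rfl).2
  -- derivative estimate above the band
  set δ := b * (Kinf + e) * (e/2) / Kb with hδdef
  have hδ : 0 < δ := by positivity
  have hupper : ∀ t, T₀ ≤ t → Kinf + e ≤ y t →
      b * y t * (1 - y t / K t) ≤ -δ := by
    intro t ht hyt
    have h0t : (0:ℝ) ≤ t := le_trans hT₀0 ht
    have hKt : 0 < K t := lt_of_lt_of_le hk (hKlo t h0t)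
    have hKt2 : K t ≤ Kb := hKhi t h0t
    have hKband := abs_lt.1 (hT₀ t ht).1
    have hyK : K t - y t ≤ -(e/2) := by linarith [hKband.2]
    have hy : 0 < y t := by linarith
    rw [show 1 - y t / K t = (K t - y t) / K t by field_simp]
    rw [show b * y t * ((K t - y t) / K t) = b * y t * (K t - y t) / K t by ring]
    rw [div_le_iff₀ hKt]
    have ha1 : b * y t * (K t - y t) ≤ b * y t * (-(e/2)) :=
      mul_le_mul_of_nonneg_left hyK (by positivity)
    have ha0 : b * (Kinf + e) ≤ b * y t := mul_le_mul_of_nonneg_left hyt hb.le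
    have ha2 : b * y t * (-(e/2)) ≤ b * (Kinf + e) * (-(e/2)) := by nlinarith
    have h2 : -δ * Kb ≤ -δ * K t := by nlinarith
    have h3 : -δ * Kb = -(b * (Kinf + e) * (e/2)) := by
      rw [hδdef]; field_simp
    linarith
  -- derivative estimate below the band
  set ρ := b * (e/2) / Kb with hρdef
  have hρ : 0 < ρ := by positivity
  have hlower : ∀ t, T₀ ≤ t → y t ≤ Kinf - e →
      ρ * y t ≤ b * y t * (1 - y t / K t) := by
    intro t ht hyt
    have h0t : (0:ℝ) ≤ t := le_trans hT₀0 ht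
    have hKt : 0 < K t := lt_of_lt_of_le hk (hKlo t h0t)
    have hKt2 : K t ≤ Kb := hKhi t h0t
    have hKband := abs_lt.1 (hT₀ t ht).1
    have hyK : e/2 ≤ K t - y t := by linarith [hKband.1]
    have hy : 0 < y t := hy0 t h0t
    rw [show 1 - y t / K t = (K t - y t) / K t by field_simp]
    rw [show b * y t * ((K t - y t) / K t) = b * y t * (K t - y t) / K t by ring]
    rw [le_div_iff₀ hKt]
    have hr : ρ * Kb = b * (e/2) := by rw [hρdef]; field_simp
    have hr1 : ρ * y t * K t ≤ ρ * y t * Kb :=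
      mul_le_mul_of_nonneg_left hKt2 (by positivity)
    have hr2 : ρ * y t * Kb = b * y t * (e/2) := by
      calc ρ * y t * Kb = ρ * Kb * y t := by ring
        _ = b * (e/2) * y t := by rw [hr]
        _ = b * y t * (e/2) := by ring
    have hmul : b * y t * (e/2) ≤ b * y t * (K t - y t) :=
      mul_le_mul_of_nonneg_left hyK (by positivity)
    linarith
  -- eventually y ≤ Kinf + e
  have hUp : ∀ᶠ t in atTop, y t ≤ Kinf + e := by
    -- entry
    have hentry : ∃ t₂, T₀ ≤ t₂ ∧ y t₂ ≤ Kinf + e := by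
      by_contra hcon
      push_neg at hcon
      have hdec : ∀ t, T₀ ≤ t → y t ≤ y T₀ + (-δ) * (t - T₀) := by
        intro t ht
        have := linear_growth (f := fun s => -y s)
          (g := fun s => -(b * y s * (1 - y s / K s))) (T := T₀) (δ := δ)
          (fun s hs => (hyd s (le_trans hT₀0 hs)).neg)
          (fun s hs => by
            have := hupper s hs (le_of_lt (hcon s hs))
            linarith) t ht
        linarith
      set t := T₀ + y T₀ / δ + 1 with htdef
      have ht : T₀ ≤ t := by
        have : 0 < y T₀ / δ := div_pos (hy0 T₀ hT₀0) hδ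
        rw [htdef]; linarith
      have h1 := hdec t ht
      have h2 : y T₀ + (-δ) * (t - T₀) = -δ := by
        rw [htdef]; field_simp; ring
      have := hy0 t (le_trans hT₀0 ht)
      rw [h2] at h1
      linarith
    obtain ⟨t₂, ht₂T, ht₂⟩ := hentry
    have hinv := barrier (h := fun t => Kinf + e - y t)
      (g := fun t => -(b * y t * (1 - y t / K t))) (T := t₂)
      (fun t ht => HasDerivAt.const_sub (Kinf + e) (hyd t (le_trans (le_trans hT₀0 ht₂T) ht)))
      (by linarith)
      (fun t ht heq => by
        have hyt : Kinf + e ≤ y t := by linarith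
        have := hupper t (le_trans ht₂T ht) hyt
        linarith)
    filter_upwards [eventually_ge_atTop t₂] with t ht
    have := hinv t ht
    linarith
  -- eventually y ≥ Kinf - e
  have hLo : ∀ᶠ t in atTop, Kinf - e ≤ y t := by
    have hentry : ∃ t₂, T₀ ≤ t₂ ∧ Kinf - e ≤ y t₂ := by
      by_contra hcon
      push_neg at hcon
      -- exponential growth: w = y * exp (-ρ t) is monotone
      have hgrow : ∀ t, T₀ ≤ t → y T₀ * Real.exp (ρ * (t - T₀)) ≤ y t := by
        intro t ht
        have hmono := mono_aux (A := T₀) (B := t)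
          (f := fun s => y s * Real.exp (-(ρ * s)))
          (g := fun s => (b * y s * (1 - y s / K s) - ρ * y s) * Real.exp (-(ρ * s)))
          ht
          (fun s hs => by
            have hds : HasDerivAt (fun u : ℝ => Real.exp (-(ρ * u))) (-ρ * Real.exp (-(ρ * s))) s := by
              have h1 : HasDerivAt (fun u : ℝ => -(ρ * u)) (-ρ) s := by
                have h := ((hasDerivAt_id s).const_mul ρ).neg; rw [mul_one] at h; exact h
              have h2 := (Real.hasDerivAt_exp (-(ρ * s))).comp s h1
              refine h2.congr_deriv ?_
              ring
            have := (hyd s (le_trans hT₀0 hs.1)).mul hds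
            refine this.congr_deriv ?_
            ring)
          (fun s hs => by
            have h1 := hlower s hs.1 (le_of_lt (hcon s hs.1))
            have h2 : (0:ℝ) < Real.exp (-(ρ * s)) := Real.exp_pos _
            nlinarith)
        have hexp : Real.exp (-(ρ * t)) > 0 := Real.exp_pos _
        have key : y T₀ * Real.exp (-(ρ * T₀)) ≤ y t * Real.exp (-(ρ * t)) := hmono
        have : y T₀ * Real.exp (-(ρ * T₀)) * Real.exp (ρ * t) ≤ y t * Real.exp (-(ρ * t)) * Real.exp (ρ * t) :=
          mul_le_mul_of_nonneg_right key (le_of_lt (Real.exp_pos _))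
        rw [mul_assoc, mul_assoc, ← Real.exp_add, ← Real.exp_add] at this
        simp only [neg_add_cancel, Real.exp_zero, mul_one] at this
        calc y T₀ * Real.exp (ρ * (t - T₀)) = y T₀ * Real.exp (-(ρ * T₀) + ρ * t) := by ring_nf
          _ ≤ y t := this
      -- the lower bound tends to ∞, contradiction with y < Kinf - e
      have htop : Tendsto (fun t => y T₀ * Real.exp (ρ * (t - T₀))) atTop atTop := by
        apply Tendsto.const_mul_atTop (hy0 T₀ hT₀0)
        exact Real.tendsto_exp_atTop.comp
          (Tendsto.const_mul_atTop hρ (tendsto_atTop_add_const_right _ _ tendsto_id))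
      have hev := (htop.eventually_ge_atTop Kinf).and (eventually_ge_atTop T₀)
      obtain ⟨t, ht1, ht2⟩ := hev.exists
      have := hgrow t ht2
      have := hcon t ht2
      linarith
    obtain ⟨t₂, ht₂T, ht₂⟩ := hentry
    have hinv := barrier (h := fun t => y t - (Kinf - e))
      (g := fun t => b * y t * (1 - y t / K t)) (T := t₂)
      (fun t ht => by simpa using (hyd t (le_trans (le_trans hT₀0 ht₂T) ht)).sub_const (Kinf - e))
      (by linarith)
      (fun t ht heq => by
        have hyt : y t = Kinf - e := by linarith
        have h1 := hlower t (le_trans ht₂T ht) (le_of_eq hyt)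
        have h2 : 0 < ρ * y t := by
          rw [hyt]
          have hpos : 0 < Kinf - e := by linarith
          positivity
        linarith)
    filter_upwards [eventually_ge_atTop t₂] with t ht
    have := hinv t ht
    linarith
  obtain ⟨N, hN⟩ := (hUp.and hLo).exists_forall_of_atTop
  refine ⟨N, fun t ht => ?_⟩
  have := hN t ht
  rw [Real.dist_eq, abs_lt]
  constructor <;> [linarith [this.2]; linarith [this.1]]

/-- Sign preservation: if `g = c·f` whenever `f ≥ 0`, with `c` continuous,
and `f 0 > 0`, then `f` stays positive. -/
lemma pos_invariant {f g c : ℝ → ℝ}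
    (hd : ∀ t, 0 ≤ t → HasDerivAt f (g t) t)
    (hc : ∀ t, 0 ≤ t → ContinuousAt c t)
    (heq : ∀ t, 0 ≤ t → 0 ≤ f t → g t = c t * f t)
    (h0 : 0 < f 0) : ∀ t, 0 ≤ t → 0 < f t := by
  by_contra hcon
  push_neg at hcon
  obtain ⟨t', ht'0, ht'⟩ := hcon
  set S : Set ℝ := {t | 0 ≤ t ∧ f t ≤ 0} with hS
  have hne : S.Nonempty := ⟨t', ht'0, ht'⟩
  have hbdd : BddBelow S := ⟨0, fun s hs => hs.1⟩
  set t₁ := sInf S with ht₁def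
  have ht₁0 : (0:ℝ) ≤ t₁ := le_csInf hne (fun s hs => hs.1)
  have hle : ∀ s ∈ S, t₁ ≤ s := fun s hs => csInf_le hbdd hs
  have hposlt : ∀ t, 0 ≤ t → t < t₁ → 0 < f t := by
    intro t ht htlt
    by_contra hneg
    exact absurd (hle t ⟨ht, le_of_not_gt hneg⟩) (not_le.2 htlt)
  have hcontt₁ : ContinuousAt f t₁ := (hd t₁ ht₁0).continuousAt
  have ht₁le : f t₁ ≤ 0 := by
    by_contra hpos
    push_neg at hpos
    obtain ⟨δ, hδ, hball⟩ := Metric.continuousAt_iff.1 hcontt₁ (f t₁) hpos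
    have : t₁ + δ/2 ≤ t₁ := by
      apply le_csInf hne
      intro s hs
      by_contra hs'
      push_neg at hs'
      have h1 : t₁ ≤ s := hle s hs
      have hdist : dist s t₁ < δ := by
        rw [Real.dist_eq, abs_of_nonneg (by linarith)]; linarith
      have := hball hdist
      rw [Real.dist_eq] at this
      have := abs_lt.1 this
      have : 0 < f s := by linarith
      linarith [hs.2]
    linarith
  have ht₁pos : 0 < t₁ := by
    rcases eq_or_lt_of_le ht₁0 with h'' | h''
    · exfalso; rw [← h''] at ht₁le; linarith
    · exact h''
  have ht₁eq : f t₁ = 0 := by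
    rcases eq_or_lt_of_le ht₁le with h' | h'
    · exact h'
    · exfalso
      obtain ⟨δ, hδ, hball⟩ := Metric.continuousAt_iff.1 hcontt₁ (-(f t₁)) (by linarith)
      set s := max 0 (t₁ - δ/2) with hs
      have hs0 : (0:ℝ) ≤ s := le_max_left _ _
      have hslt : s < t₁ := max_lt ht₁pos (by linarith)
      have hdist : dist s t₁ < δ := by
        rw [Real.dist_eq, abs_of_nonpos (by linarith)]
        have : t₁ - δ/2 ≤ s := le_max_right _ _
        linarith
      have := hball hdist
      rw [Real.dist_eq] at this
      have habs := abs_lt.1 this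
      have : f s < 0 := by linarith
      linarith [hposlt s hs0 hslt]
  -- f ≥ 0 on [0, t₁]
  have hfnn : ∀ t ∈ Set.Icc (0:ℝ) t₁, 0 ≤ f t := by
    intro t ht
    rcases eq_or_lt_of_le ht.2 with h' | h'
    · rw [h', ht₁eq]
    · exact (hposlt t ht.1 h').le
  -- bound on c over [0, t₁]
  have hccont : ContinuousOn c (Set.Icc 0 t₁) := fun t ht => (hc t ht.1).continuousWithinAt
  obtain ⟨M, hM⟩ := (isCompact_Icc).exists_bound_of_continuousOn hccont
  have hM0 : 0 ≤ M := le_trans (abs_nonneg _) (hM 0 (Set.left_mem_Icc.2 ht₁0))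
  -- w = f · exp(M t) is monotone on [0, t₁]
  have hw := mono_aux (A := 0) (B := t₁)
    (f := fun t => f t * Real.exp (M * t))
    (g := fun t => (g t + M * f t) * Real.exp (M * t)) ht₁0
    (fun s hs => by
      have hds : HasDerivAt (fun u : ℝ => Real.exp (M * u)) (M * Real.exp (M * s)) s := by
        have h1 : HasDerivAt (fun u : ℝ => M * u) M s := by
          simpa using (hasDerivAt_id s).const_mul M
        have h2 := (Real.hasDerivAt_exp (M * s)).comp s h1
        refine h2.congr_deriv ?_
        ring
      have := (hd s hs.1).mul hds
      refine this.congr_deriv ?_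
      ring)
    (fun s hs => by
      show 0 ≤ (g s + M * f s) * Real.exp (M * s)
      have h1 := heq s hs.1 (hfnn s hs)
      have h2 : 0 ≤ (c s + M) * f s := by
        have := (abs_le.1 (hM s hs)).1
        have := hfnn s hs
        nlinarith
      have h3 : (0:ℝ) < Real.exp (M * s) := Real.exp_pos _
      rw [h1]
      nlinarith)
  rw [ht₁eq] at hw
  simp only [zero_mul, mul_zero, Real.exp_zero, mul_one] at hw
  linarith

end helpers

section main
open Set
set_option maxHeartbeats 1000000 in

/-- When `m = 0` and either `4·a·k₂ > (1 − k₁ − a)² + 4·k₁`, or (`a·k₂ ≥ k₁` and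
`1 − k₁ − a ≤ 0`), the point `E₂ = (0, k₂)` is globally attracting on the open quadrant. -/
theorem E2_globally_attracting (a b k1 k2 m : ℝ)
    (ha : 0 < a) (hb : 0 < b) (hk1 : 0 < k1) (hk2 : 0 < k2)
    (hm : m = 0)
    (hcond : 4 * a * k2 > (1 - k1 - a) ^ 2 + 4 * k1 ∨ (a * k2 ≥ k1 ∧ 1 - k1 - a ≤ 0))
    (x y : ℝ → ℝ)
    (hx : ∀ t : ℝ, 0 ≤ t → HasDerivAt x (preyRHS a k1 m (x t) (y t)) t)
    (hy : ∀ t : ℝ, 0 ≤ t → HasDerivAt y (predRHS b k2 m (x t) (y t)) t)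
    (hx0 : 0 < x 0) (hy0 : 0 < y 0) :
    Tendsto x atTop (𝓝 0) ∧ Tendsto y atTop (𝓝 k2) := by
  subst hm
  -- abbreviations for the two vector-field components along the solution
  set pX : ℝ → ℝ := fun t => preyRHS a k1 0 (x t) (y t) with hpXdef
  set pR : ℝ → ℝ := fun t => predRHS b k2 0 (x t) (y t) with hpRdef
  have hpX : ∀ t, pX t = x t * (1 - x t) - a * y t * max 0 (x t) / (k1 + max 0 (x t)) := by
    intro t; simp [hpXdef, preyRHS]
  have hpR : ∀ t, pR t = b * y t * (1 - y t / (k2 + max 0 (x t))) := by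
    intro t; simp [hpRdef, predRHS]
  -- the key quadratic is positive for positive prey density
  have hq : ∀ s : ℝ, 0 < s → 0 < s^2 + (a + k1 - 1) * s + (a * k2 - k1) := by
    intro s hs
    rcases hcond with h | ⟨h1, h2⟩
    · nlinarith [sq_nonneg (2*s + (a + k1 - 1))]
    · nlinarith [sq_nonneg s]
  -- continuity of the solution on [0,∞)
  have hxc : ∀ t, 0 ≤ t → ContinuousAt x t := fun t ht => (hx t ht).continuousAt
  have hyc : ∀ t, 0 ≤ t → ContinuousAt y t := fun t ht => (hy t ht).continuousAt
  have hmaxc : ∀ t, 0 ≤ t → ContinuousAt (fun s => max 0 (x s)) t :=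
    fun t ht => (continuousAt_const.max (hxc t ht))
  have hk1max : ∀ t, 0 < k1 + max 0 (x t) := fun t => by positivity
  have hk2max : ∀ t, 0 < k2 + max 0 (x t) := fun t => by positivity
  -- positivity of y
  have hypos : ∀ t, 0 ≤ t → 0 < y t := by
    apply pos_invariant (g := pR) (c := fun t => b * (1 - y t / (k2 + max 0 (x t)))) hy
    · intro t ht
      exact (continuousAt_const.mul (continuousAt_const.sub
        ((hyc t ht).div (continuousAt_const.add (hmaxc t ht)) (ne_of_gt (hk2max t)))))
    · intro t ht _
      rw [hpR]; ring
    · exact hy0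
  -- positivity of x
  have hxpos : ∀ t, 0 ≤ t → 0 < x t := by
    apply pos_invariant (g := pX)
      (c := fun t => 1 - x t - a * y t / (k1 + max 0 (x t))) hx
    · intro t ht
      exact ((continuousAt_const.sub (hxc t ht)).sub
        (((continuousAt_const.mul (hyc t ht))).div
          (continuousAt_const.add (hmaxc t ht)) (ne_of_gt (hk1max t))))
    · intro t ht hxt
      rw [hpX, max_eq_right hxt]
      field_simp
    · exact hx0
  have hmaxeq : ∀ t, 0 ≤ t → max 0 (x t) = x t := fun t ht => max_eq_right (hxpos t ht).le
  -- upper bound for x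
  set M₀ : ℝ := max (x 0) 1 + 1 with hM₀def
  clear_value M₀
  have hM₀1 : (1:ℝ) ≤ M₀ := by
    have := le_max_right (x 0) 1; rw [hM₀def]; linarith
  have hxbdd : ∀ t, 0 ≤ t → x t ≤ M₀ := by
    have hbar := barrier (h := fun t => M₀ - x t) (g := fun t => -pX t) (T := 0)
      (fun t ht => HasDerivAt.const_sub M₀ (hx t ht))
      (by have := le_max_left (x 0) 1; rw [hM₀def]; linarith)
      (fun t ht heq => by
        have hxt : x t = M₀ := by linarith
        have hyt := hypos t ht
        have hxt' := hxpos t ht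
        show 0 < -pX t
        rw [hpX, hmaxeq t ht, hxt]
        have h1 : M₀ * (1 - M₀) ≤ 0 := by nlinarith
        have h2 : 0 < a * y t * M₀ / (k1 + M₀) := by positivity
        linarith)
    intro t ht
    have := hbar t ht
    linarith
  have hmaxbdd : ∀ t, 0 ≤ t → max 0 (x t) ≤ M₀ := fun t ht => by
    rw [hmaxeq t ht]; exact hxbdd t ht
  -- upper bound for y
  set M₁ : ℝ := max (y 0) (k2 + M₀) + 1 with hM₁def
  clear_value M₁
  have hybdd : ∀ t, 0 ≤ t → y t ≤ M₁ := by
    have hbar := barrier (h := fun t => M₁ - y t) (g := fun t => -pR t) (T := 0)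
      (fun t ht => HasDerivAt.const_sub M₁ (hy t ht))
      (by have := le_max_left (y 0) (k2 + M₀); rw [hM₁def]; linarith)
      (fun t ht heq => by
        have hyt : y t = M₁ := by linarith
        have hM₁gt : k2 + max 0 (x t) < M₁ := by
          have h1 := le_max_right (y 0) (k2 + M₀)
          have h2 := hmaxbdd t ht
          rw [hM₁def]; linarith
        have hyt' := hypos t ht
        show 0 < -pR t
        rw [hpR, hyt]
        have hden := hk2max t
        have h3 : 1 - M₁ / (k2 + max 0 (x t)) < 0 := by
          rw [sub_neg, lt_div_iff₀ hden]; linarith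
        have hM₁pos : 0 < M₁ := hyt ▸ hyt'
        nlinarith [mul_pos hb hM₁pos, h3]
      )
    intro t ht
    have := hbar t ht
    linarith
  -- identity for pX in terms of G
  have hpXid : ∀ t, 0 ≤ t →
      pX t = x t * ((1 - x t) * (k1 + x t) - a * y t) / (k1 + x t) := by
    intro t ht
    have hden : 0 < k1 + x t := by have := hxpos t ht; positivity
    rw [hpX, hmaxeq t ht]
    field_simp
  -- the function G and its derivative
  set G : ℝ → ℝ := fun t => a * y t - (1 - x t) * (k1 + x t) with hGdef
  set gG : ℝ → ℝ := fun t => a * pR t - (-(pX t) * (k1 + x t) + (1 - x t) * pX t) with hgGdef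
  clear_value G gG
  have hGd : ∀ t, 0 ≤ t → HasDerivAt G (gG t) t := by
    intro t ht
    rw [hGdef, hgGdef]
    exact ((hy t ht).const_mul a).sub
      (((hx t ht).const_sub 1).mul ((hx t ht).const_add k1))
  -- whenever G t = 0 (with t ≥ 0), we have pX t = 0 and gG t > 0
  have hGzero : ∀ t, 0 ≤ t → G t = 0 → 0 < gG t := by
    intro t ht heq
    have hxt := hxpos t ht
    have hyt := hypos t ht
    have hay : a * y t = (1 - x t) * (k1 + x t) := by
      simp only [hGdef] at heq; linarith
    have hpX0 : pX t = 0 := by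
      rw [hpXid t ht, ← hay]
      simp
    have hq' := hq (x t) hxt
    have hylt : y t < k2 + x t := by
      have : a * y t < a * (k2 + x t) := by nlinarith
      exact lt_of_mul_lt_mul_left this ha.le
    have hpRpos : 0 < pR t := by
      rw [hpR, hmaxeq t ht]
      have hden := hk2max t
      rw [hmaxeq t ht] at hden
      have : 0 < 1 - y t / (k2 + x t) := by
        rw [sub_pos, div_lt_one hden]; exact hylt
      positivity
    simp only [hgGdef, hpX0]
    have : a * pR t > 0 := by positivity
    linarith
  -- case analysis: does the orbit ever rise above the prey nullcline?
  by_cases hcase : ∀ t, 0 ≤ t → G t ≤ 0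
  · -- it never does: x and y are monotone, converge to an interior equilibrium: absurd
    exfalso
    have hpXnn : ∀ t, 0 ≤ t → 0 ≤ pX t := by
      intro t ht
      rw [hpXid t ht]
      have h1 : 0 ≤ (1 - x t) * (k1 + x t) - a * y t := by
        have := hcase t ht; simp only [hGdef] at this; linarith
      have hxt := (hxpos t ht).le
      have hden : (0:ℝ) < k1 + x t := by have := hxpos t ht; positivity
      positivity
    have hpRnn : ∀ t, 0 ≤ t → 0 ≤ pR t := by
      intro t ht
      have hxt := hxpos t ht
      have hyt := hypos t ht
      have hq' := hq (x t) hxt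
      have hG := hcase t ht
      simp only [hGdef] at hG
      have hylt : y t < k2 + x t := by
        have : a * y t < a * (k2 + x t) := by nlinarith
        exact lt_of_mul_lt_mul_left this ha.le
      rw [hpR, hmaxeq t ht]
      have hden := hk2max t
      rw [hmaxeq t ht] at hden
      have : 0 < 1 - y t / (k2 + x t) := by
        rw [sub_pos, div_lt_one hden]; exact hylt
      positivity
    -- x and y are monotone nondecreasing
    have hxmono : ∀ s t, 0 ≤ s → s ≤ t → x s ≤ x t := by
      intro s t hs hst
      exact mono_aux hst (fun u hu => hx u (le_trans hs hu.1))
        (fun u hu => hpXnn u (le_trans hs hu.1))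
    have hymono : ∀ s t, 0 ≤ s → s ≤ t → y s ≤ y t := by
      intro s t hs hst
      exact mono_aux hst (fun u hu => hy u (le_trans hs hu.1))
        (fun u hu => hpRnn u (le_trans hs hu.1))
    obtain ⟨Lx, hLx, hLxge, hLxle⟩ := tendsto_of_monoOn (T := 0) (C := M₀) hxmono hxbdd
    obtain ⟨Ly, hLy, hLyge, hLyle⟩ := tendsto_of_monoOn (T := 0) (C := M₁) hymono hybdd
    have hLxpos : 0 < Lx := lt_of_lt_of_le hx0 (hLxge 0 le_rfl)
    have hLypos : 0 < Ly := lt_of_lt_of_le hy0 (hLyge 0 le_rfl)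
    -- limits of the vector field
    have hmaxT : Tendsto (fun t => max 0 (x t)) atTop (𝓝 (max 0 Lx)) :=
      tendsto_const_nhds.max hLx
    have hmaxLx : max 0 Lx = Lx := max_eq_right hLxpos.le
    have hpXT : Tendsto pX atTop (𝓝 (Lx * (1 - Lx) - a * Ly * Lx / (k1 + Lx))) := by
      have h1 : Tendsto (fun t => x t * (1 - x t)) atTop (𝓝 (Lx * (1 - Lx))) :=
        hLx.mul (tendsto_const_nhds.sub hLx)
      have h2 : Tendsto (fun t => a * y t * max 0 (x t) / (k1 + max 0 (x t))) atTop
          (𝓝 (a * Ly * Lx / (k1 + Lx))) := by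
        have hd : Tendsto (fun t => k1 + max 0 (x t)) atTop (𝓝 (k1 + Lx)) := by
          have := hmaxT.const_add k1
          rwa [hmaxLx] at this
        have hn : Tendsto (fun t => a * y t * max 0 (x t)) atTop (𝓝 (a * Ly * Lx)) := by
          have := (hLy.const_mul a).mul hmaxT
          rwa [hmaxLx] at this
        exact hn.div hd (by positivity)
      have := h1.sub h2
      apply this.congr
      intro t
      rw [hpX]
    have hpRT : Tendsto pR atTop (𝓝 (b * Ly * (1 - Ly / (k2 + Lx)))) := by
      have hd : Tendsto (fun t => k2 + max 0 (x t)) atTop (𝓝 (k2 + Lx)) := by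
        have := hmaxT.const_add k2
        rwa [hmaxLx] at this
      have h2 : Tendsto (fun t => 1 - y t / (k2 + max 0 (x t))) atTop
          (𝓝 (1 - Ly / (k2 + Lx))) :=
        tendsto_const_nhds.sub (hLy.div hd (by positivity))
      have := (hLy.const_mul b).mul h2
      apply this.congr
      intro t
      rw [hpR]
    have heq1 := deriv_lim_zero (T := 0) hx hLx hpXT
    have heq2 := deriv_lim_zero (T := 0) hy hLy hpRT
    -- equilibrium equations
    have hden1 : (0:ℝ) < k1 + Lx := by positivity
    have hden2 : (0:ℝ) < k2 + Lx := by positivity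
    have hy_eq : Ly = k2 + Lx := by
      have h3 : 1 - Ly / (k2 + Lx) = 0 := by
        rcases mul_eq_zero.1 heq2 with h | h
        · rcases mul_eq_zero.1 h with h' | h'
          · exact absurd h' (ne_of_gt hb)
          · exact absurd h' (ne_of_gt hLypos)
        · exact h
      have := sub_eq_zero.1 h3
      field_simp at this
      linarith
    have hx_eq : (1 - Lx) * (k1 + Lx) = a * Ly := by
      have h4 : Lx * ((1 - Lx) * (k1 + Lx) - a * Ly) = 0 := by
        field_simp at heq1
        nlinarith [heq1]
      rcases mul_eq_zero.1 h4 with h | h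
      · exact absurd h (ne_of_gt hLxpos)
      · linarith
    have hq' := hq Lx hLxpos
    rw [hy_eq] at hx_eq
    nlinarith
  · -- the orbit rises above the nullcline at some time T, and stays there
    push_neg at hcase
    obtain ⟨T, hT0, hGT⟩ := hcase
    have hGnn : ∀ t, T ≤ t → 0 ≤ G t :=
      barrier (fun t ht => hGd t (le_trans hT0 ht)) (le_of_lt hGT)
        (fun t ht => hGzero t (le_trans hT0 ht))
    -- x is nonincreasing after T
    have hpXnp : ∀ t, T ≤ t → pX t ≤ 0 := by
      intro t ht
      have ht0 : (0:ℝ) ≤ t := le_trans hT0 ht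
      rw [hpXid t ht0]
      have h1 : (1 - x t) * (k1 + x t) - a * y t ≤ 0 := by
        have := hGnn t ht; simp only [hGdef] at this; linarith
      have hxt := (hxpos t ht0).le
      have hden : (0:ℝ) < k1 + x t := by have := hxpos t ht0; positivity
      have hnum : x t * ((1 - x t) * (k1 + x t) - a * y t) ≤ 0 :=
        mul_nonpos_of_nonneg_of_nonpos hxt h1
      exact div_nonpos_of_nonpos_of_nonneg hnum hden.le
    have hxanti : ∀ s t, T ≤ s → s ≤ t → x t ≤ x s := by
      intro s t hs hst
      have := mono_aux (f := fun u => -x u) (g := fun u => -pX u) hst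
        (fun u hu => (hx u (le_trans hT0 (le_trans hs hu.1))).neg)
        (fun u hu => by
          have := hpXnp u (le_trans hs hu.1); linarith)
      linarith
    obtain ⟨Lx, hLx, hLxle, hLxnn⟩ := tendsto_of_antiOn (T := T) (C := 0) hxanti
      (fun t ht => (hxpos t (le_trans hT0 ht)).le)
    -- y converges to k2 + Lx via the logistic limit lemma
    have hmaxT : Tendsto (fun t => max 0 (x t)) atTop (𝓝 (max 0 Lx)) :=
      tendsto_const_nhds.max hLx
    have hmaxLx : max 0 Lx = Lx := max_eq_right hLxnn
    have hKT : Tendsto (fun t => k2 + max 0 (x t)) atTop (𝓝 (k2 + Lx)) := by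
      have := hmaxT.const_add k2
      rwa [hmaxLx] at this
    have hyT : Tendsto y atTop (𝓝 (k2 + Lx)) := by
      apply logistic_limit hb hk2 (K := fun t => k2 + max 0 (x t)) (Kb := k2 + M₀)
        (fun t _ => by simp [le_max_left])
        (fun t ht => by show k2 + max 0 (x t) ≤ k2 + M₀; linarith [hmaxbdd t ht])
        hypos
        (fun t ht => by
          have := hy t ht
          rw [hpRdef] at hpR
          have h := hpR t
          rw [show predRHS b k2 0 (x t) (y t) = b * y t * (1 - y t / (k2 + max 0 (x t)))
            from h] at this
          exact this)
        hKT (by positivity)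
    -- show Lx = 0
    have hLx0 : Lx = 0 := by
      by_contra hne
      have hLxpos : 0 < Lx := lt_of_le_of_ne hLxnn (Ne.symm hne)
      have hpXT : Tendsto pX atTop
          (𝓝 (Lx * (1 - Lx) - a * (k2 + Lx) * Lx / (k1 + Lx))) := by
        have h1 : Tendsto (fun t => x t * (1 - x t)) atTop (𝓝 (Lx * (1 - Lx))) :=
          hLx.mul (tendsto_const_nhds.sub hLx)
        have h2 : Tendsto (fun t => a * y t * max 0 (x t) / (k1 + max 0 (x t))) atTop
            (𝓝 (a * (k2 + Lx) * Lx / (k1 + Lx))) := by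
          have hd : Tendsto (fun t => k1 + max 0 (x t)) atTop (𝓝 (k1 + Lx)) := by
            have := hmaxT.const_add k1
            rwa [hmaxLx] at this
          have hn : Tendsto (fun t => a * y t * max 0 (x t)) atTop
              (𝓝 (a * (k2 + Lx) * Lx)) := by
            have := (hyT.const_mul a).mul hmaxT
            rwa [hmaxLx] at this
          exact hn.div hd (by positivity)
        have := h1.sub h2
        apply this.congr
        intro t
        rw [hpX]
      have heq1 := deriv_lim_zero (T := 0) hx hLx hpXT
      have hden1 : (0:ℝ) < k1 + Lx := by positivity
      have hx_eq : (1 - Lx) * (k1 + Lx) = a * (k2 + Lx) := by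
        have h4 : Lx * ((1 - Lx) * (k1 + Lx) - a * (k2 + Lx)) = 0 := by
          field_simp at heq1
          nlinarith [heq1]
        rcases mul_eq_zero.1 h4 with h | h
        · exact absurd h (ne_of_gt hLxpos)
        · linarith
      have hq' := hq Lx hLxpos
      nlinarith
    rw [hLx0] at hLx hyT
    rw [add_zero] at hyT
    exact ⟨hLx, hyT⟩

end main
end
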